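/- arXiv:2401.06189 — 12 statements merged into one kernel-verified Lean document; each statement's English description precedes it below -/
import Mathlib

section
/- Let G be a finite connected graph and let P = (x_1, ..., x_ℓ) be a subpath of G (the vertices x_1, ..., x_ℓ are distinct and consecutive ones are adjacent in G). Then for any t ∈ {1, ..., ℓ}, starting from the configuration with exactly one cup on each vertex of P, there is a sequence of legal stacking moves using only vertices of P that stacks all ℓ cups onto the vertex x_t. A legal stacking move removes all r cups from a vertex x and places them onto a vertex y with at least one cup such that the distance from x to y in G equals r. -/
/-- A legal cup-stacking move in the graph `G`, restricted to vertices of a set `S`: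
all `r` cups on `x` are moved to a vertex `y ≠ x` that carries at least one cup,
provided the graph distance from `x` to `y` equals `r`. -/
def CupStepOn {V : Type*} [DecidableEq V] (G : SimpleGraph V) (S : Set V) (c c' : V → ℕ) : Prop :=
  ∃ x y : V, x ∈ S ∧ y ∈ S ∧ x ≠ y ∧ 0 < c x ∧ 0 < c y ∧ G.dist x y = c x ∧
    c' = Function.update (Function.update c x 0) y (c y + c x)

/-- All cups are stacked on `t`. -/
def IsStackedOn {V : Type*} (c : V → ℕ) (t : V) : Prop := ∀ v, v ≠ t → c v = 0


/-!
Stacking a segment `t, b₁, …, bₘ` of a path whose vertices `bᵢ` carry one cup each onto an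
occupied vertex `t` goes by strong induction on `m`. With `x = bₘ` and `D = d(t, x)`, the path
itself gives `1 ≤ D ≤ m`. Stack the last `D` cups `b_{m-D+1}, …, bₘ` onto `x` (the same problem
for the reversed segment, of size `D - 1`), jump the resulting stack of height `D` from `x` to
`t`, which is legal precisely because `d(x, t) = D`, and stack the remaining `m - D` cups onto
`t`. A path splits at any of its vertices into two such segments.
-/

open Relation

section

variable {V : Type*} {G : SimpleGraph V}

lemma SimpleGraph.isChain_adj_reverse {l : List V} :
    l.reverse.IsChain G.Adj ↔ l.IsChain G.Adj := by
  simp only [List.isChain_reverse, SimpleGraph.adj_comm]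

lemma SimpleGraph.reachable_and_dist_le_of_isChain {t x : V} {l : List V}
    (h : (t :: (l ++ [x])).IsChain G.Adj) : G.Reachable t x ∧ G.dist t x ≤ l.length + 1 := by
  set p := Walk.ofSupport _ (List.cons_ne_nil _ _) h
  have hlen := dist_le p
  rw [Walk.length_ofSupport] at hlen
  simpa using And.intro p.reachable hlen

variable [DecidableEq V] {S : Set V}

/-- `c` after the cups on the vertices of `B` are stacked onto `t`, assuming one cup on each. -/
def stackOnto (c : V → ℕ) (t : V) (B : List V) : V → ℕ :=
  fun v => if v = t then c t + B.length else if v ∈ B then 0 else c v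

@[simp]
lemma stackOnto_nil (c : V → ℕ) (t : V) : stackOnto c t [] = c := by
  funext v
  simp +contextual [stackOnto]

lemma stackOnto_update_stackOnto {c : V → ℕ} {t x : V} {B₁ B₂ : List V}
    (hnd : (t :: (B₁ ++ B₂ ++ [x])).Nodup) (hx : c x = 1) :
    stackOnto (Function.update (Function.update (stackOnto c x B₂.reverse) x 0) t
        (stackOnto c x B₂.reverse t + stackOnto c x B₂.reverse x)) t B₁ =
      stackOnto c t (B₁ ++ B₂ ++ [x]) := by
  funext v
  grind [stackOnto, Function.update_apply, List.nodup_cons, List.nodup_append]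

theorem reflTransGen_stackOnto {t : V} {B : List V} (hchain : (t :: B).IsChain G.Adj)
    (hnd : (t :: B).Nodup) (hS : ∀ v ∈ t :: B, v ∈ S) {c : V → ℕ} (hc : ∀ v ∈ B, c v = 1)
    (ht : 0 < c t) : ReflTransGen (CupStepOn G S) c (stackOnto c t B) := by
  induction hn : B.length using Nat.strong_induction_on generalizing t B c with
  | _ n ih =>
  obtain rfl | ⟨L, x, rfl⟩ := B.eq_nil_or_concat'
  · rw [stackOnto_nil]
  obtain ⟨hreach, hdist⟩ := SimpleGraph.reachable_and_dist_le_of_isChain hchain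
  have hxt : t ≠ x := by grind [List.nodup_cons]
  obtain ⟨B₁, B₂, rfl, hB₂⟩ : ∃ B₁ B₂, L = B₁ ++ B₂ ∧ B₂.length + 1 = G.dist t x :=
    ⟨_, _, (L.take_append_drop (L.length + 1 - G.dist t x)).symm, by
      have := hreach.pos_dist_of_ne hxt; simp only [List.length_drop]; omega⟩
  simp only [List.length_append, List.length_singleton] at hn
  have htB₂ : t ∉ B₂ := by grind [List.nodup_cons]
  have hcx : c x = 1 := hc x (by simp)
  have hstack_x : ReflTransGen (CupStepOn G S) c (stackOnto c x B₂.reverse) := by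
    refine ih B₂.length (by omega) ?_ ?_ (fun v hv => hS v ?_) (fun v hv => hc v ?_)
      (by simp [hcx]) List.length_reverse
    · simpa using SimpleGraph.isChain_adj_reverse.mpr
        (hchain.infix (l₁ := B₂ ++ [x]) ⟨t :: B₁, [], by simp⟩)
    · grind [List.nodup_cons, List.nodup_append, List.nodup_reverse]
    all_goals grind
  set c₂ := stackOnto c x B₂.reverse
  set c₃ := Function.update (Function.update c₂ x 0) t (c₂ t + c₂ x)
  have hjump : CupStepOn G S c₂ c₃ := ⟨x, t, hS x (by simp), hS t (by simp), hxt.symm,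
    by simp [c₂, stackOnto, hcx], by simp [c₂, stackOnto, hxt, htB₂, ht],
    by rw [SimpleGraph.dist_comm]; simp [c₂, stackOnto, hcx]; omega, rfl⟩
  have hstack_t : ReflTransGen (CupStepOn G S) c₃ (stackOnto c₃ t B₁) := by
    refine ih B₁.length (by omega) (hchain.infix ⟨[], B₂ ++ [x], by simp⟩) ?_
      (fun v hv => hS v ?_) (fun v hv => ?_) (by simp [c₃, c₂, stackOnto, hcx]) rfl
    · grind [List.nodup_cons, List.nodup_append]
    · grind
    · grind [stackOnto, Function.update_apply, List.nodup_cons, List.nodup_append]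
  rw [← stackOnto_update_stackOnto hnd hcx]
  exact hstack_x.trans ((ReflTransGen.single hjump).trans hstack_t)

theorem exists_reflTransGen_isStackedOn {L : List V} (hchain : L.IsChain G.Adj) (hnd : L.Nodup)
    {t : V} (ht : t ∈ L) :
    ∃ c : V → ℕ, ReflTransGen (CupStepOn G {v | v ∈ L}) (fun v => if v ∈ L then 1 else 0) c ∧
      IsStackedOn c t := by
  obtain ⟨A, B, rfl⟩ := List.append_of_mem ht
  set c₀ : V → ℕ := fun v => if v ∈ A ++ t :: B then 1 else 0
  have hndA : (t :: A.reverse).Nodup := by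
    simpa using List.nodup_reverse.mpr (hnd.sublist (l₁ := A ++ [t]) (by simp))
  have hndB : (t :: B).Nodup := hnd.sublist (List.sublist_append_right _ _)
  have hchainA : (t :: A.reverse).IsChain G.Adj := by
    simpa using SimpleGraph.isChain_adj_reverse.mpr
      (hchain.infix (l₁ := A ++ [t]) ⟨[], B, by simp⟩)
  have hB := reflTransGen_stackOnto (t := t) (B := B) (S := {v | v ∈ A ++ t :: B})
    hchain.right_of_append hndB (by simp +contextual) (c := c₀)
    (by simp +contextual [c₀]) (by simp [c₀])
  have hA := reflTransGen_stackOnto (t := t) (B := A.reverse) (S := {v | v ∈ A ++ t :: B})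
    hchainA hndA (by simp +contextual) (c := stackOnto c₀ t B)
    (by grind [stackOnto, List.nodup_cons, List.nodup_append]) (by simp [stackOnto, c₀])
  refine ⟨_, hB.trans hA, fun v hv => ?_⟩
  simp only [stackOnto, hv, c₀, if_false]
  split_ifs <;> simp_all

end

theorem path_stackable_general {V : Type*} [DecidableEq V] (G : SimpleGraph V)
    {a b : V} (P : G.Walk a b) (hP : P.IsPath) (t : V)
    (ht : t ∈ P.support) :
    ∃ c : V → ℕ,
      Relation.ReflTransGen (CupStepOn G {v | v ∈ P.support})
        (fun v => if v ∈ P.support then 1 else 0) c ∧ IsStackedOn c t :=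
  exists_reflTransGen_isStackedOn P.isChain_adj_support hP.support_nodup ht

theorem path_stackable {V : Type*} [Fintype V] [DecidableEq V] (G : SimpleGraph V)
    (hG : G.Connected) {a b : V} (P : G.Walk a b) (hP : P.IsPath) (t : V)
    (ht : t ∈ P.support) :
    ∃ c : V → ℕ,
      Relation.ReflTransGen (CupStepOn G {v | v ∈ P.support})
        (fun v => if v ∈ P.support then 1 else 0) c ∧ IsStackedOn c t :=
  path_stackable_general G P hP t ht
end

section
/- Let x_1, ..., x_N be a sequence of positive integers such that (x_1, x_2) ≠ (2, 1) and |x_{i+1} - x_i| = 1 for all i = 1, ..., N-1. If N ≥ (max_{i=1}^N x_i)^2, then the sequence can be partitioned into consecutive blocks (chunks) such that each block contains an element whose value equals the length of that block. -/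
/-- The prefix `x 0, x 1, ..., x (N-1)` can be partitioned into consecutive proper
chunks: there are cut positions `0 = c 0 < c 1 < ... < c m = N` such that each chunk
`x (c k), ..., x (c (k+1) - 1)` contains an element whose value equals its length. -/
def ProperChunkPartition (x : ℕ → ℕ) (N : ℕ) : Prop :=
  ∃ (m : ℕ) (c : ℕ → ℕ), c 0 = 0 ∧ c m = N ∧ (∀ k < m, c k < c (k + 1)) ∧
    ∀ k < m, ∃ j, c k ≤ j ∧ j < c (k + 1) ∧ x j = c (k + 1) - c k

/-!
Call a cut position `q ≤ N` reachable if `x 0, …, x (q - 1)` has a partition into proper chunks.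
Because `x` moves by `±1`, a discrete intermediate value argument shows that the lengths of the
proper chunks starting at `p` form an interval `[chunkLow p, chunkHigh p]`, and these intervals
overlap for consecutive `p`. Hence if every position of a window `[u, r]` is reachable, so is every
position of `[u + chunkLow u, r + chunkHigh r]`. Iterating from `[0, 0]`, a window either is wide
(`u + chunkLow u ≤ r + 1`), which persists, or is one longer than its predecessor; the only narrow
window that fails to grow starts with the values `2, 1`. After `k` rounds a narrow window thus has
length at least `k`, while its length is below `chunkLow u ≤ M = max x`; so narrow windows occur
only in the first `M - 1` rounds, each advancing `u` by at most `M`, and `M² ≤ N` ensures that the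
search never gets stuck before reaching `N`.
-/

variable {x : ℕ → ℕ} {N : ℕ}

namespace ProperChunkPartition

theorem zero : ProperChunkPartition x 0 :=
  ⟨0, fun _ => 0, rfl, rfl, by omega, by omega⟩

theorem snoc {p q j : ℕ} (h : ProperChunkPartition x p) (hpq : p < q) (hpj : p ≤ j)
    (hjq : j < q) (hxj : x j = q - p) : ProperChunkPartition x q := by
  obtain ⟨m, c, hc0, hcm, hinc, hwit⟩ := h
  refine ⟨m + 1, fun k => if k ≤ m then c k else q, by simp [hc0], by simp, ?_, ?_⟩
  · intro k hk
    rcases Nat.lt_or_ge k m with hkm | hkm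
    · simpa [hkm.le, Nat.succ_le_of_lt hkm] using hinc k hkm
    · obtain rfl : k = m := by omega
      simpa [hcm] using hpq
  · intro k hk
    rcases Nat.lt_or_ge k m with hkm | hkm
    · simpa [hkm.le, Nat.succ_le_of_lt hkm] using hwit k hkm
    · obtain rfl : k = m := by omega
      exact ⟨j, by simpa [hcm] using hpj, by simpa using hjq, by simpa [hcm] using hxj⟩

end ProperChunkPartition

theorem le_add_sub_of_succ_le_add_one (hx : ∀ n, n + 1 < N → x (n + 1) ≤ x n + 1) {i k : ℕ}
    (hik : i ≤ k) (hk : k < N) : x k ≤ x i + (k - i) := by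
  induction k, hik using Nat.le_induction with
  | base => simp
  | succ k hik ih =>
    have := hx k hk
    have := ih (by omega)
    omega

theorem exists_eq_of_min_le_of_le_max
    (hx : ∀ n, n + 1 < N → x (n + 1) ≤ x n + 1 ∧ x n ≤ x (n + 1) + 1) {i k L : ℕ}
    (hik : i ≤ k) (hk : k < N) (hmin : min (x i) (x k) ≤ L) (hmax : L ≤ max (x i) (x k)) :
    ∃ j, i ≤ j ∧ j ≤ k ∧ x j = L := by
  induction k, hik using Nat.le_induction with
  | base => exact ⟨i, le_rfl, le_rfl, by omega⟩
  | succ k hik ih =>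
    by_cases hL : min (x i) (x k) ≤ L ∧ L ≤ max (x i) (x k)
    · obtain ⟨j, hij, hjk, hxj⟩ := ih (by omega) hL.1 hL.2
      exact ⟨j, hij, by omega, hxj⟩
    · have := hx k hk
      exact ⟨k + 1, by omega, le_rfl, by omega⟩

/-- For `p < N`, the proper chunks `[p, p + L)` inside `[0, N)` are exactly those with
`chunkLow x N p ≤ L ≤ chunkHigh x N p`. -/
noncomputable def chunkLow (x : ℕ → ℕ) (N p : ℕ) : ℕ :=
  sInf ((fun j => max (j - p + 1) (x j)) '' Set.Ico p N)

def chunkHigh (x : ℕ → ℕ) (N p : ℕ) : ℕ :=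
  ((Finset.Ico p N).filter (fun j => j < p + x j)).sup x

section chunkLow

variable {p j : ℕ}

theorem chunkLow_le (hpj : p ≤ j) (hjN : j < N) : chunkLow x N p ≤ max (j - p + 1) (x j) :=
  Nat.sInf_le ⟨j, ⟨hpj, hjN⟩, rfl⟩

theorem exists_chunkLow_eq (hp : p < N) :
    ∃ j, p ≤ j ∧ j < N ∧ max (j - p + 1) (x j) = chunkLow x N p := by
  obtain ⟨j, ⟨hpj, hjN⟩, hj⟩ := Nat.sInf_mem (⟨_, p, ⟨le_rfl, hp⟩, rfl⟩ :
    ((fun j => max (j - p + 1) (x j)) '' Set.Ico p N).Nonempty)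
  exact ⟨j, hpj, hjN, hj⟩

theorem chunkLow_pos (hp : p < N) : 0 < chunkLow x N p := by
  obtain ⟨j, -, -, hj⟩ := exists_chunkLow_eq (x := x) hp
  omega

theorem chunkLow_le_self (hp : p < N) (hxp : 0 < x p) : chunkLow x N p ≤ x p := by
  have := chunkLow_le (x := x) le_rfl hp
  omega

theorem chunkLow_le_of_lt (hpj : p ≤ j) (hjN : j < N) (hj : j + 1 < p + chunkLow x N p) :
    chunkLow x N p ≤ x j := by
  have := chunkLow_le (x := x) hpj hjN
  omega

theorem chunkLow_le_chunkLow_succ_add_one (hp : p + 1 < N) :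
    chunkLow x N p ≤ chunkLow x N (p + 1) + 1 := by
  obtain ⟨j, hpj, hjN, hj⟩ := exists_chunkLow_eq (x := x) hp
  have := chunkLow_le (x := x) (p := p) (by omega) hjN
  omega

theorem add_chunkLow_le_add_chunkLow {q : ℕ} (hpq : p ≤ q) (hq : q < N) :
    p + chunkLow x N p ≤ q + chunkLow x N q := by
  induction q, hpq using Nat.le_induction with
  | base => exact le_rfl
  | succ q hpq ih =>
    have := ih (by omega)
    have := chunkLow_le_chunkLow_succ_add_one (x := x) hq
    omega

end chunkLow

section chunkHigh

variable {p j : ℕ}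

theorem le_chunkHigh (hpj : p ≤ j) (hjN : j < N) (hj : j < p + x j) : x j ≤ chunkHigh x N p :=
  Finset.le_sup (Finset.mem_filter.2 ⟨Finset.mem_Ico.2 ⟨hpj, hjN⟩, hj⟩)

theorem self_le_chunkHigh (hp : p < N) (hxp : 0 < x p) : x p ≤ chunkHigh x N p :=
  le_chunkHigh le_rfl hp (by omega)

theorem exists_le_of_le_chunkHigh {L : ℕ} (hL : 0 < L) (hLp : L ≤ chunkHigh x N p) :
    ∃ j, p ≤ j ∧ j < N ∧ j < p + x j ∧ L ≤ x j := by
  obtain ⟨j, hj, hLj⟩ := (Finset.le_sup_iff hL).1 hLp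
  simp only [Finset.mem_filter, Finset.mem_Ico] at hj
  exact ⟨j, hj.1.1, hj.1.2, hj.2, hLj⟩

theorem chunkLow_succ_le_chunkHigh
    (hstep : ∀ i, i + 1 < N → x (i + 1) = x i + 1 ∨ x i = x (i + 1) + 1) (hp : p + 1 < N)
    (hxp : 0 < x p) : chunkLow x N (p + 1) ≤ chunkHigh x N p := by
  have hlow := chunkLow_le (x := x) (le_refl (p + 1)) hp
  rcases hstep p hp with h | h
  · have := le_chunkHigh (x := x) (p := p) (j := p + 1) (by omega) hp (by omega)
    omega
  · have := self_le_chunkHigh (x := x) (by omega : p < N) (by omega)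
    omega

end chunkHigh

theorem exists_eq_of_chunkLow_le_of_le_chunkHigh
    (hstep : ∀ i, i + 1 < N → x (i + 1) = x i + 1 ∨ x i = x (i + 1) + 1) {p L : ℕ}
    (hp : p < N) (hpL : p + L ≤ N) (hlow : chunkLow x N p ≤ L) (hhigh : L ≤ chunkHigh x N p) :
    ∃ j, p ≤ j ∧ j < p + L ∧ x j = L := by
  have hx : ∀ n, n + 1 < N → x (n + 1) ≤ x n + 1 ∧ x n ≤ x (n + 1) + 1 := fun n hn => by
    rcases hstep n hn with h | h <;> omega
  obtain ⟨j₁, hpj₁, -, hj₁⟩ := exists_chunkLow_eq (x := x) hp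
  have hL := chunkLow_pos (x := x) hp
  obtain ⟨j₂, hpj₂, hj₂L, hxj₂⟩ : ∃ j, p ≤ j ∧ j < p + L ∧ L ≤ x j := by
    obtain ⟨j, hpj, hjN, hj, hLj⟩ := exists_le_of_le_chunkHigh (x := x) (by omega) hhigh
    by_cases hjL : j < p + L
    · exact ⟨j, hpj, hjL, hLj⟩
    · have := le_add_sub_of_succ_le_add_one (fun n hn => (hx n hn).1)
        (show p + L - 1 ≤ j by omega) hjN
      exact ⟨p + L - 1, by omega, by omega, by omega⟩
  rcases le_total j₁ j₂ with h | h
  · obtain ⟨j, h₁, h₂, hxj⟩ := exists_eq_of_min_le_of_le_max hx h (by omega)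
      (L := L) (by omega) (by omega)
    exact ⟨j, by omega, by omega, hxj⟩
  · obtain ⟨j, h₁, h₂, hxj⟩ := exists_eq_of_min_le_of_le_max hx h (by omega)
      (L := L) (by omega) (by omega)
    exact ⟨j, by omega, by omega, hxj⟩

theorem ProperChunkPartition.extend
    (hstep : ∀ i, i + 1 < N → x (i + 1) = x i + 1 ∨ x i = x (i + 1) + 1) {p Q : ℕ}
    (h : ProperChunkPartition x p) (hp : p < N) (hlow : p + chunkLow x N p ≤ Q)
    (hhigh : Q ≤ p + chunkHigh x N p) (hQ : Q ≤ N) : ProperChunkPartition x Q := by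
  have := chunkLow_pos (x := x) hp
  obtain ⟨j, hpj, hjQ, hxj⟩ :=
    exists_eq_of_chunkLow_le_of_le_chunkHigh hstep hp (L := Q - p) (by omega) (by omega) (by omega)
  exact h.snoc (by omega) hpj (by omega) hxj

/-- The chunk-length intervals `[q + chunkLow q, q + chunkHigh q]` of consecutive starting
points `q` overlap, so their union over `q ∈ [u, r]` is a single interval. -/
theorem properChunkPartition_of_le_of_le (hpos : ∀ i < N, 0 < x i)
    (hstep : ∀ i, i + 1 < N → x (i + 1) = x i + 1 ∨ x i = x (i + 1) + 1) {u r Q : ℕ}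
    (hur : u ≤ r) (hr : r < N) (hreach : ∀ q, u ≤ q → q ≤ r → ProperChunkPartition x q)
    (hlow : u + chunkLow x N u ≤ Q) (hhigh : Q ≤ r + chunkHigh x N r) (hQ : Q ≤ N) :
    ProperChunkPartition x Q := by
  induction r, hur using Nat.le_induction with
  | base => exact (hreach u le_rfl le_rfl).extend hstep hr hlow hhigh hQ
  | succ r hur ih =>
    by_cases hQr : r + 1 + chunkLow x N (r + 1) ≤ Q
    · exact (hreach (r + 1) (by omega) le_rfl).extend hstep hr hQr hhigh hQ
    · have := chunkLow_succ_le_chunkHigh hstep hr (hpos r (by omega))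
      exact ih (by omega) (fun q hq hqr => hreach q hq (by omega)) (by omega)

def WideWindow (x : ℕ → ℕ) (N u r : ℕ) : Prop :=
  u + chunkLow x N u ≤ r + 1

theorem WideWindow.next (hpos : ∀ i < N, 0 < x i)
    (hstep : ∀ i, i + 1 < N → x (i + 1) = x i + 1 ∨ x i = x (i + 1) + 1) {u r : ℕ}
    (hwide : WideWindow x N u r) (hN : r + chunkHigh x N r < N) :
    WideWindow x N (u + chunkLow x N u) (r + chunkHigh x N r) := by
  have := self_le_chunkHigh (x := x) (N := N) (p := r) (by omega) (hpos r (by omega))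
  have := hpos r (by omega)
  have := add_chunkLow_le_add_chunkLow (x := x) (N := N) hwide (by omega)
  have := chunkLow_succ_le_chunkHigh hstep (by omega) (hpos r (by omega))
  unfold WideWindow
  omega

theorem wideWindow_next_or_sub_lt_of_not_wideWindow (hpos : ∀ i < N, 0 < x i)
    (hstep : ∀ i, i + 1 < N → x (i + 1) = x i + 1 ∨ x i = x (i + 1) + 1) {u r : ℕ}
    (hur : u ≤ r) (hnarrow : ¬WideWindow x N u r) (hN : r + chunkHigh x N r < N)
    (h21 : u = r → ¬(x r = 2 ∧ x (r + 1) = 1)) :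
    WideWindow x N (u + chunkLow x N u) (r + chunkHigh x N r) ∨
      r - u < r + chunkHigh x N r - (u + chunkLow x N u) := by
  simp only [WideWindow, not_le] at hnarrow ⊢
  set a := chunkLow x N u
  set b := chunkHigh x N r
  have hxrb : x r ≤ b := self_le_chunkHigh (by omega) (hpos r (by omega))
  have := hpos r (by omega)
  have hlow : ∀ j, u ≤ j → j ≤ r + 1 → j + 1 < u + a → a ≤ x j := fun j huj hjr hj =>
    chunkLow_le_of_lt huj (by omega) hj
  have hab : a ≤ b := (hlow r hur (by omega) hnarrow).trans hxrb
  rcases hab.lt_or_eq with hab | hab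
  · exact .inr (by omega)
  -- Otherwise `x r = a` is a local maximum and the window `[u, r]` has length `a - 2`.
  have hxr : x r = a := le_antisymm (hab ▸ hxrb) (hlow r hur (by omega) hnarrow)
  have hxr₁ : x (r + 1) + 1 = a := by
    rcases hstep r (by omega) with h | h
    · have := le_chunkHigh (x := x) (N := N) (p := r) (j := r + 1) (by omega) (by omega) (by omega)
      omega
    · omega
  have hua : u + a = r + 2 := by
    by_contra
    have := hlow (r + 1) (by omega) le_rfl (by omega)
    omega
  have ha : 3 ≤ a := by
    by_contra
    exact h21 (by omega) ⟨by omega, by omega⟩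
  left
  rw [hua]
  obtain h | h : x (r + 2) = x (r + 1) + 1 ∨ x (r + 1) = x (r + 2) + 1 := hstep (r + 1) (by omega)
  · obtain h' | h' : x (r + 3) = x (r + 2) + 1 ∨ x (r + 2) = x (r + 3) + 1 :=
      hstep (r + 2) (by omega)
    · have := le_chunkHigh (x := x) (N := N) (p := r) (j := r + 3) (by omega) (by omega) (by omega)
      omega
    · have := chunkLow_le (x := x) (N := N) (show r + 2 ≤ r + 3 by omega) (by omega)
      omega
  · have := chunkLow_le (x := x) (N := N) (le_refl (r + 2)) (by omega)
    omega

/-- The state after `k` rounds of the search for reachable cut positions. -/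
structure ReachableWindow (x : ℕ → ℕ) (N M k u r : ℕ) : Prop where
  le : u ≤ r
  lt : r < N
  reach : ∀ q, u ≤ q → q ≤ r → ProperChunkPartition x q
  wide_or_long : WideWindow x N u r ∨ k ≤ r - u
  le_start : k ≤ u
  start_le : u ≤ k * M

namespace ReachableWindow

variable {M : ℕ}

theorem zero (hN : 0 < N) : ReachableWindow x N M 0 0 0 where
  le := le_rfl
  lt := hN
  reach q _ hq := by
    obtain rfl : q = 0 := by omega
    exact .zero
  wide_or_long := .inr le_rfl
  le_start := le_rfl
  start_le := (zero_mul M).ge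

theorem add_chunkLow_le (hpos : ∀ i < N, 0 < x i) (hM : ∀ i < N, x i ≤ M) (hMN : M * M ≤ N)
    {k u r : ℕ} (hw : ReachableWindow x N M k u r) : u + chunkLow x N u ≤ N := by
  have hu : u < N := hw.le.trans_lt hw.lt
  have hlow := (chunkLow_le_self hu (hpos u hu)).trans (hM u hu)
  by_cases hwide : WideWindow x N u r
  · exact hwide.trans hw.lt
  -- A narrow window has length at least `k`, so fewer than `M` rounds have been made.
  have hkM : k + 1 ≤ M := by
    have := hw.le
    have := hw.wide_or_long.resolve_left hwide
    unfold WideWindow at hwide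
    omega
  calc u + chunkLow x N u ≤ k * M + M := by have := hw.start_le; omega
    _ = (k + 1) * M := by ring
    _ ≤ M * M := Nat.mul_le_mul_right M hkM
    _ ≤ N := hMN

theorem succ (hpos : ∀ i < N, 0 < x i)
    (hstep : ∀ i, i + 1 < N → x (i + 1) = x i + 1 ∨ x i = x (i + 1) + 1)
    (h21 : 2 ≤ N → ¬(x 0 = 2 ∧ x 1 = 1)) (hM : ∀ i < N, x i ≤ M) (hMN : M * M ≤ N)
    {k u r : ℕ} (hw : ReachableWindow x N M k u r) :
    ProperChunkPartition x N ∨ ∃ u' r', ReachableWindow x N M (k + 1) u' r' := by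
  have hu : u < N := hw.le.trans_lt hw.lt
  have hfit := hw.add_chunkLow_le hpos hM hMN
  have hreach := fun {Q} =>
    properChunkPartition_of_le_of_le (Q := Q) hpos hstep hw.le hw.lt hw.reach
  by_cases hend : N ≤ r + chunkHigh x N r
  · exact .inl (hreach hfit hend le_rfl)
  have := chunkLow_pos (x := x) hu
  have := (chunkLow_le_self hu (hpos u hu)).trans (hM u hu)
  refine .inr ⟨_, _, ⟨?_, by omega, fun q hq hqr => hreach hq hqr (by omega), ?_, ?_, ?_⟩⟩
  · have := add_chunkLow_le_add_chunkLow (x := x) hw.le hw.lt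
    have := chunkLow_le_self hw.lt (hpos r hw.lt)
    have := self_le_chunkHigh hw.lt (hpos r hw.lt)
    omega
  · by_cases hwide : WideWindow x N u r
    · exact .inl (hwide.next hpos hstep (by omega))
    have hlong := hw.wide_or_long.resolve_left hwide
    refine (wideWindow_next_or_sub_lt_of_not_wideWindow hpos hstep hw.le hwide (by omega)
      fun hur => ?_).imp id fun h => by omega
    -- The only narrow window of length `0` is the initial one, `[0, 0]`.
    obtain rfl : k = 0 := by omega
    obtain rfl : u = 0 := by simpa using hw.start_le
    obtain rfl : r = 0 := hur.symm
    have := hpos 0 hw.lt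
    exact h21 (by have := self_le_chunkHigh hw.lt this; omega)
  · have := hw.le_start
    omega
  · have := hw.start_le
    rw [add_one_mul]
    omega

theorem properChunkPartition (hpos : ∀ i < N, 0 < x i)
    (hstep : ∀ i, i + 1 < N → x (i + 1) = x i + 1 ∨ x i = x (i + 1) + 1)
    (h21 : 2 ≤ N → ¬(x 0 = 2 ∧ x 1 = 1)) (hM : ∀ i < N, x i ≤ M) (hMN : M * M ≤ N)
    {k u r : ℕ} (hw : ReachableWindow x N M k u r) : ProperChunkPartition x N := by
  obtain h | ⟨u', r', hw'⟩ := hw.succ hpos hstep h21 hM hMN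
  · exact h
  · exact hw'.properChunkPartition hpos hstep h21 hM hMN
termination_by N - k
decreasing_by
  have := hw.le_start
  have := hw.le
  have := hw.lt
  omega

end ReachableWindow

theorem chunking_lemma (x : ℕ → ℕ) (N : ℕ)
    (hpos : ∀ i < N, 0 < x i)
    (h21 : 2 ≤ N → ¬(x 0 = 2 ∧ x 1 = 1))
    (hstep : ∀ i, i + 1 < N → x (i + 1) = x i + 1 ∨ x i = x (i + 1) + 1)
    (hN : ∀ i < N, x i ^ 2 ≤ N) :
    ProperChunkPartition x N := by
  rcases Nat.eq_zero_or_pos N with rfl | hN₀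
  · exact .zero
  exact (ReachableWindow.zero (M := N.sqrt) hN₀).properChunkPartition hpos hstep h21
    (fun i hi => Nat.le_sqrt'.2 (hN i hi)) (Nat.sqrt_le N)
end

section
/- The sequence 2, 1, 2, 1, ..., 2, 1, 2 (alternating values 2 and 1, starting and ending with 2, of any odd length at least 1) cannot be partitioned into proper chunks. -/
/-- The alternating sequence `2, 1, 2, 1, ..., 2` of odd length `2 * m + 1`
cannot be partitioned into proper chunks. -/
theorem alternating_21_not_chunkable (m : ℕ) :
    ¬ ProperChunkPartition (fun i => if Even i then 2 else 1) (2 * m + 1) := by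
  rintro ⟨n, c, h0, hN, hmono, hch⟩
  have key : ∀ k ≤ n, Even (c k) := by
    intro k hk
    induction k with
    | zero => simp [h0]
    | succ k ih =>
      have hkn : k < n := Nat.lt_of_succ_le hk
      have he := ih hkn.le
      have hlt := hmono k hkn
      obtain ⟨j, hj1, hj2, hj3⟩ := hch k hkn
      by_cases hjE : Even j
      · simp only [hjE, if_true] at hj3
        have : c (k + 1) = c k + 2 := by omega
        rw [this]
        exact he.add (by norm_num)
      · simp only [hjE, if_false] at hj3
        have hj : j = c k := by omega
        rw [hj] at hjE
        exact absurd he hjE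
  have := key n le_rfl
  rw [hN] at this
  rw [Nat.even_iff] at this
  omega
end

section
/- Let G be a finite connected graph with vertex set V and let t ∈ V. Let U be an independent set in G, define U' := {x ∈ U : d(x,t) ≥ 2}, W := V \ U, and d := max_{x ∈ V} d(x,t). If |U'| > (d-1)·|W|, then G is not t-stackable. -/
/-- A legal cup-stacking move in the graph `G`. -/
def CupStep {V : Type*} [DecidableEq V] (G : SimpleGraph V) (c c' : V → ℕ) : Prop :=
  ∃ x y : V, x ≠ y ∧ 0 < c x ∧ 0 < c y ∧ G.dist x y = c x ∧
    c' = Function.update (Function.update c x 0) y (c y + c x)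

/-- `G` is `t`-stackable. -/
def TStackable {V : Type*} [DecidableEq V] (G : SimpleGraph V) (t : V) : Prop :=
  ∃ c : V → ℕ, Relation.ReflTransGen (CupStep G) (fun _ => 1) c ∧ ∀ v, v ≠ t → c v = 0

namespace CupAux

variable {V : Type*} [Fintype V] [DecidableEq V] (G : SimpleGraph V)

/-- step `i` is a genuine move with data `X i`, `Y i`. -/
def IsMove (cs : ℕ → V → ℕ) (X Y : ℕ → V) (i : ℕ) : Prop :=
  X i ≠ Y i ∧ 0 < cs i (X i) ∧ 0 < cs i (Y i) ∧ G.dist (X i) (Y i) = cs i (X i) ∧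
    cs (i+1) = Function.update (Function.update (cs i) (X i) 0) (Y i) (cs i (Y i) + cs i (X i))

/-- step `i` is either a stutter or a genuine move. -/
def MoveSpec (cs : ℕ → V → ℕ) (X Y : ℕ → V) (i : ℕ) : Prop :=
  (cs (i+1) = cs i ∧ X i = Y i) ∨ IsMove G cs X Y i

/-- location at time `i` of the cup initially at `v`. -/
def Orig (X Y : ℕ → V) : ℕ → V → V
  | 0 => id
  | (i+1) => fun v => if Orig X Y i v = X i then Y i else Orig X Y i v

variable {G}
variable {cs : ℕ → V → ℕ} {X Y : ℕ → V}

lemma orig_succ (i : ℕ) (v : V) :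
    Orig X Y (i+1) v = if Orig X Y i v = X i then Y i else Orig X Y i v := rfl

lemma orig_stutter {i : ℕ} (h : X i = Y i) (v : V) :
    Orig X Y (i+1) v = Orig X Y i v := by
  rw [orig_succ]; split
  · next hc => rw [← h, hc]
  · rfl

lemma IsMove.csX {i : ℕ} (hm : IsMove G cs X Y i) : cs (i+1) (X i) = 0 := by
  rw [hm.2.2.2.2]
  rw [Function.update_of_ne hm.1, Function.update_self]

lemma IsMove.csY {i : ℕ} (hm : IsMove G cs X Y i) :
    cs (i+1) (Y i) = cs i (Y i) + cs i (X i) := by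
  rw [hm.2.2.2.2, Function.update_self]

lemma IsMove.cs_other {i : ℕ} (hm : IsMove G cs X Y i) {v : V}
    (hvx : v ≠ X i) (hvy : v ≠ Y i) : cs (i+1) v = cs i v := by
  rw [hm.2.2.2.2, Function.update_of_ne hvy, Function.update_of_ne hvx]

lemma IsMove.eq_X {i : ℕ} (hm : IsMove G cs X Y i) {v : V}
    (h1 : 0 < cs i v) (h2 : cs (i+1) v = 0) : v = X i := by
  by_contra hvx
  by_cases hvy : v = Y i
  · subst hvy; rw [hm.csY] at h2; omega
  · rw [hm.cs_other hvx hvy] at h2; omega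

lemma pos_pred (hms : ∀ i, MoveSpec G cs X Y i) {i : ℕ} {v : V}
    (h : 0 < cs (i+1) v) : 0 < cs i v := by
  rcases hms i with ⟨hc, _⟩ | hm
  · rwa [hc] at h
  · by_cases hvx : v = X i
    · subst hvx; exact hm.2.1
    · by_cases hvy : v = Y i
      · subst hvy; exact hm.2.2.1
      · rwa [hm.cs_other hvx hvy] at h

lemma pos_earlier (hms : ∀ i, MoveSpec G cs X Y i) {i j : ℕ} {v : V}
    (hij : i ≤ j) (h : 0 < cs j v) : 0 < cs i v := by
  induction j, hij using Nat.le_induction with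
  | base => exact h
  | succ j hij IH => exact IH (pos_pred hms h)

lemma pos_mono (hms : ∀ i, MoveSpec G cs X Y i) {i j : ℕ} {v : V}
    (hij : i ≤ j) (h : 0 < cs j v) : cs i v ≤ cs j v := by
  induction j, hij using Nat.le_induction with
  | base => exact le_refl _
  | succ j hij IH =>
    have hposj : 0 < cs j v := pos_pred hms h
    refine le_trans (IH hposj) ?_
    rcases hms j with ⟨hc, _⟩ | hm
    · rw [hc]
    · by_cases hvx : v = X j
      · subst hvx; rw [hm.csX] at h; omega
      · by_cases hvy : v = Y j
        · subst hvy; rw [hm.csY]; omega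
        · rw [hm.cs_other hvx hvy]

lemma orig_self (h0 : cs 0 = fun _ => 1) (hms : ∀ i, MoveSpec G cs X Y i)
    (i : ℕ) (v : V) : Orig X Y i v = v ∨ cs i v = 0 := by
  induction i with
  | zero => exact Or.inl rfl
  | succ i IH =>
    rcases hms i with ⟨hc, hxy⟩ | hm
    · rw [orig_stutter hxy, hc]; exact IH
    · rcases IH with hOv | hz
      · by_cases hvx : v = X i
        · right; subst hvx; exact hm.csX
        · left; rw [orig_succ, hOv, if_neg hvx]
      · right
        have hvx : v ≠ X i := fun h => by subst h; have := hm.2.1; omega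
        have hvy : v ≠ Y i := fun h => by
          subst h; have := hm.2.2.1; omega
        rw [hm.cs_other hvx hvy]; exact hz

/-- the pile carrying a given cup never shrinks. -/
lemma p_mono (hms : ∀ i, MoveSpec G cs X Y i) {i j : ℕ} (hij : i ≤ j) (w : V) :
    cs i (Orig X Y i w) ≤ cs j (Orig X Y j w) := by
  induction j, hij using Nat.le_induction with
  | base => exact le_refl _
  | succ j hij IH =>
    refine le_trans IH ?_
    rcases hms j with ⟨hc, hxy⟩ | hm
    · rw [orig_stutter hxy, hc]
    · rw [orig_succ]
      by_cases hOx : Orig X Y j w = X j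
      · rw [if_pos hOx, hm.csY, hOx]; omega
      · rw [if_neg hOx]
        by_cases hOy : Orig X Y j w = Y j
        · rw [hOy, hm.csY]; omega
        · rw [hm.cs_other hOx hOy]

/-- if the cup moved at all between times `i ≤ j`, its pile strictly grew. -/
lemma p_strict (hms : ∀ i, MoveSpec G cs X Y i) {i j : ℕ} (hij : i ≤ j) {w : V}
    (hne : Orig X Y i w ≠ Orig X Y j w) :
    cs i (Orig X Y i w) + 1 ≤ cs j (Orig X Y j w) := by
  induction j, hij using Nat.le_induction with
  | base => exact absurd rfl hne
  | succ j hij IH =>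
    by_cases h : Orig X Y i w = Orig X Y j w
    · -- the change happens at step j
      rcases hms j with ⟨hc, hxy⟩ | hm
      · exact absurd (h.trans (orig_stutter hxy w).symm) hne
      · by_cases hOx : Orig X Y j w = X j
        · rw [orig_succ, if_pos hOx, hm.csY]
          have := p_mono hms hij w
          rw [hOx] at this
          have := hm.2.2.1
          omega
        · rw [orig_succ, if_neg hOx] at hne ⊢
          exact absurd h hne
    · refine le_trans (IH h) ?_
      rcases hms j with ⟨hc, hxy⟩ | hm
      · rw [orig_stutter hxy, hc]
      · rw [orig_succ]
        by_cases hOx : Orig X Y j w = X j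
        · rw [if_pos hOx, hm.csY, hOx]; omega
        · rw [if_neg hOx]
          by_cases hOy : Orig X Y j w = Y j
          · rw [hOy, hm.csY]; omega
          · rw [hm.cs_other hOx hOy]

/-- any pile of size ≥ 2 contains a cup whose origin is outside `U`. -/
lemma exists_w {U : Set V} (hU : ∀ x ∈ U, ∀ y ∈ U, ¬ G.Adj x y)
    (h0 : cs 0 = fun _ => 1) (hms : ∀ i, MoveSpec G cs X Y i) :
    ∀ i v, 2 ≤ cs i v → ∃ w, w ∉ U ∧ Orig X Y i w = v := by
  intro i
  induction i with
  | zero => intro v hv; rw [h0] at hv; exact absurd hv (by norm_num)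
  | succ i IH =>
    intro v hv
    rcases hms i with ⟨hc, hxy⟩ | hm
    · rw [hc] at hv
      obtain ⟨w, hw1, hw2⟩ := IH v hv
      exact ⟨w, hw1, by rw [orig_stutter hxy, hw2]⟩
    · by_cases hvy : v = Y i
      · subst hvy
        by_cases hYU : Y i ∈ U
        · by_cases hr : 2 ≤ cs i (X i)
          · obtain ⟨w, hw1, hw2⟩ := IH (X i) hr
            exact ⟨w, hw1, by rw [orig_succ, hw2, if_pos rfl]⟩
          · -- a single cup moved along an edge
            have hr1 : cs i (X i) = 1 := by have := hm.2.1; omega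
            have hadj : G.Adj (X i) (Y i) := by
              rw [← SimpleGraph.dist_eq_one_iff_adj, hm.2.2.2.1, hr1]
            have hXU : X i ∉ U := fun hXU => hU _ hXU _ hYU hadj
            refine ⟨X i, hXU, ?_⟩
            have hO : Orig X Y i (X i) = X i := by
              rcases orig_self h0 hms i (X i) with h | h
              · exact h
              · have := hm.2.1; omega
            rw [orig_succ, hO, if_pos rfl]
        · refine ⟨Y i, hYU, ?_⟩
          have hO : Orig X Y i (Y i) = Y i := by
            rcases orig_self h0 hms i (Y i) with h | h
            · exact h
            · have := hm.2.2.1; omega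
          rw [orig_succ, hO, if_neg (Ne.symm hm.1)]
      · have hvx : v ≠ X i := fun h => by
          subst h; rw [hm.csX] at hv; omega
        rw [hm.cs_other hvx hvy] at hv
        obtain ⟨w, hw1, hw2⟩ := IH v hv
        refine ⟨w, hw1, ?_⟩
        rw [orig_succ, hw2, if_neg hvx]

/-- backward invariant: every pile at a non-`t` vertex has size at most the
eccentricity of `t`. -/
lemma cs_le_d {t : V} (hms : ∀ i, MoveSpec G cs X Y i)
    (hfin : ∃ N, ∀ i, N ≤ i → ∀ v, v ≠ t → cs i v = 0) :
    ∀ i v, v ≠ t → cs i v ≤ Finset.univ.sup (fun u => G.dist u t) := by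
  obtain ⟨N, hN⟩ := hfin
  set D := Finset.univ.sup (fun u => G.dist u t) with hD
  have key : ∀ k i, N ≤ i + k → ∀ v, v ≠ t → cs i v ≤ D := by
    intro k
    induction k with
    | zero => intro i h v hv; rw [hN i (by omega) v hv]; omega
    | succ k IH =>
      intro i h v hv
      have IH' : ∀ v, v ≠ t → cs (i+1) v ≤ D := fun v hv => IH (i+1) (by omega) v hv
      rcases hms i with ⟨hc, _⟩ | hm
      · rw [← hc]; exact IH' v hv
      · by_cases hvx : v = X i
        · subst hvx
          by_cases hYt : Y i = t
          · rw [← hm.2.2.2.1, hYt]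
            exact Finset.le_sup (f := fun u => G.dist u t) (Finset.mem_univ (X i))
          · have := IH' (Y i) hYt
            rw [hm.csY] at this; omega
        · by_cases hvy : v = Y i
          · subst hvy
            have := IH' (Y i) hv
            rw [hm.csY] at this; omega
          · rw [← hm.cs_other hvx hvy]; exact IH' v hv
  intro i v hv
  exact key N i (by omega) v hv

end CupAux

open CupAux in
theorem independent_set_non_stackable {V : Type*} [Fintype V] [DecidableEq V]
    (G : SimpleGraph V) (hG : G.Connected) (t : V) (U : Set V)
    (hU : ∀ x ∈ U, ∀ y ∈ U, ¬ G.Adj x y)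
    (hcard : (Finset.univ.sup (fun v : V => G.dist v t) - 1) * (Uᶜ : Set V).ncard
        < ({x ∈ U | 2 ≤ G.dist x t} : Set V).ncard) :
    ¬ TStackable G t := by
  classical
  rintro ⟨c, hrel, hfin⟩
  set d := Finset.univ.sup (fun v : V => G.dist v t) with hd
  -- extract an indexed trajectory
  obtain ⟨N, cs, h0, hms0, hN⟩ : ∃ (N : ℕ) (cs : ℕ → V → ℕ), cs 0 = (fun _ => 1) ∧
      (∀ i, cs (i+1) = cs i ∨ CupStep G (cs i) (cs (i+1))) ∧ ∀ i, N ≤ i → cs i = c := by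
    clear hfin hcard
    induction hrel with
    | refl => exact ⟨0, fun _ => fun _ => 1, rfl, fun i => Or.inl rfl, fun i _ => rfl⟩
    | @tail b c hab hbc IH =>
      obtain ⟨N, cs, h0, hms0, hN⟩ := IH
      refine ⟨N + 1, fun i => if i ≤ N then cs i else c, by simp [h0], ?_, ?_⟩
      · intro i
        rcases lt_trichotomy i N with h | h | h
        · simp only [if_pos (by omega : i + 1 ≤ N), if_pos (by omega : i ≤ N)]
          exact hms0 i
        · subst h
          simp only [if_neg (by omega : ¬ i + 1 ≤ i), if_pos le_rfl]
          right; rw [hN i le_rfl]; exact hbc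
        · left
          simp only [if_neg (by omega : ¬ i + 1 ≤ N), if_neg (by omega : ¬ i ≤ N)]
      · intro i hi
        simp only [if_neg (by omega : ¬ i ≤ N)]
  -- choose move data
  have hchoice : ∀ i, ∃ x y : V, (cs (i+1) = cs i ∧ x = y) ∨ (x ≠ y ∧ 0 < cs i x ∧
      0 < cs i y ∧ G.dist x y = cs i x ∧
      cs (i+1) = Function.update (Function.update (cs i) x 0) y (cs i y + cs i x)) := by
    intro i
    rcases hms0 i with h | ⟨x, y, h1, h2, h3, h4, h5⟩
    · exact ⟨t, t, Or.inl ⟨h, rfl⟩⟩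
    · exact ⟨x, y, Or.inr ⟨h1, h2, h3, h4, h5⟩⟩
  choose X Y hXY using hchoice
  have hms : ∀ i, MoveSpec G cs X Y i := fun i => hXY i
  have hfin' : ∃ N, ∀ i, N ≤ i → ∀ v, v ≠ t → cs i v = 0 :=
    ⟨N, fun i hi v hv => by rw [hN i hi]; exact hfin v hv⟩
  have hled := cs_le_d hms hfin'
  -- emptying time for each vertex of U'
  have hkey : ∀ x : V, x ∈ U → 2 ≤ G.dist x t →
      ∃ e, X e = x ∧ IsMove G cs X Y e ∧ cs (e+1) x = 0 ∧ 0 < cs e x := by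
    intro x hxU hxd
    have hxt : x ≠ t := by
      intro h; subst h; rw [SimpleGraph.dist_self] at hxd; omega
    have hex : ∃ i, cs i x = 0 := ⟨N, by rw [hN N le_rfl]; exact hfin x hxt⟩
    have hm0 : Nat.find hex ≠ 0 := by
      intro h
      have := Nat.find_spec hex
      rw [h, h0] at this
      simp at this
    set m := Nat.find hex with hm
    obtain ⟨e, he⟩ : ∃ e, m = e + 1 := ⟨m - 1, by omega⟩
    have hE1 : cs (e+1) x = 0 := by rw [← he]; exact Nat.find_spec hex
    have hE0 : 0 < cs e x := by
      have := Nat.find_min hex (by omega : e < m)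
      omega
    have hmv : IsMove G cs X Y e := by
      rcases hms e with ⟨hc, _⟩ | hm'
      · rw [hc] at hE1; omega
      · exact hm'
    exact ⟨e, (hmv.eq_X hE0 hE1).symm, hmv, hE1, hE0⟩
  choose! e he1 he2 he3 he4 using hkey
  -- choice of W-origin for big piles
  have hwb : ∀ x : V, x ∈ U → 2 ≤ G.dist x t →
      ∃ w, 2 ≤ cs (e x) x → (w ∉ U ∧ Orig X Y (e x) w = x) := by
    intro x h1 h2
    by_cases hr : 2 ≤ cs (e x) x
    · obtain ⟨w, hw⟩ := exists_w hU h0 hms (e x) x hr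
      exact ⟨w, fun _ => hw⟩
    · exact ⟨t, fun h => absurd h hr⟩
  choose! wsel hwsel using hwb
  -- the injection
  set F : V → V × ℕ := fun x =>
    if 2 ≤ cs (e x) x then (wsel x, cs (e x) x - 1)
    else (Y (e x), cs (e x) (Y (e x)))
    with hF
  set Wf : Finset V := Finset.univ.filter (fun v => v ∉ U) with hWf
  set Uf : Finset V := Finset.univ.filter (fun x => x ∈ U ∧ 2 ≤ G.dist x t) with hUf
  -- facts about type-a elements
  have typea : ∀ x ∈ Uf, ¬ 2 ≤ cs (e x) x →
      Y (e x) ∉ U ∧ Y (e x) ≠ t ∧ cs (e x) x = 1 ∧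
        cs (e x + 1) (Y (e x)) = cs (e x) (Y (e x)) + 1 := by
    intro x hx hr
    rw [hUf, Finset.mem_filter] at hx
    obtain ⟨-, hxU, hxd⟩ := hx
    have hmv := he2 x hxU hxd
    have hXx := he1 x hxU hxd
    have hr1 : cs (e x) x = 1 := by have := he4 x hxU hxd; omega
    have hdist : G.dist x (Y (e x)) = 1 := by
      have := hmv.2.2.2.1; rw [hXx] at this; rw [this, hr1]
    have hadj : G.Adj x (Y (e x)) := by rwa [← SimpleGraph.dist_eq_one_iff_adj]
    have hYU : Y (e x) ∉ U := fun hYU => hU _ hxU _ hYU hadj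
    have hYt : Y (e x) ≠ t := by
      intro h; rw [h] at hdist; omega
    have hY1 : cs (e x + 1) (Y (e x)) = cs (e x) (Y (e x)) + 1 := by
      rw [hmv.csY, hXx, hr1]
    exact ⟨hYU, hYt, hr1, hY1⟩
  -- F maps into the target
  have hmaps : ∀ x ∈ Uf, F x ∈ Wf ×ˢ Finset.Icc 1 (d - 1) := by
    intro x hx
    have hx' := hx
    rw [hUf, Finset.mem_filter] at hx'
    obtain ⟨-, hxU, hxd⟩ := hx'
    have hxt : x ≠ t := by
      intro h; subst h; rw [SimpleGraph.dist_self] at hxd; omega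
    rw [Finset.mem_product]
    by_cases hr : 2 ≤ cs (e x) x
    · obtain ⟨hw1, -⟩ := hwsel x hxU hxd hr
      have hle : cs (e x) x ≤ d := hled (e x) x hxt
      constructor
      · simp only [hF, if_pos hr, hWf, Finset.mem_filter]
        exact ⟨Finset.mem_univ _, hw1⟩
      · simp only [hF, if_pos hr, Finset.mem_Icc]
        omega
    · obtain ⟨hYU, hYt, hr1, hY1⟩ := typea x hx hr
      have h1 : 0 < cs (e x) (Y (e x)) := (he2 x hxU hxd).2.2.1
      have h2 : cs (e x + 1) (Y (e x)) ≤ d := hled (e x + 1) (Y (e x)) hYt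
      constructor
      · simp only [hF, if_neg hr, hWf, Finset.mem_filter]
        exact ⟨Finset.mem_univ _, hYU⟩
      · simp only [hF, if_neg hr, Finset.mem_Icc]
        omega
  -- injectivity
  have main : ∀ a ∈ Uf, ∀ b ∈ Uf, a ≠ b → e a < e b → F a = F b → False := by
    intro a ha b hb hab hee hFab
    have ha' := ha; rw [hUf, Finset.mem_filter] at ha'
    obtain ⟨-, haU, had⟩ := ha'
    have hb' := hb; rw [hUf, Finset.mem_filter] at hb'
    obtain ⟨-, hbU, hbd⟩ := hb'
    have hmva := he2 a haU had
    have hXa := he1 a haU had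
    have hmvb := he2 b hbU hbd
    have hXb := he1 b hbU hbd
    by_cases hrb : 2 ≤ cs (e b) b
    · -- b is type-b
      obtain ⟨hwb1, hwb2⟩ := hwsel b hbU hbd hrb
      by_cases hra : 2 ≤ cs (e a) a
      · -- both type-b
        have h1 : wsel a = wsel b ∧ cs (e a) a - 1 = cs (e b) b - 1 := by
          have := hFab
          simp only [hF, if_pos hra, if_pos hrb, Prod.mk.injEq] at this
          exact this
        obtain ⟨hwa1, hwa2⟩ := hwsel a haU had hra
        rw [h1.1] at hwa2
        have hne : Orig X Y (e a) (wsel b) ≠ Orig X Y (e b) (wsel b) := by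
          rw [hwa2, hwb2]; exact hab
        have := p_strict hms (le_of_lt hee) hne
        rw [hwa2, hwb2] at this
        omega
      · -- a type-a, b type-b
        obtain ⟨hYU, hYt, hr1, hY1⟩ := typea a ha hra
        have h1 : Y (e a) = wsel b ∧ cs (e a) (Y (e a)) = cs (e b) b - 1 := by
          have := hFab
          simp only [hF, if_neg hra, if_pos hrb, Prod.mk.injEq] at this
          exact this
        -- the cup of w := wsel b is at w at time e a (w not yet emptied),
        -- stays at w through step e a, then must strictly grow to reach size at e b
        set w := wsel b with hw
        have hcw : 0 < cs (e a) w := by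
          rw [← h1.1]; exact hmva.2.2.1
        have hOw : Orig X Y (e a) w = w := by
          rcases orig_self h0 hms (e a) w with h | h
          · exact h
          · omega
        have hOw1 : Orig X Y (e a + 1) w = w := by
          rw [orig_succ, hOw, hXa, if_neg]
          intro h
          exact hwb1 (h ▸ haU)
        have hcs1 : cs (e a + 1) w = cs (e a) w + 1 := by rw [← h1.1]; exact hY1
        have hne : Orig X Y (e a + 1) w ≠ Orig X Y (e b) w := by
          rw [hOw1, hwb2]
          intro h
          exact hwb1 (h ▸ hbU)
        have := p_strict hms (by omega : e a + 1 ≤ e b) hne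
        rw [hOw1, hwb2, hcs1] at this
        have h2 := h1.2
        rw [h1.1] at h2
        omega
    · -- b is type-a
      obtain ⟨hYUb, hYtb, hrb1, hYb1⟩ := typea b hb hrb
      by_cases hra : 2 ≤ cs (e a) a
      · -- a type-b, b type-a
        obtain ⟨hwa1, hwa2⟩ := hwsel a haU had hra
        have h1 : wsel a = Y (e b) ∧ cs (e a) a - 1 = cs (e b) (Y (e b)) := by
          have := hFab
          simp only [hF, if_pos hra, if_neg hrb, Prod.mk.injEq] at this
          exact this
        -- cs (e b) (wsel a) > 0 but the cup of wsel a already left it at time e a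
        have hpos : 0 < cs (e b) (wsel a) := by
          rw [h1.1]; exact hmvb.2.2.1
        have hpos' : 0 < cs (e a) (wsel a) := pos_earlier hms (le_of_lt hee) hpos
        rcases orig_self h0 hms (e a) (wsel a) with h | h
        · rw [hwa2] at h
          exact hwa1 (h ▸ haU)
        · omega
      · -- both type-a
        obtain ⟨hYUa, hYta, hra1, hYa1⟩ := typea a ha hra
        have h1 : Y (e a) = Y (e b) ∧ cs (e a) (Y (e a)) = cs (e b) (Y (e b)) := by
          have := hFab
          simp only [hF, if_neg hra, if_neg hrb, Prod.mk.injEq] at this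
          exact this
        have hpos : 0 < cs (e b) (Y (e a)) := by
          rw [h1.1]; exact hmvb.2.2.1
        have := pos_mono hms (by omega : e a + 1 ≤ e b) hpos
        rw [hYa1] at this
        have h2 : cs (e b) (Y (e a)) = cs (e a) (Y (e a)) := by
          conv_lhs => rw [h1.1]
          exact h1.2.symm
        omega
  have hinj : Set.InjOn F ↑Uf := by
    intro a ha b hb hFab
    rw [Finset.mem_coe] at ha hb
    by_contra hab
    rcases lt_trichotomy (e a) (e b) with h | h | h
    · exact main a ha b hb hab h hFab
    · apply hab
      have hXa := he1 a (by rw [hUf, Finset.mem_filter] at ha; exact ha.2.1)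
        (by rw [hUf, Finset.mem_filter] at ha; exact ha.2.2)
      have hXb := he1 b (by rw [hUf, Finset.mem_filter] at hb; exact hb.2.1)
        (by rw [hUf, Finset.mem_filter] at hb; exact hb.2.2)
      rw [← hXa, ← hXb, h]
    · exact main b hb a ha (Ne.symm hab) h hFab.symm
  have hcard2 : Uf.card ≤ Wf.card * (d - 1) := by
    have := Finset.card_le_card_of_injOn F hmaps hinj
    rwa [Finset.card_product, Nat.card_Icc, Nat.add_sub_cancel] at this
  -- translate ncard hypotheses
  have hWs : (Uᶜ : Set V).ncard = Wf.card := by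
    rw [← Set.ncard_coe_finset]
    congr 1
    ext v
    simp [hWf]
  have hUs : ({x ∈ U | 2 ≤ G.dist x t} : Set V).ncard = Uf.card := by
    rw [← Set.ncard_coe_finset]
    congr 1
    ext v
    simp [hUf]
  rw [hWs, hUs] at hcard
  rw [mul_comm] at hcard2
  omega
end

section
/- Let G be a finite connected graph with n ≥ 2 vertices and diameter d, and let G' be the c-cactus of G (obtained from G by attaching c pendant edges to every vertex of G), where c > (d+1)·n/(n-1). Then G' is not t-stackable for any vertex t of G'. -/
/-- The `c`-cactus of `G`: attach `c` pendant vertices to every vertex of `G`. -/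
def cactus {V : Type*} (G : SimpleGraph V) (c : ℕ) : SimpleGraph (V ⊕ V × Fin c) where
  Adj a b :=
    (∃ u v, G.Adj u v ∧ a = Sum.inl u ∧ b = Sum.inl v) ∨
    (∃ v i, a = Sum.inl v ∧ b = Sum.inr (v, i)) ∨
    (∃ v i, a = Sum.inr (v, i) ∧ b = Sum.inl v)
  symm := by
    constructor
    rintro a b (⟨u, v, h, rfl, rfl⟩ | ⟨v, i, rfl, rfl⟩ | ⟨v, i, rfl, rfl⟩)
    · exact Or.inl ⟨v, u, h.symm, rfl, rfl⟩
    · exact Or.inr (Or.inr ⟨v, i, rfl, rfl⟩)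
    · exact Or.inr (Or.inl ⟨v, i, rfl, rfl⟩)
  loopless := by
    constructor
    rintro a (⟨u, v, h, rfl, hv⟩ | ⟨v, i, rfl, hv⟩ | ⟨v, i, rfl, hv⟩)
    · exact h.ne (Sum.inl.inj hv)
    · exact Sum.inl_ne_inr hv
    · exact Sum.inr_ne_inl hv

/-!
Record a stacking as a forest in which every vertex that moved points to the vertex it moved
onto. A pile then consists of the cups of a whole subtree, its size is the distance it travelled,
hence at most `d + 2` in the cactus, and piles strictly grow towards the target. A pendant vertex
can move a single cup only onto its own base; if it moved more, it first received a pile which,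
followed downwards, comes from a vertex of `G`. So every pendant not attached to the base of the
target is either dropped with one cup onto some vertex `u ≠ t` of `G`, or lies on the chain that
carried the pile of `u`. There are fewer pendants of the first kind than cups in the pile of `u`,
and at most `d + 2` minus that pile of the second kind, so each `u` accounts for at most `d + 1`
pendants, and `(n - 1) c ≤ n (d + 1)`.
-/

open Finset Relation

section CupStacking

variable {W : Type*} {H : SimpleGraph W}

variable (H) in
noncomputable def pile (parent : W → Option W) (cups : W → ℕ) (v : W) : ℕ :=
  (parent v).elim (cups v) (H.dist v)

theorem pile_update [DecidableEq W] {parent : W → Option W} {cups : W → ℕ} {x y : W}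
    (hxy : x ≠ y) (hx : parent x = none) (hy : parent y = none) (hdist : H.dist x y = cups x) :
    pile H (Function.update parent x (some y))
        (Function.update (Function.update cups x 0) y (cups y + cups x)) =
      Function.update (pile H parent cups) y (pile H parent cups y + pile H parent cups x) := by
  funext v
  by_cases hvy : v = y
  · subst hvy; simp [pile, hxy.symm, hy, hx]
  · by_cases hvx : v = x
    · subst hvx; simp [pile, hvy, hdist, hx]
    · simp [pile, hvy, hvx]

variable [Fintype W]

open Classical in
noncomputable def ancestors (parent : W → Option W) (v : W) : Finset W :=
  univ.filter (TransGen (fun x y => parent x = some y) v)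

theorem mem_ancestors {parent : W → Option W} {v a : W} :
    a ∈ ancestors parent v ↔ TransGen (fun x y => parent x = some y) v a := by
  simp [ancestors]

variable [DecidableEq W]

theorem CupStep.sum_eq {a b : W → ℕ} (h : CupStep H a b) : ∑ v, b v = ∑ v, a v := by
  obtain ⟨x, y, hxy, -, -, -, rfl⟩ := h
  have hx : x ∈ univ \ {y} := by simp [hxy]
  have hrest : ∑ v ∈ (univ \ {y}) \ {x}, Function.update a x 0 v =
      ∑ v ∈ (univ \ {y}) \ {x}, a v :=
    sum_congr rfl fun v hv => Function.update_of_ne (by simp_all) _ _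
  rw [sum_update_of_mem (mem_univ y), sum_eq_add_sum_sdiff_singleton_of_mem hx,
    Function.update_self, sum_eq_add_sum_sdiff_singleton_of_mem (mem_univ y) a,
    sum_eq_add_sum_sdiff_singleton_of_mem hx a, hrest]
  ring

theorem sum_eq_card_of_reflTransGen {cups : W → ℕ}
    (h : ReflTransGen (CupStep H) (fun _ => 1) cups) : ∑ v, cups v = Fintype.card W := by
  induction h with
  | refl => simp
  | tail _ hstep ih => rw [hstep.sum_eq, ih]

def children (parent : W → Option W) (v : W) : Finset W :=
  univ.filter (fun y => parent y = some v)

/-- `parent v = some u` records that the pile of `v` was moved onto `u`; `pile` is then the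
distance travelled, which is the number of cups moved. So `pile_eq` says that a pile consists of
one cup of its own and of the piles merged into it. -/
structure IsStackHistory (H : SimpleGraph W) (parent : W → Option W) (cups : W → ℕ) :
    Prop where
  cups_eq_zero {v u : W} : parent v = some u → cups v = 0
  pile_eq (v : W) : pile H parent cups v = 1 + ∑ y ∈ children parent v, pile H parent cups y

namespace IsStackHistory

variable {parent : W → Option W} {cups : W → ℕ}

theorem one_le_pile (hist : IsStackHistory H parent cups) (v : W) : 1 ≤ pile H parent cups v := by
  rw [hist.pile_eq v]; omega

theorem pile_lt_of_parent_eq_some (hist : IsStackHistory H parent cups) {a b : W}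
    (h : parent a = some b) :
    pile H parent cups a < pile H parent cups b := by
  have ha : a ∈ children parent b := by simp [children, h]
  have := single_le_sum (fun y _ => Nat.zero_le (pile H parent cups y)) ha
  rw [hist.pile_eq b]; omega

theorem pile_lt_of_transGen (hist : IsStackHistory H parent cups) {a b : W}
    (h : TransGen (fun x y => parent x = some y) a b) :
    pile H parent cups a < pile H parent cups b := by
  induction h with
  | single h => exact hist.pile_lt_of_parent_eq_some h
  | tail _ h ih => exact ih.trans (hist.pile_lt_of_parent_eq_some h)

theorem card_children_lt (hist : IsStackHistory H parent cups) (v : W) :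
    #(children parent v) < pile H parent cups v := by
  have : #(children parent v) ≤ ∑ y ∈ children parent v, pile H parent cups y := by
    simpa using card_nsmul_le_sum (children parent v) _ 1 fun y _ => hist.one_le_pile y
  rw [hist.pile_eq v]; omega

theorem parent_eq_none_iff (hist : IsStackHistory H parent cups) {t : W}
    (hcups : ∀ v ≠ t, cups v = 0) (ht : cups t ≠ 0) (v : W) :
    parent v = none ↔ v = t := by
  constructor
  · intro hv
    by_contra hvt
    have := hist.pile_eq v
    rw [pile, hv, Option.elim_none, hcups v hvt] at this
    omega
  · rintro rfl
    cases hv : parent v with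
    | none => rfl
    | some u => exact absurd (hist.cups_eq_zero hv) ht

/-- The piles along the chain of vertices that carried the pile of `v` strictly grow and are
distances in `H`, while each child of `v` put at least one cup into the pile of `v`. -/
theorem card_ancestors_erase_add_card_children_lt (hist : IsStackHistory H parent cups)
    {t : W} (hroot : ∀ v, parent v = none ↔ v = t) {D : ℕ} (hD : ∀ a b, H.dist a b ≤ D)
    {v : W} (hv : v ≠ t) :
    #((ancestors parent v).erase t) + #(children parent v) < D := by
  have hle : ∀ a ≠ t, pile H parent cups a ≤ D := fun a ha => by
    obtain ⟨b, hb⟩ := Option.ne_none_iff_exists'.mp ((hroot a).not.mpr ha)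
    simpa [pile, hb] using hD a b
  have hmaps : Set.MapsTo (pile H parent cups) ((ancestors parent v).erase t)
      (Ioc (pile H parent cups v) D) := fun a ha => by
    obtain ⟨hat, hva⟩ := mem_erase.mp ha
    exact mem_Ioc.mpr ⟨hist.pile_lt_of_transGen (mem_ancestors.mp hva), hle a hat⟩
  have hinj : Set.InjOn (pile H parent cups) ((ancestors parent v).erase t) := by
    intro a ha b hb hab
    replace ha := mem_ancestors.mp (mem_of_mem_erase ha)
    replace hb := mem_ancestors.mp (mem_of_mem_erase hb)
    have hunique : Relator.RightUnique (fun x y : W => parent x = some y) :=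
      fun _ _ _ h h' => Option.some.inj (h.symm.trans h')
    rcases ha.to_reflTransGen.total_of_right_unique hunique hb.to_reflTransGen with h | h <;>
      rcases reflTransGen_iff_eq_or_transGen.mp h with h | h
    · exact h.symm
    · exact absurd hab (hist.pile_lt_of_transGen h).ne
    · exact h
    · exact absurd hab (hist.pile_lt_of_transGen h).ne'
  have := card_le_card_of_injOn _ hmaps hinj
  have := hist.card_children_lt v
  have := hle v hv
  rw [Nat.card_Ioc] at *
  omega

end IsStackHistory

section Step

variable {parent : W → Option W} {x y : W}

theorem children_update_self : children (Function.update parent x (some y)) y =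
    insert x (children parent y) := by
  ext z
  by_cases hz : z = x <;> simp [children, Function.update_apply, hz]

theorem children_update_of_ne (hx : parent x = none) {v : W} (hv : v ≠ y) :
    children (Function.update parent x (some y)) v = children parent v := by
  ext z
  by_cases hz : z = x <;> simp [children, Function.update_apply, hz, hv.symm, hx]

theorem IsStackHistory.exists_of_cupStep {cups cups' : W → ℕ}
    (hist : IsStackHistory H parent cups) (h : CupStep H cups cups') :
    ∃ parent', IsStackHistory H parent' cups' := by
  obtain ⟨x, y, hxy, hx, hy, hdist, rfl⟩ := h
  have hnone : ∀ {v}, 0 < cups v → parent v = none := fun hv => by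
    cases h : parent _ with
    | none => rfl
    | some u => exact absurd (hist.cups_eq_zero h) hv.ne'
  refine ⟨Function.update parent x (some y), ⟨fun {v u} hvu => ?_, fun v => ?_⟩⟩
  · by_cases hvx : v = x
    · subst hvx; simp [hxy]
    · have hvy : v ≠ y := by rintro rfl; simp [hvx, hnone hy] at hvu
      simp only [Function.update_of_ne hvx] at hvu
      simp [hvx, hvy, hist.cups_eq_zero hvu]
  · rw [pile_update hxy (hnone hx) (hnone hy) hdist]
    have hy' : y ∉ children (Function.update parent x (some y)) v := by
      simp [children, Function.update_of_ne hxy.symm, hnone hy]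
    rw [sum_congr rfl fun z hz => Function.update_of_ne (ne_of_mem_of_not_mem hz hy') _ _]
    by_cases hvy : v = y
    · subst hvy
      have hx' : x ∉ children parent v := by simp [children, hnone hx]
      rw [children_update_self, sum_insert hx', Function.update_self, hist.pile_eq v]
      ring
    · rw [children_update_of_ne (hnone hx) hvy, Function.update_of_ne hvy, hist.pile_eq v]

end Step

theorem exists_isStackHistory_of_reflTransGen {cups : W → ℕ}
    (h : ReflTransGen (CupStep H) (fun _ => 1) cups) :
    ∃ parent, IsStackHistory H parent cups := by
  induction h with
  | refl => exact ⟨fun _ => none, ⟨by simp, fun v => by simp [pile, children]⟩⟩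
  | tail _ hstep ih => exact ih.elim fun _ hist => hist.exists_of_cupStep hstep

theorem TStackable.exists_isStackHistory {t : W} (h : TStackable H t) :
    ∃ parent cups, IsStackHistory H parent cups ∧ ∀ v, parent v = none ↔ v = t := by
  obtain ⟨cups, hreach, hcups⟩ := h
  obtain ⟨parent, hist⟩ := exists_isStackHistory_of_reflTransGen hreach
  have ht : cups t = Fintype.card W := by
    rw [← sum_eq_card_of_reflTransGen hreach, sum_eq_single t fun v _ hv => hcups v hv]
    simp
  have : 0 < Fintype.card W := Fintype.card_pos_iff.mpr ⟨t⟩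
  exact ⟨parent, cups, hist, hist.parent_eq_none_iff hcups (by omega)⟩

end CupStacking

section Cactus

variable {V : Type*} {G : SimpleGraph V} {c : ℕ}

theorem cactus_adj_inr_iff {w : V} {i : Fin c} {a : V ⊕ V × Fin c} :
    (cactus G c).Adj (Sum.inr (w, i)) a ↔ a = Sum.inl w := by
  constructor
  · rintro (⟨_, _, _, h, -⟩ | ⟨_, _, h, -⟩ | ⟨_, _, h, rfl⟩) <;> simp_all
  · rintro rfl
    exact Or.inr (Or.inr ⟨w, i, rfl, rfl⟩)

def cactusBase : V ⊕ V × Fin c → V := Sum.elim id Prod.fst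

def cactusInl (G : SimpleGraph V) (c : ℕ) : G →g cactus G c :=
  ⟨Sum.inl, fun h => Or.inl ⟨_, _, h, rfl, rfl⟩⟩

theorem cactus_reachable_base (a : V ⊕ V × Fin c) :
    (cactus G c).Reachable a (Sum.inl (cactusBase a)) := by
  rcases a with u | ⟨w, i⟩
  · rfl
  · exact (cactus_adj_inr_iff.mpr rfl).reachable

theorem cactus_dist_base_le (a : V ⊕ V × Fin c) :
    (cactus G c).dist a (Sum.inl (cactusBase a)) ≤ 1 := by
  rcases a with u | ⟨w, i⟩
  · simp [cactusBase]
  · exact (SimpleGraph.dist_eq_one_iff_adj.mpr (cactus_adj_inr_iff.mpr rfl)).le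

theorem cactus_dist_inl_le {u v : V} (h : G.Reachable u v) :
    (cactus G c).dist (Sum.inl u) (Sum.inl v) ≤ G.dist u v := by
  obtain ⟨p, hp⟩ := h.exists_walk_length_eq_dist
  have := SimpleGraph.dist_le (p.map (cactusInl G c))
  rwa [SimpleGraph.Walk.length_map, hp] at this

theorem SimpleGraph.Connected.cactus (hG : G.Connected) : (cactus G c).Connected := by
  have := hG.nonempty
  rw [SimpleGraph.connected_iff]
  refine ⟨fun a b => ?_, inferInstance⟩
  exact (cactus_reachable_base a).trans
    (((hG _ _).map (cactusInl G c)).trans (cactus_reachable_base b).symm)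

theorem cactus_dist_le (hG : G.Connected) {d : ℕ} (hd : ∀ u v, G.dist u v ≤ d)
    (a b : V ⊕ V × Fin c) : (cactus G c).dist a b ≤ d + 2 := by
  have hconn := hG.cactus (c := c)
  calc (cactus G c).dist a b
      ≤ (cactus G c).dist a (Sum.inl (cactusBase a)) +
          (cactus G c).dist (Sum.inl (cactusBase a)) b := hconn.dist_triangle
    _ ≤ (cactus G c).dist a (Sum.inl (cactusBase a)) +
          ((cactus G c).dist (Sum.inl (cactusBase a)) (Sum.inl (cactusBase b)) +
            (cactus G c).dist (Sum.inl (cactusBase b)) b) := by gcongr; exact hconn.dist_triangle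
    _ ≤ 1 + (d + 1) := by
      gcongr
      · exact cactus_dist_base_le a
      · exact (cactus_dist_inl_le (hG _ _)).trans (hd _ _)
      · exact SimpleGraph.dist_comm.trans_le (cactus_dist_base_le b)
    _ = d + 2 := by ring

variable {parent : V ⊕ V × Fin c → Option (V ⊕ V × Fin c)} {cups : V ⊕ V × Fin c → ℕ}

theorem eq_inl_of_pile_eq_one {w : V} {i : Fin c} {a : V ⊕ V × Fin c}
    (h : parent (Sum.inr (w, i)) = some a)
    (h1 : pile (cactus G c) parent cups (Sum.inr (w, i)) = 1) :
    a = Sum.inl w := by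
  rw [pile, h, Option.elim_some] at h1
  exact cactus_adj_inr_iff.mp (SimpleGraph.dist_eq_one_iff_adj.mp h1)

variable [DecidableEq V] [Fintype V]

/-- A pendant vertex can only receive a pile from another pendant vertex by a jump of length at
least two, so following the received piles downwards must end at a vertex of `G`. -/
theorem IsStackHistory.exists_inl_transGen (hist : IsStackHistory (cactus G c) parent cups)
    (p : V × Fin c) (hp : 2 ≤ pile (cactus G c) parent cups (Sum.inr p)) :
    ∃ u, TransGen (fun x y => parent x = some y) (Sum.inl u) (Sum.inr p) := by
  induction hn : pile (cactus G c) parent cups (Sum.inr p) using Nat.strong_induction_on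
    generalizing p with
  | _ n ih =>
  have hsum : ∑ y ∈ children parent (Sum.inr p), pile (cactus G c) parent cups y ≠ 0 := by
    have := hist.pile_eq (Sum.inr p); omega
  obtain ⟨y, hy, -⟩ := exists_ne_zero_of_sum_ne_zero hsum
  have hyp : parent y = some (Sum.inr p) := by simpa [children] using hy
  rcases y with u | q
  · exact ⟨u, .single hyp⟩
  · have hne : pile (cactus G c) parent cups (Sum.inr q) ≠ 1 := fun h1 =>
      Sum.inr_ne_inl (eq_inl_of_pile_eq_one (w := q.1) (i := q.2) hyp h1)
    have := hist.one_le_pile (Sum.inr q)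
    obtain ⟨u, hu⟩ := ih _ (hn ▸ hist.pile_lt_of_parent_eq_some hyp) q (by omega) rfl
    exact ⟨u, hu.tail hyp⟩

theorem IsStackHistory.exists_mem_ancestors_or_children
    (hist : IsStackHistory (cactus G c) parent cups) {t : V ⊕ V × Fin c}
    (hroot : ∀ v, parent v = none ↔ v = t) {p : V × Fin c} (hp : p.1 ≠ cactusBase t) :
    ∃ u, Sum.inl u ≠ t ∧
      Sum.inr p ∈ (ancestors parent (Sum.inl u)).erase t ∪ children parent (Sum.inl u) := by
  obtain ⟨w, i⟩ := p
  have hpt : Sum.inr (w, i) ≠ t := by rintro rfl; exact hp rfl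
  obtain ⟨a, ha⟩ := Option.ne_none_iff_exists'.mp ((hroot _).not.mpr hpt)
  by_cases h1 : pile (cactus G c) parent cups (Sum.inr (w, i)) = 1
  · refine ⟨w, by rintro rfl; exact hp rfl, mem_union_right _ ?_⟩
    simp [children, ha, eq_inl_of_pile_eq_one ha h1]
  · have := hist.one_le_pile (Sum.inr (w, i))
    obtain ⟨u, hu⟩ := hist.exists_inl_transGen (w, i) (by omega)
    obtain ⟨b, hb, -⟩ := TransGen.head'_iff.mp hu
    refine ⟨u, fun hut => ?_, mem_union_left _ (mem_erase.mpr ⟨hpt, mem_ancestors.mpr hu⟩)⟩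
    simp [← hroot, hb] at hut

/-- Each vertex `u` of `G` accounts for at most `d + 1` pendant vertices: those dropped onto it
with a single cup, and those that later carried its pile; the pendants at the base of the target
are not accounted for. -/
theorem card_sub_one_mul_le_of_tStackable (hG : G.Connected) {d : ℕ}
    (hd : ∀ u v, G.dist u v ≤ d) {t : V ⊕ V × Fin c} (h : TStackable (cactus G c) t) :
    (Fintype.card V - 1) * c ≤ Fintype.card V * (d + 1) := by
  obtain ⟨parent, cups, hist, hroot⟩ := h.exists_isStackHistory
  set F : V → Finset (V ⊕ V × Fin c) := fun u =>
    (ancestors parent (Sum.inl u)).erase t ∪ children parent (Sum.inl u)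
  set I : Finset V := univ.filter (fun u => Sum.inl u ≠ t)
  have hcover : ∀ p ∈ univ.erase (cactusBase t) ×ˢ univ, Sum.inr p ∈ I.biUnion F := by
    intro p hp
    obtain ⟨u, hut, hu⟩ :=
      hist.exists_mem_ancestors_or_children hroot (p := p) (by simpa using hp)
    exact mem_biUnion.mpr ⟨u, mem_filter.mpr ⟨mem_univ u, hut⟩, hu⟩
  have hF : ∀ u ∈ I, #(F u) ≤ d + 1 := fun u hu => by
    have := hist.card_ancestors_erase_add_card_children_lt hroot (cactus_dist_le hG hd)
      (v := Sum.inl u) (by simpa [I] using hu)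
    exact (card_union_le _ _).trans (by omega)
  calc (Fintype.card V - 1) * c = #(univ.erase (cactusBase t) ×ˢ (univ : Finset (Fin c))) := by
        simp [card_erase_of_mem]
    _ ≤ #(I.biUnion F) := card_le_card_of_injOn _ hcover Sum.inr_injective.injOn
    _ ≤ ∑ u ∈ I, #(F u) := card_biUnion_le
    _ ≤ #I * (d + 1) := by simpa using sum_le_card_nsmul I _ _ hF
    _ ≤ Fintype.card V * (d + 1) := by gcongr; exact card_filter_le _ _

end Cactus

theorem cactus_strongly_non_stackable {V : Type*} [Fintype V] [DecidableEq V]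
    (G : SimpleGraph V) (hG : G.Connected) (hn : 2 ≤ Fintype.card V)
    (d : ℕ) (hd : d = Finset.univ.sup (fun p : V × V => G.dist p.1 p.2))
    (c : ℕ) (hc : ((d + 1 : ℕ) : ℚ) * Fintype.card V / (Fintype.card V - 1) < (c : ℚ)) :
    ∀ t : V ⊕ V × Fin c, ¬ TStackable (cactus G c) t := by
  intro t ht
  have hdist : ∀ u v, G.dist u v ≤ d := fun u v =>
    hd ▸ le_sup (f := fun p : V × V => G.dist p.1 p.2) (mem_univ (u, v))
  have hle := card_sub_one_mul_le_of_tStackable hG hdist ht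
  set n := Fintype.card V
  have hn' : (2 : ℚ) ≤ n := by exact_mod_cast hn
  rw [div_lt_iff₀ (by linarith)] at hc
  have hle' : ((n - 1 : ℕ) : ℚ) * c ≤ n * (d + 1) := by exact_mod_cast hle
  rw [Nat.cast_sub (by omega), Nat.cast_one] at hle'
  push_cast at hc
  linarith
end

section
/- For every integer c ≥ 1, there exists a finite connected graph G with minimum degree at least c that is strongly non-stackable, i.e., G is not t-stackable for any vertex t of G. -/
/-!
A vertex that has moved is empty for good, so every vertex moves at most once, and it then carries
one cup plus everything it has received, across exactly that distance. When all cups end on `t`,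
every other vertex has moved, so a vertex `v ≠ t` receives fewer cups than its eccentricity.

The graph is a clique `K_{2k}` split into halves `A₀, A₁`, together with independent sets `B₀, B₁`
of size `k + 2`, each `B_j` completely joined to `A_j`. Clique vertices have eccentricity 2, the
others 3. Choose a half `j` with `t ∉ A_j ∪ B_{1-j}`. A vertex of `B_j` that received two cups would
move three steps, into `B_{1-j}`, whose vertices cannot receive three; so every `b ∈ B_j \ {t}`
receives at most one cup, and hence either moves onto, or is moved onto by, a neighbour in `A_j`.
Since vertices of `A_j` receive at most one cup, distinct `b` get distinct neighbours: an injection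
of the `k + 1` vertices of `B_j \ {t}` into the `k` vertices of `A_j`.
-/

namespace SimpleGraph

lemma dist_le_one_of_eq_or_adj {V : Type*} {G : SimpleGraph V} {u v : V}
    (h : u = v ∨ G.Adj u v) : G.dist u v ≤ 1 := by
  rcases h with rfl | h
  · simp
  · exact (dist_eq_one_iff_adj.mpr h).le

lemma Connected.dist_le_two_of_eq_or_adj {V : Type*} {G : SimpleGraph V} (hG : G.Connected)
    {x u v : V} (hu : x = u ∨ G.Adj x u) (hv : x = v ∨ G.Adj x v) : G.dist u v ≤ 2 := by
  have hux : G.dist u x ≤ 1 := dist_comm (G := G) ▸ dist_le_one_of_eq_or_adj hu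
  have := hG.dist_triangle (u := u) (v := x) (w := v)
  have := dist_le_one_of_eq_or_adj hv
  omega

end SimpleGraph

open SimpleGraph Finset

namespace CupStacking

section Records

variable {V : Type*} [Fintype V] [DecidableEq V] (G : SimpleGraph V)

/-- `send u = some v` records that the stack of `u` has been moved onto `v`; it consisted of
`dist u v` cups. -/
noncomputable def received (send : V → Option V) (v : V) : ℕ :=
  ∑ u, if send u = some v then G.dist u v else 0

structure IsMoveRecord (c : V → ℕ) (send : V → Option V) : Prop where
  unmoved : ∀ v, send v = none → c v = 1 + received G send v
  moved : ∀ v w, send v = some w → c v = 0 ∧ G.dist v w = 1 + received G send v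

structure IsStackRecord (t : V) (send : V → Option V) : Prop where
  exists_send : ∀ v, v ≠ t → ∃ w, send v = some w
  dist_eq : ∀ v w, send v = some w → G.dist v w = 1 + received G send v

variable {G}

lemma received_update {send : V → Option V} {x : V} (hx : send x = none) (y v : V) :
    received G (Function.update send x (some y)) v =
      received G send v + if y = v then G.dist x y else 0 := by
  unfold received
  rw [← add_sum_erase _ _ (mem_univ x), ← add_sum_erase _ _ (mem_univ x), hx,
    Function.update_self]
  have hrest : ∑ u ∈ univ.erase x,
      (if Function.update send x (some y) u = some v then G.dist u v else 0) =
      ∑ u ∈ univ.erase x, (if send u = some v then G.dist u v else 0) :=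
    sum_congr rfl fun u hu => by rw [Function.update_of_ne (ne_of_mem_erase hu)]
  rw [hrest]
  by_cases hyv : y = v
  · subst hyv; simp [add_comm]
  · simp [hyv]

lemma isMoveRecord_one : IsMoveRecord G (fun _ => 1) (fun _ => none) where
  unmoved v _ := by simp [received]
  moved v w h := by simp at h

lemma IsMoveRecord.cupStep {c c' : V → ℕ} {send : V → Option V} (h : IsMoveRecord G c send)
    (hstep : CupStep G c c') : ∃ send', IsMoveRecord G c' send' := by
  obtain ⟨x, y, hxy, hx, hy, hdist, rfl⟩ := hstep
  have hsx : send x = none := by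
    rcases hs : send x with _ | w
    · rfl
    · exact absurd (h.moved x w hs).1 hx.ne'
  refine ⟨Function.update send x (some y), ⟨fun v hv => ?_, fun v w hv => ?_⟩⟩
  · have hvx : v ≠ x := by rintro rfl; simp at hv
    rw [Function.update_of_ne hvx] at hv
    rw [received_update hsx, ← add_assoc, ← h.unmoved v hv]
    by_cases hvy : v = y
    · subst hvy; simp [hdist]
    · simp [Function.update_of_ne hvy, Function.update_of_ne hvx, Ne.symm hvy]
  · by_cases hvx : v = x
    · subst hvx
      obtain rfl : y = w := by simpa using hv
      rw [received_update hsx, if_neg (Ne.symm hxy), add_zero, ← h.unmoved v hsx]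
      simp [Function.update_of_ne hxy, hdist]
    · rw [Function.update_of_ne hvx] at hv
      obtain ⟨hcv, hd⟩ := h.moved v w hv
      have hvy : v ≠ y := by rintro rfl; omega
      rw [received_update hsx, if_neg (Ne.symm hvy)]
      simp [Function.update_of_ne hvy, Function.update_of_ne hvx, hcv, hd]

lemma exists_isMoveRecord {c : V → ℕ} (h : Relation.ReflTransGen (CupStep G) (fun _ => 1) c) :
    ∃ send, IsMoveRecord G c send := by
  induction h with
  | refl => exact ⟨_, isMoveRecord_one⟩
  | tail _ hstep ih => exact ih.elim fun _ hrec => hrec.cupStep hstep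

lemma exists_isStackRecord {t : V} (h : TStackable G t) :
    ∃ send, IsStackRecord G t send := by
  obtain ⟨c, hreach, hfinal⟩ := h
  obtain ⟨send, hrec⟩ := exists_isMoveRecord hreach
  refine ⟨send, fun v hv => ?_, fun v w hv => (hrec.moved v w hv).2⟩
  rcases hs : send v with _ | w
  · have := hrec.unmoved v hs
    rw [hfinal v hv] at this
    omega
  · exact ⟨w, rfl⟩

def Linked (send : V → Option V) (v w : V) : Prop :=
  send v = some w ∨ send w = some v

lemma dist_le_received {send : V → Option V} {u v : V} (h : send u = some v) :
    G.dist u v ≤ received G send v := by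
  have := single_le_sum (f := fun u => if send u = some v then G.dist u v else 0)
    (fun _ _ => Nat.zero_le _) (mem_univ u)
  rwa [if_pos h] at this

lemma dist_add_dist_le_received {send : V → Option V} {u u' v : V} (hu : u ≠ u')
    (h : send u = some v) (h' : send u' = some v) :
    G.dist u v + G.dist u' v ≤ received G send v := by
  have := sum_le_sum_of_subset (f := fun u => if send u = some v then G.dist u v else 0)
    (subset_univ {u, u'})
  rwa [sum_pair hu, if_pos h, if_pos h'] at this

lemma exists_send_dist_le_received {send : V → Option V} {v : V}
    (h : received G send v ≠ 0) : ∃ u, send u = some v ∧ G.dist u v ≤ received G send v := by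
  obtain ⟨u, -, hu⟩ := exists_ne_zero_of_sum_ne_zero h
  have hsend : send u = some v := by by_contra h'; simp [h'] at hu
  exact ⟨u, hsend, dist_le_received hsend⟩

namespace IsStackRecord

variable {t : V} {send : V → Option V} (hs : IsStackRecord G t send)
include hs

lemma one_le_dist {u v : V} (h : send u = some v) : 1 ≤ G.dist u v := by
  rw [hs.dist_eq u v h]; omega

lemma received_lt {v : V} {D : ℕ} (hv : v ≠ t) (hD : ∀ w, G.dist v w ≤ D) :
    received G send v < D := by
  obtain ⟨w, hw⟩ := hs.exists_send v hv
  have := hs.dist_eq v w hw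
  have := hD w
  omega

lemma exists_adj_linked {v : V} (hv : v ≠ t) (h : received G send v ≤ 1) :
    ∃ w, G.Adj v w ∧ Linked send v w := by
  rcases Nat.le_one_iff_eq_zero_or_eq_one.mp h with h0 | h1
  · obtain ⟨w, hw⟩ := hs.exists_send v hv
    refine ⟨w, dist_eq_one_iff_adj.mp ?_, .inl hw⟩
    rw [hs.dist_eq v w hw, h0]
  · obtain ⟨u, hu, hdist⟩ := exists_send_dist_le_received (h1 ▸ one_ne_zero)
    have := hs.one_le_dist hu
    refine ⟨u, (dist_eq_one_iff_adj.mp ?_).symm, .inr hu⟩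
    omega

lemma eq_of_linked {a b b' : V} (ha : received G send a ≤ 1) (hb : G.Adj a b)
    (hb' : G.Adj a b') (h : Linked send b a) (h' : Linked send b' a) : b = b' := by
  have hmoved_adj : ∀ {u c}, send u = some a → G.Adj a c → send a = some c → False :=
    fun {u c} hu hc hac => by
      have := hs.dist_eq a c hac
      have := hs.one_le_dist hu
      have := dist_le_received (G := G) hu
      rw [dist_eq_one_iff_adj.mpr hc] at *
      omega
  rcases h with h | h <;> rcases h' with h' | h'
  · by_contra hne
    have := dist_add_dist_le_received (G := G) hne h h'
    have := hs.one_le_dist h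
    have := hs.one_le_dist h'
    omega
  · exact (hmoved_adj h hb' h').elim
  · exact (hmoved_adj h' hb h).elim
  · simpa using h.symm.trans h'

end IsStackRecord

end Records

/-- Vertices `inl (j, i)` form a clique of size `2k`; for each half `j`, the `k + 2` vertices
`inr (j, i)` are independent and joined to the `k` clique vertices `inl (j, ·)`. -/
abbrev Vertex (k : ℕ) : Type := (Fin 2 × Fin k) ⊕ (Fin 2 × Fin (k + 2))

def side {k : ℕ} : Vertex k → Fin 2 := Sum.elim Prod.fst Prod.fst

def graph (k : ℕ) : SimpleGraph (Vertex k) where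
  Adj
    | .inl a, .inl b => a ≠ b
    | .inl a, .inr b => a.1 = b.1
    | .inr a, .inl b => b.1 = a.1
    | .inr _, .inr _ => False
  symm := ⟨by rintro (a | a) (b | b) h <;> first | exact Ne.symm h | exact h⟩
  loopless := ⟨by rintro (a | a) h <;> first | exact h rfl | exact h⟩

variable {k : ℕ}

@[simp] lemma graph_adj_inl_inl {a b : Fin 2 × Fin k} :
    (graph k).Adj (.inl a) (.inl b) ↔ a ≠ b := Iff.rfl

@[simp] lemma graph_adj_inl_inr {a : Fin 2 × Fin k} {b : Fin 2 × Fin (k + 2)} :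
    (graph k).Adj (.inl a) (.inr b) ↔ a.1 = b.1 := Iff.rfl

@[simp] lemma graph_adj_inr_inl {a : Fin 2 × Fin (k + 2)} {b : Fin 2 × Fin k} :
    (graph k).Adj (.inr a) (.inl b) ↔ b.1 = a.1 := Iff.rfl

@[simp] lemma graph_adj_inr_inr {a b : Fin 2 × Fin (k + 2)} :
    ¬ (graph k).Adj (.inr a) (.inr b) := id

lemma le_ncard_neighborSet (v : Vertex k) : k ≤ ((graph k).neighborSet v).ncard := by
  have hk : k = (Set.univ : Set (Fin k)).ncard := by simp
  rcases v with ⟨j, i⟩ | ⟨j, i⟩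
  · refine hk.le.trans <| Set.ncard_le_ncard_of_injOn (fun a => .inr (j, Fin.castLE (by omega) a))
      (fun a _ => by simp) (fun a _ b _ hab => ?_)
    simpa [Fin.ext_iff] using hab
  · refine hk.le.trans <| Set.ncard_le_ncard_of_injOn (fun a => .inl (j, a))
      (fun a _ => by simp) (fun a _ b _ hab => ?_)
    simpa using hab

def hub (hk : 0 < k) (j : Fin 2) : Vertex k := .inl (j, ⟨0, hk⟩)

section Distances

variable (hk : 0 < k)
include hk

lemma hub_eq_or_adj (v : Vertex k) : hub hk (side v) = v ∨ (graph k).Adj (hub hk (side v)) v := by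
  rcases v with ⟨j, i⟩ | ⟨j, i⟩
  · by_cases h : (j, ⟨0, hk⟩) = (j, i)
    · exact .inl (congrArg Sum.inl h)
    · exact .inr h
  · exact .inr rfl

lemma graph_connected : (graph k).Connected := by
  have hreach (v : Vertex k) : (graph k).Reachable v (hub hk 0) := by
    have hhub : (graph k).Reachable (hub hk (side v)) (hub hk 0) := by
      by_cases h : side v = 0
      · rw [h]
      · exact Adj.reachable (by simpa [hub] using h)
    rcases hub_eq_or_adj hk v with h | h
    · exact h ▸ hhub
    · exact h.reachable.symm.trans hhub
  exact ⟨fun u v => (hreach u).trans (hreach v).symm⟩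

lemma dist_inl_le_two (a : Fin 2 × Fin k) (v : Vertex k) : (graph k).dist (.inl a) v ≤ 2 := by
  refine (graph_connected hk).dist_le_two_of_eq_or_adj ?_ (hub_eq_or_adj hk v)
  by_cases h : (side v, ⟨0, hk⟩) = a
  · exact .inl (congrArg Sum.inl h)
  · exact .inr h

lemma dist_le_three (u v : Vertex k) : (graph k).dist u v ≤ 3 := by
  have h1 : (graph k).dist u (hub hk (side u)) ≤ 1 :=
    dist_comm (G := graph k) ▸ dist_le_one_of_eq_or_adj (hub_eq_or_adj hk u)
  have h2 : (graph k).dist (hub hk (side u)) v ≤ 2 := dist_inl_le_two hk _ v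
  have := (graph_connected hk).dist_triangle (u := u) (v := hub hk (side u)) (w := v)
  omega

lemma dist_inr_le_two {j : Fin 2} {i : Fin (k + 2)} {w : Vertex k}
    (hw : w.isLeft ∨ side w = j) : (graph k).dist (.inr (j, i)) w ≤ 2 := by
  rcases w with a | ⟨j', i'⟩
  · rw [dist_comm]; exact dist_inl_le_two hk a _
  · obtain rfl : j' = j := by simpa [side] using hw
    exact (graph_connected hk).dist_le_two_of_eq_or_adj (hub_eq_or_adj hk (.inr (j', i)))
      (hub_eq_or_adj hk (.inr (j', i')))

end Distances

lemma card_le_card_subtype_ne_add_one {α β : Type*} [Fintype α] [DecidableEq β] {f : α → β}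
    (hf : Function.Injective f) (b : β) : Fintype.card α ≤ Fintype.card {a // f a ≠ b} + 1 := by
  have : Fintype.card {a // f a = b} ≤ 1 :=
    Fintype.card_le_one_iff_subsingleton.mpr ⟨fun x y => Subtype.ext (hf (x.2.trans y.2.symm))⟩
  rw [Fintype.card_subtype_compl]
  omega

section Stacking

variable (hk : 0 < k) {t : Vertex k} {send : Vertex k → Option (Vertex k)}
  (hs : IsStackRecord (graph k) t send)
include hk hs

lemma received_le_two {v : Vertex k} (hv : v ≠ t) : received (graph k) send v ≤ 2 := by
  have := hs.received_lt hv (dist_le_three hk v)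
  omega

lemma received_inl_le_one {a : Fin 2 × Fin k} (ha : .inl a ≠ t) :
    received (graph k) send (.inl a) ≤ 1 := by
  have := hs.received_lt ha (dist_inl_le_two hk a)
  omega

lemma received_inr_le_one {j : Fin 2} {i : Fin (k + 2)} (hi : .inr (j, i) ≠ t)
    (ht : t.isLeft ∨ side t = j) : received (graph k) send (.inr (j, i)) ≤ 1 := by
  by_contra h
  obtain ⟨w, hw⟩ := hs.exists_send _ hi
  have hd := hs.dist_eq _ _ hw
  have hfar : ¬ (w.isLeft ∨ side w = j) := fun hw' => by
    have := dist_inr_le_two hk (i := i) hw'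
    omega
  have hwt : w ≠ t := by rintro rfl; exact hfar ht
  have := dist_le_received (G := graph k) hw
  have := received_le_two hk hs hwt
  omega

lemma exists_linked_inl {j : Fin 2} {i : Fin (k + 2)} (hi : .inr (j, i) ≠ t)
    (ht : t.isLeft ∨ side t = j) : ∃ a : Fin k, Linked send (.inr (j, i)) (.inl (j, a)) := by
  obtain ⟨w, hadj, hl⟩ := hs.exists_adj_linked hi (received_inr_le_one hk hs hi ht)
  rcases w with ⟨j', a⟩ | b
  · obtain rfl : j' = j := by simpa using hadj
    exact ⟨a, hl⟩
  · simp at hadj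

end Stacking

lemma exists_side_avoiding (t : Vertex k) :
    ∃ j : Fin 2, (∀ a, .inl (j, a) ≠ t) ∧ (t.isLeft ∨ side t = j) := by
  rcases t with ⟨j, i⟩ | ⟨j, i⟩
  · refine ⟨j + 1, fun a => ?_, by simp⟩
    have : j + 1 ≠ j := by fin_cases j <;> decide
    simp [this]
  · exact ⟨j, by simp, by simp [side]⟩

theorem not_tStackable (hk : 0 < k) (t : Vertex k) : ¬ TStackable (graph k) t := by
  intro h
  obtain ⟨send, hs⟩ := exists_isStackRecord h
  obtain ⟨j, hA, hB⟩ := exists_side_avoiding t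
  have hlinked (i : {i : Fin (k + 2) // .inr (j, i) ≠ t}) :
      ∃ a : Fin k, Linked send (.inr (j, i.1)) (.inl (j, a)) :=
    exists_linked_inl hk hs i.2 hB
  choose f hf using hlinked
  have hinj : Function.Injective f := fun i i' hii' => by
    have := hs.eq_of_linked (received_inl_le_one hk hs (hA (f i))) (by simp) (by simp) (hf i)
      (hii' ▸ hf i')
    exact Subtype.ext (by simpa using this)
  have hle : Fintype.card {i : Fin (k + 2) // .inr (j, i) ≠ t} ≤ k := by
    simpa using Fintype.card_le_of_injective f hinj
  have hge : k + 2 ≤ Fintype.card {i : Fin (k + 2) // .inr (j, i) ≠ t} + 1 := by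
    simpa using card_le_card_subtype_ne_add_one
      (Sum.inr_injective.comp (Prod.mk_right_injective j)) t
  omega

end CupStacking

theorem exists_strongly_non_stackable_min_degree (c : ℕ) (hc : 1 ≤ c) :
    ∃ (V : Type) (_ : Fintype V) (_ : DecidableEq V) (G : SimpleGraph V),
      G.Connected ∧ (∀ v : V, c ≤ (G.neighborSet v).ncard) ∧
      ∀ t : V, ¬ TStackable G t :=
  ⟨CupStacking.Vertex c, inferInstance, inferInstance, CupStacking.graph c,
    CupStacking.graph_connected hc, CupStacking.le_ncard_neighborSet,
    CupStacking.not_tStackable hc⟩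
end

section
/- For every integer c ≥ 1, there exists a finite c-connected graph G that is strongly non-stackable, i.e., not t-stackable for any vertex t. Such a graph can be obtained by taking K_{c,c} and gluing one copy of K_{c,5c} (identified along its partition class of size c) to each of the two partition classes of K_{c,c}. -/
/-- `G` is `k`-connected: it has more than `k` vertices and removing any set of
fewer than `k` vertices leaves a connected graph. -/
def IsKConnected {V : Type*} [Fintype V] (G : SimpleGraph V) (k : ℕ) : Prop :=
  k < Fintype.card V ∧ ∀ S : Set V, S.ncard < k → (G.induce (Sᶜ : Set V)).Connected

/-- Vertex set of the glued graph: the two classes `L, R` of `K_{c,c}` together with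
the large classes `X, Y` of the two glued copies of `K_{c,5c}`. -/
abbrev GluedV (c : ℕ) := (Fin c ⊕ Fin c) ⊕ (Fin (5 * c) ⊕ Fin (5 * c))

/-- One direction of adjacency in the glued graph: `L`–`R` (the `K_{c,c}`),
`L`–`X` (first copy of `K_{c,5c}`), `R`–`Y` (second copy of `K_{c,5c}`). -/
def gluedRel (c : ℕ) (a b : GluedV c) : Prop :=
  (∃ i j, a = Sum.inl (Sum.inl i) ∧ b = Sum.inl (Sum.inr j)) ∨
  (∃ i x, a = Sum.inl (Sum.inl i) ∧ b = Sum.inr (Sum.inl x)) ∨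
  (∃ j y, a = Sum.inl (Sum.inr j) ∧ b = Sum.inr (Sum.inr y))

/-- The graph obtained from `K_{c,c}` by gluing a copy of `K_{c,5c}` along its
partition class of size `c` to each of the two partition classes of `K_{c,c}`. -/
def gluedGraph (c : ℕ) : SimpleGraph (GluedV c) :=
  SimpleGraph.fromRel (gluedRel c)

namespace NonStack

/-! ### The merging-forest invariant -/

variable {V : Type*} [Fintype V] [DecidableEq V]

/-- The invariant: there are assignments `s` (recorded stack sizes of emptied
vertices) and `f` (where each emptied vertex sent its stack) such that each occupied
vertex holds one cup plus the stacks of the emptied vertices that were sent to it,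
each emptied vertex's recorded stack likewise consists of one cup plus the incoming
stacks, and each emptied vertex moved its stack a distance equal to its size. -/
def Inv (G : SimpleGraph V) (c : V → ℕ) : Prop :=
  ∃ (s : V → ℕ) (f : V → V),
    (∀ v, c v ≠ 0 → c v = 1 + ∑ u ∈ Finset.univ.filter (fun u => c u = 0 ∧ f u = v), s u) ∧
    (∀ v, c v = 0 →
      (s v = 1 + ∑ u ∈ Finset.univ.filter (fun u => c u = 0 ∧ f u = v), s u) ∧
      G.dist v (f v) = s v)

lemma inv_init (G : SimpleGraph V) : Inv G (fun _ => 1) := by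
  refine ⟨fun _ => 0, id, ?_, ?_⟩
  · intro v _
    have h : (Finset.univ.filter (fun u : V => (1:ℕ) = 0 ∧ id u = v)) = ∅ := by
      apply Finset.filter_false_of_mem
      intro u _ h
      exact one_ne_zero h.1
    rw [h]
    simp
  · intro v hv
    exact absurd hv one_ne_zero

lemma inv_step {G : SimpleGraph V} {c₁ c₂ : V → ℕ} (h : CupStep G c₁ c₂) :
    Inv G c₁ → Inv G c₂ := by
  rintro ⟨s, f, hocc, hemp⟩
  obtain ⟨x, y, hxy, hx, hy, hd, rfl⟩ := h
  set c₂ := Function.update (Function.update c₁ x 0) y (c₁ y + c₁ x) with hc₂def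
  have hc2x : c₂ x = 0 := by
    rw [hc₂def, Function.update_of_ne hxy, Function.update_self]
  have hc2y : c₂ y = c₁ y + c₁ x := by rw [hc₂def, Function.update_self]
  have hc2 : ∀ u, u ≠ x → u ≠ y → c₂ u = c₁ u := by
    intro u hux huy
    rw [hc₂def, Function.update_of_ne huy, Function.update_of_ne hux]
  have hiff : ∀ u, u ≠ x → (c₂ u = 0 ↔ c₁ u = 0) := by
    intro u hux
    by_cases huy : u = y
    · subst huy; rw [hc2y]; omega
    · rw [hc2 u hux huy]
  have hset : ∀ v, v ≠ y →
      Finset.univ.filter (fun u => c₂ u = 0 ∧ Function.update f x y u = v)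
      = Finset.univ.filter (fun u => c₁ u = 0 ∧ f u = v) := by
    intro v hvy
    ext u
    simp only [Finset.mem_filter, Finset.mem_univ, true_and]
    by_cases hux : u = x
    · subst hux
      rw [Function.update_self]
      constructor
      · rintro ⟨_, rfl⟩; exact absurd rfl hvy
      · rintro ⟨h0, _⟩; omega
    · rw [Function.update_of_ne hux, hiff u hux]
  have hsum : ∀ v, (∑ u ∈ Finset.univ.filter (fun u => c₁ u = 0 ∧ f u = v),
      Function.update s x (c₁ x) u)
      = ∑ u ∈ Finset.univ.filter (fun u => c₁ u = 0 ∧ f u = v), s u := by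
    intro v
    apply Finset.sum_congr rfl
    intro u hu
    simp only [Finset.mem_filter] at hu
    have hux : u ≠ x := by rintro rfl; omega
    rw [Function.update_of_ne hux]
  have hxnot : x ∉ Finset.univ.filter (fun u => c₁ u = 0 ∧ f u = y) := by
    rw [Finset.mem_filter]
    rintro ⟨-, h0, -⟩
    omega
  have hsety : Finset.univ.filter (fun u => c₂ u = 0 ∧ Function.update f x y u = y)
      = insert x (Finset.univ.filter (fun u => c₁ u = 0 ∧ f u = y)) := by
    ext u
    simp only [Finset.mem_insert, Finset.mem_filter, Finset.mem_univ, true_and]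
    by_cases hux : u = x
    · subst hux
      simp [hc2x, Function.update_self]
    · rw [Function.update_of_ne hux, hiff u hux]
      tauto
  refine ⟨Function.update s x (c₁ x), Function.update f x y, ?_, ?_⟩
  · intro v hv
    have hvx : v ≠ x := by rintro rfl; exact hv hc2x
    by_cases hvy : v = y
    · subst hvy
      rw [hsety, Finset.sum_insert hxnot, Function.update_self, hsum, hc2y]
      have := hocc v (by omega)
      omega
    · rw [hset v hvy, hsum, hc2 v hvx hvy]
      exact hocc v (by rwa [hc2 v hvx hvy] at hv)
  · intro v hv
    by_cases hvx : v = x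
    · subst hvx
      rw [hset v hxy, hsum]
      constructor
      · rw [Function.update_self]
        exact hocc v (by omega)
      · rw [Function.update_self, Function.update_self]
        exact hd
    · have h1 : c₁ v = 0 := (hiff v hvx).mp hv
      have hvy : v ≠ y := by rintro rfl; omega
      rw [hset v hvy, hsum, Function.update_of_ne hvx, Function.update_of_ne hvx]
      exact hemp v h1

lemma inv_reach {G : SimpleGraph V} {c : V → ℕ}
    (h : Relation.ReflTransGen (CupStep G) (fun _ => 1) c) : Inv G c := by
  induction h with
  | refl => exact inv_init G
  | tail _ hstep ih => exact inv_step hstep ih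

lemma step_sum {G : SimpleGraph V} {c₁ c₂ : V → ℕ} (h : CupStep G c₁ c₂) :
    ∑ v, c₂ v = ∑ v, c₁ v := by
  obtain ⟨x, y, hxy, hx, hy, hd, rfl⟩ := h
  rw [Finset.sum_update_of_mem (Finset.mem_univ y)]
  have hxmem : x ∈ Finset.univ \ {y} := by simp [hxy]
  rw [Finset.sum_update_of_mem hxmem]
  have h1 : ∑ v, c₁ v = c₁ y + ∑ v ∈ Finset.univ \ {y}, c₁ v := by
    rw [Finset.sum_eq_add_sum_sdiff_singleton_of_mem (Finset.mem_univ y)]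
  have h2 : ∑ v ∈ Finset.univ \ {y}, c₁ v
      = c₁ x + ∑ v ∈ (Finset.univ \ {y}) \ {x}, c₁ v := by
    rw [Finset.sum_eq_add_sum_sdiff_singleton_of_mem hxmem]
  omega

lemma reach_sum {G : SimpleGraph V} {c : V → ℕ}
    (h : Relation.ReflTransGen (CupStep G) (fun _ => 1) c) :
    ∑ v, c v = Fintype.card V := by
  induction h with
  | refl => simp
  | tail _ hstep ih => rw [step_sum hstep, ih]

/-! ### The generic counting argument -/

lemma no_big {V : Type*} [Fintype V] [DecidableEq V] (G : SimpleGraph V)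
    {α β : Type*} [Fintype α] [Fintype β]
    (big : α → V) (small : β → V) (hbig : Function.Injective big)
    (t : V) (s : V → ℕ) (f : V → V)
    (hs : ∀ v, v ≠ t → s v = 1 + ∑ u ∈ Finset.univ.filter (fun u => u ≠ t ∧ f u = v), s u)
    (hdist : ∀ v, v ≠ t → G.dist v (f v) = s v)
    (hd3 : ∀ v, v ≠ t → s v ≤ 3)
    (hnbrB : ∀ (a : α) (u : V), G.Adj (big a) u → ∃ b, u = small b)
    (hsmallt : ∀ b, small b ≠ t)
    (hdB : ∀ a, G.dist (big a) t ≤ 2)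
    (hdS : ∀ b, G.dist (small b) t ≤ 2) :
    Fintype.card α ≤ Fintype.card β + 1 := by
  classical
  have hpos : ∀ v, v ≠ t → 1 ≤ s v := by
    intro v hv; rw [hs v hv]; omega
  have hchild : ∀ v, v ≠ t → ∀ u, u ≠ t → f u = v → s u + 1 ≤ s v := by
    intro v hv u hu hf
    have hmem : u ∈ Finset.univ.filter (fun w => w ≠ t ∧ f w = v) := by
      simp [hu, hf]
    have := Finset.single_le_sum (f := s) (fun i _ => Nat.zero_le _) hmem
    rw [hs v hv]; omega
  have hchild2 : ∀ v, v ≠ t → ∀ u u', u ≠ t → u' ≠ t → u ≠ u' → f u = v → f u' = v →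
      s u + s u' + 1 ≤ s v := by
    intro v hv u u' hu hu' huu' hf hf'
    have hsub : ({u, u'} : Finset V) ⊆ Finset.univ.filter (fun w => w ≠ t ∧ f w = v) := by
      intro w hw
      rcases Finset.mem_insert.mp hw with rfl | hw
      · simp [hu, hf]
      · rw [Finset.mem_singleton] at hw; subst hw; simp [hu', hf']
    have h2 := Finset.sum_le_sum_of_subset (f := s) hsub
    rw [Finset.sum_pair huu'] at h2
    rw [hs v hv]; omega
  have hsle2 : ∀ v, v ≠ t → G.dist v t ≤ 2 → s v ≤ 2 := by
    intro v hv hdvt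
    by_contra h
    have h3 : s v = 3 := by have := hd3 v hv; omega
    by_cases hf : f v = t
    · have := hdist v hv
      rw [hf] at this
      omega
    · have := hchild (f v) hf v hv rfl
      have := hd3 (f v) hf
      omega
  have key : ∀ a : α, big a ≠ t → ∃ b : β,
      (s (big a) = 1 ∧ f (big a) = small b) ∨
      (s (small b) = 1 ∧ f (small b) = big a ∧ 2 ≤ s (big a)) := by
    intro a ha
    have h2 := hsle2 (big a) ha (hdB a)
    have h1 := hpos (big a) ha
    rcases (by omega : s (big a) = 1 ∨ s (big a) = 2) with hsa | hsa
    · have hone : G.dist (big a) (f (big a)) = 1 := by rw [hdist (big a) ha, hsa]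
      have hadj := SimpleGraph.dist_eq_one_iff_adj.mp hone
      obtain ⟨b, hb⟩ := hnbrB a _ hadj
      exact ⟨b, Or.inl ⟨hsa, hb⟩⟩
    · have hsum : ∑ u ∈ Finset.univ.filter (fun w => w ≠ t ∧ f w = big a), s u = 1 := by
        have := hs (big a) ha; omega
      obtain ⟨u, hu, hune⟩ := Finset.exists_ne_zero_of_sum_ne_zero
        (by omega : (∑ u ∈ Finset.univ.filter (fun w => w ≠ t ∧ f w = big a), s u) ≠ 0)
      rw [Finset.mem_filter] at hu
      obtain ⟨-, hut, hfu⟩ := hu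
      have hmem2 : u ∈ Finset.univ.filter (fun w => w ≠ t ∧ f w = big a) :=
        Finset.mem_filter.mpr ⟨Finset.mem_univ u, hut, hfu⟩
      have hle : s u ≤ 1 := by
        have := Finset.single_le_sum (f := s) (fun i _ => Nat.zero_le _) hmem2
        omega
      have hsu : s u = 1 := le_antisymm hle (hpos u hut)
      have hone : G.dist u (big a) = 1 := by
        rw [← hfu, hdist u hut]; exact hsu
      have hadj := (SimpleGraph.dist_eq_one_iff_adj.mp hone).symm
      obtain ⟨b, hb⟩ := hnbrB a _ hadj
      exact ⟨b, Or.inr ⟨hb ▸ hsu, hb ▸ hfu, by omega⟩⟩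
  have hsmall2 : ∀ b, s (small b) ≤ 2 := fun b => hsle2 _ (hsmallt b) (hdS b)
  have inj : ∀ (a a' : α) (b : β), big a ≠ t → big a' ≠ t →
      ((s (big a) = 1 ∧ f (big a) = small b) ∨
        (s (small b) = 1 ∧ f (small b) = big a ∧ 2 ≤ s (big a))) →
      ((s (big a') = 1 ∧ f (big a') = small b) ∨
        (s (small b) = 1 ∧ f (small b) = big a' ∧ 2 ≤ s (big a'))) →
      a = a' := by
    intro a a' b ha ha' h h'
    by_contra hne
    have hbig_ne : big a ≠ big a' := fun e => hne (hbig e)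
    rcases h with ⟨h1, h2⟩ | ⟨h1, h2, h3⟩ <;> rcases h' with ⟨h1', h2'⟩ | ⟨h1', h2', h3'⟩
    · have hc2 := hchild2 (small b) (hsmallt b) (big a) (big a') ha ha' hbig_ne h2 h2'
      have := hsmall2 b
      omega
    · have := hchild (small b) (hsmallt b) (big a) ha h2
      omega
    · have := hchild (small b) (hsmallt b) (big a') ha' h2'
      omega
    · exact absurd (hbig (h2.symm.trans h2')) hne
  let g : {a : α // big a ≠ t} → β := fun a => Classical.choose (key a.1 a.2)
  have hg : Function.Injective g := by
    intro a a' he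
    have h1 := Classical.choose_spec (key a.1 a.2)
    have h2 := Classical.choose_spec (key a'.1 a'.2)
    have h1' : (s (big a.1) = 1 ∧ f (big a.1) = small (g a')) ∨
        (s (small (g a')) = 1 ∧ f (small (g a')) = big a.1 ∧ 2 ≤ s (big a.1)) := by
      rw [← he]; exact h1
    exact Subtype.ext (inj a.1 a'.1 (g a') a.2 a'.2 h1' h2)
  have hcard1 : Fintype.card {a : α // big a ≠ t} ≤ Fintype.card β :=
    Fintype.card_le_of_injective g hg
  have hcard2 : Fintype.card {a : α // big a = t} ≤ 1 := by
    rw [Fintype.card_le_one_iff]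
    rintro ⟨a, ha⟩ ⟨a', ha'⟩
    exact Subtype.ext (hbig (ha.trans ha'.symm))
  have hcompl := Fintype.card_subtype_compl (fun a : α => big a = t)
  have hne : Fintype.card {a : α // big a ≠ t} = Fintype.card {a : α // ¬ big a = t} := rfl
  omega

/-! ### Structure of the glued graph -/

variable {n : ℕ}

abbrev vL (i : Fin n) : GluedV n := Sum.inl (Sum.inl i)
abbrev vR (j : Fin n) : GluedV n := Sum.inl (Sum.inr j)
abbrev vX (a : Fin (5 * n)) : GluedV n := Sum.inr (Sum.inl a)
abbrev vY (b : Fin (5 * n)) : GluedV n := Sum.inr (Sum.inr b)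

lemma adj_LR (i j : Fin n) : (gluedGraph n).Adj (vL i) (vR j) := by
  rw [gluedGraph, SimpleGraph.fromRel_adj]
  exact ⟨by simp, Or.inl (Or.inl ⟨i, j, rfl, rfl⟩)⟩

lemma adj_LX (i : Fin n) (a : Fin (5 * n)) : (gluedGraph n).Adj (vL i) (vX a) := by
  rw [gluedGraph, SimpleGraph.fromRel_adj]
  exact ⟨by simp, Or.inl (Or.inr (Or.inl ⟨i, a, rfl, rfl⟩))⟩

lemma adj_RY (j : Fin n) (b : Fin (5 * n)) : (gluedGraph n).Adj (vR j) (vY b) := by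
  rw [gluedGraph, SimpleGraph.fromRel_adj]
  exact ⟨by simp, Or.inl (Or.inr (Or.inr ⟨j, b, rfl, rfl⟩))⟩

lemma adj_X {a : Fin (5 * n)} {u : GluedV n} (h : (gluedGraph n).Adj (vX a) u) :
    ∃ i : Fin n, u = vL i := by
  rw [gluedGraph, SimpleGraph.fromRel_adj] at h
  obtain ⟨-, h | h⟩ := h <;>
    rcases h with ⟨i, j, h1, h2⟩ | ⟨i, x, h1, h2⟩ | ⟨j, y, h1, h2⟩ <;>
    first
      | exact ⟨i, h1⟩
      | exact absurd h1 (by simp)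
      | exact absurd h2 (by simp)

lemma adj_Y {b : Fin (5 * n)} {u : GluedV n} (h : (gluedGraph n).Adj (vY b) u) :
    ∃ j : Fin n, u = vR j := by
  rw [gluedGraph, SimpleGraph.fromRel_adj] at h
  obtain ⟨-, h | h⟩ := h <;>
    rcases h with ⟨i, j, h1, h2⟩ | ⟨i, x, h1, h2⟩ | ⟨j, y, h1, h2⟩ <;>
    first
      | exact ⟨j, h1⟩
      | exact absurd h1 (by simp)
      | exact absurd h2 (by simp)

lemma dist_le_one {u v : GluedV n} (h : (gluedGraph n).Adj u v) :
    (gluedGraph n).dist u v ≤ 1 := by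
  simpa using SimpleGraph.dist_le (SimpleGraph.Walk.cons h SimpleGraph.Walk.nil)

lemma dist_le_two {u v w : GluedV n} (h1 : (gluedGraph n).Adj u w)
    (h2 : (gluedGraph n).Adj w v) : (gluedGraph n).dist u v ≤ 2 := by
  simpa using SimpleGraph.dist_le
    (SimpleGraph.Walk.cons h1 (SimpleGraph.Walk.cons h2 SimpleGraph.Walk.nil))

lemma dist_le_three' {u v w w' : GluedV n} (h1 : (gluedGraph n).Adj u w)
    (h2 : (gluedGraph n).Adj w w') (h3 : (gluedGraph n).Adj w' v) :
    (gluedGraph n).dist u v ≤ 3 := by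
  simpa using SimpleGraph.dist_le
    (SimpleGraph.Walk.cons h1 (SimpleGraph.Walk.cons h2
      (SimpleGraph.Walk.cons h3 SimpleGraph.Walk.nil)))

lemma dist_le_three (hn : 1 ≤ n) (u v : GluedV n) : (gluedGraph n).dist u v ≤ 3 := by
  have i0 : Fin n := ⟨0, hn⟩
  obtain (i | j) | (a | b) := u <;> obtain (i' | j') | (a' | b') := v
  · exact le_trans (dist_le_two (adj_LR i i0) (adj_LR i' i0).symm) (by norm_num)
  · exact le_trans (dist_le_one (adj_LR i j')) (by norm_num)
  · exact le_trans (dist_le_one (adj_LX i a')) (by norm_num)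
  · exact le_trans (dist_le_two (adj_LR i i0) (adj_RY i0 b')) (by norm_num)
  · exact le_trans (dist_le_one (adj_LR i' j).symm) (by norm_num)
  · exact le_trans (dist_le_two (adj_LR i0 j).symm (adj_LR i0 j')) (by norm_num)
  · exact le_trans (dist_le_two (adj_LR i0 j).symm (adj_LX i0 a')) (by norm_num)
  · exact le_trans (dist_le_one (adj_RY j b')) (by norm_num)
  · exact le_trans (dist_le_one (adj_LX i' a).symm) (by norm_num)
  · exact le_trans (dist_le_two (adj_LX i0 a).symm (adj_LR i0 j')) (by norm_num)
  · exact le_trans (dist_le_two (adj_LX i0 a).symm (adj_LX i0 a')) (by norm_num)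
  · exact dist_le_three' (adj_LX i0 a).symm (adj_LR i0 i0) (adj_RY i0 b')
  · exact le_trans (dist_le_two (adj_RY i0 b).symm (adj_LR i' i0).symm) (by norm_num)
  · exact le_trans (dist_le_one (adj_RY j' b).symm) (by norm_num)
  · exact dist_le_three' (adj_RY i0 b).symm (adj_LR i0 i0).symm (adj_LX i0 a')
  · exact le_trans (dist_le_two (adj_RY i0 b).symm (adj_RY i0 b')) (by norm_num)

/-! ### Non-stackability -/

lemma glued_nonstack (hn : 1 ≤ n) (t : GluedV n) : ¬ TStackable (gluedGraph n) t := by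
  rintro ⟨cfg, hreach, hfin⟩
  obtain ⟨s, f, hocc, hemp⟩ := inv_reach hreach
  have hsumall := reach_sum hreach
  have hcardpos : 0 < Fintype.card (GluedV n) := by
    simp only [Fintype.card_sum, Fintype.card_fin]
    omega
  have hct : cfg t ≠ 0 := by
    intro h0
    have hz : ∑ v, cfg v = 0 := Finset.sum_eq_zero (fun v _ => by
      by_cases hv : v = t
      · rw [hv]; exact h0
      · exact hfin v hv)
    omega
  have hsetsame : ∀ v, (Finset.univ.filter (fun u => cfg u = 0 ∧ f u = v))
      = Finset.univ.filter (fun u => u ≠ t ∧ f u = v) := by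
    intro v
    ext u
    simp only [Finset.mem_filter, Finset.mem_univ, true_and]
    constructor
    · rintro ⟨h0, hf⟩
      exact ⟨fun e => hct (e ▸ h0), hf⟩
    · rintro ⟨hut, hf⟩
      exact ⟨hfin u hut, hf⟩
  have hs : ∀ v, v ≠ t →
      s v = 1 + ∑ u ∈ Finset.univ.filter (fun u => u ≠ t ∧ f u = v), s u := by
    intro v hv
    have := (hemp v (hfin v hv)).1
    rwa [hsetsame v] at this
  have hdist : ∀ v, v ≠ t → (gluedGraph n).dist v (f v) = s v :=
    fun v hv => (hemp v (hfin v hv)).2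
  have hd3 : ∀ v, v ≠ t → s v ≤ 3 := by
    intro v hv
    rw [← hdist v hv]
    exact dist_le_three hn v (f v)
  have j0 : Fin n := ⟨0, hn⟩
  obtain (i1 | j1) | (a1 | b1) := t
  · -- t in L : count Y against R
    have := no_big (gluedGraph n) vY vR (fun a b e => by simpa using e) (vL i1) s f
      hs hdist hd3
      (fun a u h => adj_Y h)
      (fun j => by simp)
      (fun b => dist_le_two (adj_RY j0 b).symm (adj_LR i1 j0).symm)
      (fun j => le_trans (dist_le_one (adj_LR i1 j).symm) (by norm_num))
    rw [Fintype.card_fin, Fintype.card_fin] at this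
    omega
  · -- t in R : count X against L
    have := no_big (gluedGraph n) vX vL (fun a b e => by simpa using e) (vR j1) s f
      hs hdist hd3
      (fun a u h => adj_X h)
      (fun i => by simp)
      (fun a => dist_le_two (adj_LX j0 a).symm (adj_LR j0 j1))
      (fun i => le_trans (dist_le_one (adj_LR i j1)) (by norm_num))
    rw [Fintype.card_fin, Fintype.card_fin] at this
    omega
  · -- t in X : count X against L
    have := no_big (gluedGraph n) vX vL (fun a b e => by simpa using e) (vX a1) s f
      hs hdist hd3
      (fun a u h => adj_X h)
      (fun i => by simp)
      (fun a => dist_le_two (adj_LX j0 a).symm (adj_LX j0 a1))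
      (fun i => le_trans (dist_le_one (adj_LX i a1)) (by norm_num))
    rw [Fintype.card_fin, Fintype.card_fin] at this
    omega
  · -- t in Y : count Y against R
    have := no_big (gluedGraph n) vY vR (fun a b e => by simpa using e) (vY b1) s f
      hs hdist hd3
      (fun a u h => adj_Y h)
      (fun j => by simp)
      (fun b => dist_le_two (adj_RY j0 b).symm (adj_RY j0 b1))
      (fun j => le_trans (dist_le_one (adj_RY j b1)) (by norm_num))
    rw [Fintype.card_fin, Fintype.card_fin] at this
    omega

/-! ### c-connectedness -/

lemma exists_notin_L (hn : 1 ≤ n) {S : Set (GluedV n)} (hS : S.ncard < n) :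
    ∃ i : Fin n, vL i ∉ S := by
  by_contra h
  push_neg at h
  have hle := Set.ncard_le_ncard_of_injOn (s := (Set.univ : Set (Fin n)))
    (fun i : Fin n => vL i) (fun a _ => h a)
    (fun a _ b _ e => by simpa using e) (S.toFinite)
  rw [Set.ncard_univ, Nat.card_eq_fintype_card, Fintype.card_fin] at hle
  omega

lemma exists_notin_R (hn : 1 ≤ n) {S : Set (GluedV n)} (hS : S.ncard < n) :
    ∃ j : Fin n, vR j ∉ S := by
  by_contra h
  push_neg at h
  have hle := Set.ncard_le_ncard_of_injOn (s := (Set.univ : Set (Fin n)))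
    (fun j : Fin n => vR j) (fun a _ => h a)
    (fun a _ b _ e => by simpa using e) (S.toFinite)
  rw [Set.ncard_univ, Nat.card_eq_fintype_card, Fintype.card_fin] at hle
  omega

lemma glued_kconn (hn : 1 ≤ n) : IsKConnected (gluedGraph n) n := by
  constructor
  · simp only [Fintype.card_sum, Fintype.card_fin]
    omega
  · intro S hS
    obtain ⟨i0, hi0⟩ := exists_notin_L hn hS
    obtain ⟨j0, hj0⟩ := exists_notin_R hn hS
    rw [SimpleGraph.connected_iff_exists_forall_reachable]
    have hi0' : (vL i0 : GluedV n) ∈ (Sᶜ : Set (GluedV n)) := hi0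
    have hj0' : (vR j0 : GluedV n) ∈ (Sᶜ : Set (GluedV n)) := hj0
    refine ⟨⟨vL i0, hi0'⟩, ?_⟩
    have lift : ∀ (u v : GluedV n) (hu : u ∈ (Sᶜ : Set (GluedV n)))
        (hv : v ∈ (Sᶜ : Set (GluedV n))), (gluedGraph n).Adj u v →
        ((gluedGraph n).induce (Sᶜ : Set (GluedV n))).Adj ⟨u, hu⟩ ⟨v, hv⟩ := by
      intro u v hu hv h
      exact h
    rintro ⟨u, hu⟩
    obtain (i | j) | (a | b) := u
    · exact ((lift _ _ hi0' hj0' (adj_LR i0 j0)).reachable).trans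
        ((lift _ _ hj0' hu (adj_LR i j0).symm).reachable)
    · exact (lift _ _ hi0' hu (adj_LR i0 j)).reachable
    · exact (lift _ _ hi0' hu (adj_LX i0 a)).reachable
    · exact ((lift _ _ hi0' hj0' (adj_LR i0 j0)).reachable).trans
        ((lift _ _ hj0' hu (adj_RY j0 b)).reachable)

end NonStack

theorem glued_c_connected_strongly_non_stackable (c : ℕ) (hc : 1 ≤ c) :
    (IsKConnected (gluedGraph c) c ∧ ∀ t, ¬ TStackable (gluedGraph c) t) ∧
    ∀ k : ℕ, 1 ≤ k → ∃ (V : Type) (_ : Fintype V) (_ : DecidableEq V)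
      (G : SimpleGraph V), IsKConnected G k ∧ ∀ t : V, ¬ TStackable G t := by
  refine ⟨⟨NonStack.glued_kconn hc, fun t => NonStack.glued_nonstack hc t⟩, ?_⟩
  intro k hk
  exact ⟨GluedV k, inferInstance, inferInstance, gluedGraph k,
    NonStack.glued_kconn hk, fun t => NonStack.glued_nonstack hk t⟩
end

section
/- Let G be a graph with diameter at most 3 that has two degree-1 vertices u and v with a common neighbor, and let t be a vertex at distance 2 from both u and v. Then G is not t-stackable. -/
/-- A doomed configuration: some vertex `z ≠ t` holds at least 4 cups (it can never be
emptied since the diameter is at most 3), or at least 3 cups while being within distance 2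
of `t` (emptying it would create a vertex with ≥ 4 cups distinct from `t`). -/
def DoomAux {V : Type*} (d : V → V → ℕ) (t : V) (c : V → ℕ) : Prop :=
  ∃ z, z ≠ t ∧ (4 ≤ c z ∨ (3 ≤ c z ∧ d z t ≤ 2))

/-- The finitely many "live" states of the cup counts at `(u, v, w)`. -/
def GoodAux (a b h : ℕ) : Prop :=
  (a=1∧b=1∧h=1)∨(a=1∧b=1∧h=2)∨(a=1∧b=1∧h=0)∨(a=0∧b=1∧h=2)∨(a=1∧b=0∧h=2)∨
  (a=2∧b=1∧h=0)∨(a=1∧b=2∧h=0)∨(a=0∧b=1∧h=0)∨(a=1∧b=0∧h=0)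

def InvAux {V : Type*} (d : V → V → ℕ) (u v w t : V) (c : V → ℕ) : Prop :=
  DoomAux d t c ∨ GoodAux (c u) (c v) (c w)

/- Transition lemmas for the finite state machine `GoodAux`. -/

lemma gUW (a b h : ℕ) (hg : GoodAux a b h) (ha : a = 1) (hh : 1 ≤ h) (hle : h + a ≤ 2) :
    GoodAux 0 b (h + a) := by
  unfold GoodAux at hg
  rcases hg with ⟨h1,h2,h3⟩|⟨h1,h2,h3⟩|⟨h1,h2,h3⟩|⟨h1,h2,h3⟩|⟨h1,h2,h3⟩|⟨h1,h2,h3⟩|⟨h1,h2,h3⟩|⟨h1,h2,h3⟩|⟨h1,h2,h3⟩ <;>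
    first
      | omega
      | exact Or.inr (Or.inr (Or.inr (Or.inl (by omega))))

lemma gVW (a b h : ℕ) (hg : GoodAux a b h) (hb : b = 1) (hh : 1 ≤ h) (hle : h + b ≤ 2) :
    GoodAux a 0 (h + b) := by
  unfold GoodAux at hg
  rcases hg with ⟨h1,h2,h3⟩|⟨h1,h2,h3⟩|⟨h1,h2,h3⟩|⟨h1,h2,h3⟩|⟨h1,h2,h3⟩|⟨h1,h2,h3⟩|⟨h1,h2,h3⟩|⟨h1,h2,h3⟩|⟨h1,h2,h3⟩ <;>
    first
      | omega
      | exact Or.inr (Or.inr (Or.inr (Or.inr (Or.inl (by omega)))))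

lemma gUT (a b h : ℕ) (hg : GoodAux a b h) (ha : a = 2) : GoodAux 0 b h := by
  unfold GoodAux at hg
  rcases hg with ⟨h1,h2,h3⟩|⟨h1,h2,h3⟩|⟨h1,h2,h3⟩|⟨h1,h2,h3⟩|⟨h1,h2,h3⟩|⟨h1,h2,h3⟩|⟨h1,h2,h3⟩|⟨h1,h2,h3⟩|⟨h1,h2,h3⟩ <;>
    first
      | omega
      | exact Or.inr (Or.inr (Or.inr (Or.inr (Or.inr (Or.inr (Or.inr (Or.inl (by omega))))))))

lemma gVT (a b h : ℕ) (hg : GoodAux a b h) (hb : b = 2) : GoodAux a 0 h := by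
  unfold GoodAux at hg
  rcases hg with ⟨h1,h2,h3⟩|⟨h1,h2,h3⟩|⟨h1,h2,h3⟩|⟨h1,h2,h3⟩|⟨h1,h2,h3⟩|⟨h1,h2,h3⟩|⟨h1,h2,h3⟩|⟨h1,h2,h3⟩|⟨h1,h2,h3⟩ <;>
    first
      | omega
      | exact Or.inr (Or.inr (Or.inr (Or.inr (Or.inr (Or.inr (Or.inr (Or.inr (by omega))))))))

lemma gWU (a b h : ℕ) (hg : GoodAux a b h) (hh : h = 1) (ha : 1 ≤ a) :
    GoodAux (a + h) b 0 := by
  unfold GoodAux at hg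
  rcases hg with ⟨h1,h2,h3⟩|⟨h1,h2,h3⟩|⟨h1,h2,h3⟩|⟨h1,h2,h3⟩|⟨h1,h2,h3⟩|⟨h1,h2,h3⟩|⟨h1,h2,h3⟩|⟨h1,h2,h3⟩|⟨h1,h2,h3⟩ <;>
    first
      | omega
      | exact Or.inr (Or.inr (Or.inr (Or.inr (Or.inr (Or.inl (by omega))))))

lemma gWV (a b h : ℕ) (hg : GoodAux a b h) (hh : h = 1) (hb : 1 ≤ b) :
    GoodAux a (b + h) 0 := by
  unfold GoodAux at hg
  rcases hg with ⟨h1,h2,h3⟩|⟨h1,h2,h3⟩|⟨h1,h2,h3⟩|⟨h1,h2,h3⟩|⟨h1,h2,h3⟩|⟨h1,h2,h3⟩|⟨h1,h2,h3⟩|⟨h1,h2,h3⟩|⟨h1,h2,h3⟩ <;>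
    first
      | omega
      | exact Or.inr (Or.inr (Or.inr (Or.inr (Or.inr (Or.inr (Or.inl (by omega)))))))

lemma gWO (a b h : ℕ) (hg : GoodAux a b h) (hh : 1 ≤ h) : GoodAux a b 0 := by
  unfold GoodAux at hg
  rcases hg with ⟨h1,h2,h3⟩|⟨h1,h2,h3⟩|⟨h1,h2,h3⟩|⟨h1,h2,h3⟩|⟨h1,h2,h3⟩|⟨h1,h2,h3⟩|⟨h1,h2,h3⟩|⟨h1,h2,h3⟩|⟨h1,h2,h3⟩ <;>
    first
      | omega
      | exact Or.inr (Or.inr (Or.inl (by omega)))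
      | exact Or.inr (Or.inr (Or.inr (Or.inr (Or.inr (Or.inr (Or.inr (Or.inl (by omega))))))))
      | exact Or.inr (Or.inr (Or.inr (Or.inr (Or.inr (Or.inr (Or.inr (Or.inr (by omega))))))))

lemma gOW (a b h k : ℕ) (hg : GoodAux a b h) (hh : 1 ≤ h) (hk : 1 ≤ k) (hle : h + k ≤ 2) :
    GoodAux a b (h + k) := by
  unfold GoodAux at hg
  rcases hg with ⟨h1,h2,h3⟩|⟨h1,h2,h3⟩|⟨h1,h2,h3⟩|⟨h1,h2,h3⟩|⟨h1,h2,h3⟩|⟨h1,h2,h3⟩|⟨h1,h2,h3⟩|⟨h1,h2,h3⟩|⟨h1,h2,h3⟩ <;>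
    first
      | omega
      | exact Or.inr (Or.inl (by omega))

lemma gBounds (a b h : ℕ) (hg : GoodAux a b h) : a ≤ 2 ∧ b ≤ 2 ∧ h ≤ 2 := by
  unfold GoodAux at hg; omega

/-- The key step-preservation lemma, stated abstractly in terms of a distance function. -/
lemma step_preserve {V : Type*} [DecidableEq V] (d : V → V → ℕ) (u v w t : V)
    (huv : u ≠ v) (huw : u ≠ w) (hvw : v ≠ w) (hut : u ≠ t) (hvt : v ≠ t) (hwt : w ≠ t)
    (d0 : ∀ x y : V, d x y = 0 ↔ x = y)
    (dcomm : ∀ x y : V, d x y = d y x)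
    (ddiam : ∀ x y : V, d x y ≤ 3)
    (dut : d u t = 2) (dvt : d v t = 2) (dwt : d w t = 1)
    (du : ∀ y : V, y ≠ u → d u y = 1 + d w y)
    (dv : ∀ y : V, y ≠ v → d v y = 1 + d w y)
    (dty : ∀ z : V, d z t ≤ 1 + d w z)
    (c c' : V → ℕ) (x y : V) (hxy : x ≠ y) (hx : 0 < c x) (hy : 0 < c y)
    (hk : d x y = c x)
    (hc' : c' = Function.update (Function.update c x 0) y (c y + c x))
    (hinv : InvAux d u v w t c) : InvAux d u v w t c' := by
  have hcx' : c' x = 0 := by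
    subst hc'; simp [Function.update_apply, hxy, Ne.symm hxy]
  have hcy' : c' y = c y + c x := by
    subst hc'; simp
  have hco : ∀ z, z ≠ x → z ≠ y → c' z = c z := by
    intro z h1 h2; subst hc'; simp [Function.update_apply, h1, h2]
  have hmono : ∀ z, z ≠ x → c z ≤ c' z := by
    intro z h1
    by_cases h2 : z = y
    · rw [h2]; rw [h2] at h1; omega
    · rw [hco z h1 h2]
  have hk3 : c x ≤ 3 := hk ▸ ddiam x y
  rcases hinv with ⟨z, hzt, hz⟩ | hg
  · -- Doom is permanent
    by_cases hzx : z = x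
    · have hz3 : c x = 3 ∧ d x t ≤ 2 := by
        rw [hzx] at hz
        rcases hz with h | ⟨h1, h2⟩
        · omega
        · exact ⟨by omega, hzx ▸ h2⟩
      have hyt : y ≠ t := by
        intro h; rw [h] at hk; omega
      exact Or.inl ⟨y, hyt, Or.inl (by omega)⟩
    · have h5 := hmono z hzx
      refine Or.inl ⟨z, hzt, ?_⟩
      rcases hz with h | ⟨h1, h2⟩
      · exact Or.inl (by omega)
      · exact Or.inr ⟨by omega, h2⟩
  · -- Good case
    obtain ⟨hga, hgb, hgh⟩ := gBounds _ _ _ hg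
    have hdwu : d w u = 1 := by
      rw [← dcomm u w, du w (Ne.symm huw), (d0 w w).mpr rfl]
    have hdwv : d w v = 1 := by
      rw [← dcomm v w, dv w (Ne.symm hvw), (d0 w w).mpr rfl]
    by_cases hxu : x = u
    · -- u sends its stack
      have hcu : c u = c x := by rw [hxu]
      have hcu' : c' u = 0 := by rw [← hxu]; exact hcx'
      have hvx : v ≠ x := by rw [hxu]; exact Ne.symm huv
      have hwx : w ≠ x := by rw [hxu]; exact Ne.symm huw
      have hyu : y ≠ u := by rw [← hxu]; exact Ne.symm hxy
      have hwy : d u y = 1 + d w y := du y hyu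
      have hduy : d u y = c x := by rw [← hxu]; exact hk
      by_cases h1 : c x = 1
      · have hyw : y = w := ((d0 w y).mp (by omega)).symm
        have hcw' : c' w = c w + c x := by rw [← hyw]; exact hcy'
        have hcw : c w = c y := by rw [hyw]
        by_cases h2 : 3 ≤ c w + c x
        · exact Or.inl ⟨w, hwt, Or.inr ⟨by omega, by omega⟩⟩
        · refine Or.inr ?_
          rw [hcu', hcw', hco v hvx (by rw [hyw]; exact hvw), ← hcu]
          exact gUW _ _ _ hg (by omega) (by omega) (by omega)
      · by_cases h2 : c x = 2
        · have hdwy : d w y = 1 := by omega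
          by_cases hyv : y = v
          · refine Or.inl ⟨v, hvt, Or.inr ⟨?_, by omega⟩⟩
            have : c' v = c y + c x := by rw [← hyv]; exact hcy'
            omega
          · by_cases hyt : y = t
            · refine Or.inr ?_
              have hwy' : w ≠ y := by rw [hyt]; exact hwt
              rw [hcu', hco v hvx (fun h3 => hyv h3.symm), hco w hwx hwy']
              exact gUT _ _ _ hg (by omega)
            · refine Or.inl ⟨y, hyt, Or.inr ⟨by omega, ?_⟩⟩
              have := dty y
              omega
        · exfalso; omega
    · by_cases hxv : x = v
      · -- v sends its stack
        have hcv : c v = c x := by rw [hxv]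
        have hcv' : c' v = 0 := by rw [← hxv]; exact hcx'
        have hux : u ≠ x := by rw [hxv]; exact huv
        have hwx : w ≠ x := by rw [hxv]; exact Ne.symm hvw
        have hyv : y ≠ v := by rw [← hxv]; exact Ne.symm hxy
        have hwy : d v y = 1 + d w y := dv y hyv
        have hdvy : d v y = c x := by rw [← hxv]; exact hk
        by_cases h1 : c x = 1
        · have hyw : y = w := ((d0 w y).mp (by omega)).symm
          have hcw' : c' w = c w + c x := by rw [← hyw]; exact hcy'
          have hcw : c w = c y := by rw [hyw]
          by_cases h2 : 3 ≤ c w + c x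
          · exact Or.inl ⟨w, hwt, Or.inr ⟨by omega, by omega⟩⟩
          · refine Or.inr ?_
            rw [hcv', hcw', hco u hux (by rw [hyw]; exact huw), ← hcv]
            exact gVW _ _ _ hg (by omega) (by omega) (by omega)
        · by_cases h2 : c x = 2
          · have hdwy : d w y = 1 := by omega
            by_cases hyu : y = u
            · refine Or.inl ⟨u, hut, Or.inr ⟨?_, by omega⟩⟩
              have : c' u = c y + c x := by rw [← hyu]; exact hcy'
              omega
            · by_cases hyt : y = t
              · refine Or.inr ?_
                have hwy' : w ≠ y := by rw [hyt]; exact hwt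
                rw [hcv', hco u hux (fun h3 => hyu h3.symm), hco w hwx hwy']
                exact gVT _ _ _ hg (by omega)
              · refine Or.inl ⟨y, hyt, Or.inr ⟨by omega, ?_⟩⟩
                have := dty y
                omega
          · exfalso; omega
      · by_cases hxw : x = w
        · -- w sends its stack
          have hcw : c w = c x := by rw [hxw]
          have hcw' : c' w = 0 := by rw [← hxw]; exact hcx'
          have hux : u ≠ x := by rw [hxw]; exact huw
          have hvx : v ≠ x := by rw [hxw]; exact hvw
          have hdwy : d w y = c x := by rw [← hxw]; exact hk
          by_cases hyu : y = u
          · have hcu' : c' u = c y + c x := by rw [← hyu]; exact hcy'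
            have hcu : c u = c y := by rw [hyu]
            have h1 : c x = 1 := by rw [hyu] at hdwy; omega
            refine Or.inr ?_
            rw [hcu', hcw', hco v hvx (by rw [hyu]; exact Ne.symm huv), ← hcu, ← hcw]
            exact gWU _ _ _ hg (by omega) (by omega)
          · by_cases hyv : y = v
            · have hcv' : c' v = c y + c x := by rw [← hyv]; exact hcy'
              have hcv : c v = c y := by rw [hyv]
              have h1 : c x = 1 := by rw [hyv] at hdwy; omega
              refine Or.inr ?_
              rw [hcv', hcw', hco u hux (by rw [hyv]; exact huv), ← hcv, ← hcw]
              exact gWV _ _ _ hg (by omega) (by omega)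
            · refine Or.inr ?_
              rw [hcw', hco u hux (fun h3 => hyu h3.symm), hco v hvx (fun h3 => hyv h3.symm)]
              exact gWO _ _ _ hg (by omega)
        · -- x is an outsider (possibly t)
          have hux : u ≠ x := fun h3 => hxu h3.symm
          have hvx : v ≠ x := fun h3 => hxv h3.symm
          have hwx : w ≠ x := fun h3 => hxw h3.symm
          have hdwx : 1 ≤ d w x := by
            have h3 : d w x ≠ 0 := fun h4 => hwx ((d0 w x).mp h4)
            omega
          by_cases hyu : y = u
          · have hcx2 : 2 ≤ c x := by
              have h3 := du x (Ne.symm hux)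
              rw [dcomm u x] at h3
              rw [← hyu] at h3
              omega
            refine Or.inl ⟨u, hut, Or.inr ⟨?_, by omega⟩⟩
            have : c' u = c y + c x := by rw [← hyu]; exact hcy'
            omega
          · by_cases hyv : y = v
            · have hcx2 : 2 ≤ c x := by
                have h3 := dv x (Ne.symm hvx)
                rw [dcomm v x] at h3
                rw [← hyv] at h3
                omega
              refine Or.inl ⟨v, hvt, Or.inr ⟨?_, by omega⟩⟩
              have : c' v = c y + c x := by rw [← hyv]; exact hcy'
              omega
            · by_cases hyw : y = w
              · have hcw' : c' w = c w + c x := by rw [← hyw]; exact hcy'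
                have hcw : c w = c y := by rw [hyw]
                by_cases h2 : 3 ≤ c w + c x
                · exact Or.inl ⟨w, hwt, Or.inr ⟨by omega, by omega⟩⟩
                · refine Or.inr ?_
                  rw [hcw', hco u hux (fun h3 => hyu h3.symm), hco v hvx (fun h3 => hyv h3.symm)]
                  exact gOW _ _ _ _ hg (by omega) (by omega) (by omega)
              · refine Or.inr ?_
                rw [hco u hux (fun h3 => hyu h3.symm), hco v hvx (fun h3 => hyv h3.symm),
                  hco w hwx (fun h3 => hyw h3.symm)]
                exact hg

theorem two_pendants_common_neighbor_not_stackable {V : Type*} [Fintype V] [DecidableEq V]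
    (G : SimpleGraph V) (hG : G.Connected)
    (hdiam : ∀ x y : V, G.dist x y ≤ 3)
    (u v w t : V) (huv : u ≠ v)
    (hu : (G.neighborSet u).ncard = 1) (hv : (G.neighborSet v).ncard = 1)
    (huw : G.Adj u w) (hvw : G.Adj v w)
    (hut : G.dist u t = 2) (hvt : G.dist v t = 2) :
    ¬ TStackable G t := by
  -- the pendant vertices have a unique neighbor, namely `w`
  have hNu : G.neighborSet u = {w} := by
    obtain ⟨a, ha⟩ := Set.ncard_eq_one.mp hu
    have hw : w ∈ G.neighborSet u := huw
    rw [ha, Set.mem_singleton_iff] at hw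
    rw [ha, hw]
  have hNv : G.neighborSet v = {w} := by
    obtain ⟨a, ha⟩ := Set.ncard_eq_one.mp hv
    have hw : w ∈ G.neighborSet v := hvw
    rw [ha, Set.mem_singleton_iff] at hw
    rw [ha, hw]
  have hd0 : ∀ x y : V, G.dist x y = 0 ↔ x = y := fun x y => hG.dist_eq_zero_iff
  have hduw : G.dist u w = 1 := SimpleGraph.dist_eq_one_iff_adj.mpr huw
  have hdvw : G.dist v w = 1 := SimpleGraph.dist_eq_one_iff_adj.mpr hvw
  -- every shortest walk out of a pendant vertex goes through `w`
  have hdu : ∀ y : V, y ≠ u → G.dist u y = 1 + G.dist w y := by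
    intro y hy
    have hle : G.dist u y ≤ 1 + G.dist w y := by
      calc G.dist u y ≤ G.dist u w + G.dist w y := hG.dist_triangle
        _ = 1 + G.dist w y := by rw [hduw]
    have hge : 1 + G.dist w y ≤ G.dist u y := by
      obtain ⟨p, hp⟩ := hG.exists_walk_length_eq_dist u y
      cases p with
      | nil => exact absurd rfl hy
      | cons hadj q =>
        rename_i b
        have hb : b = w := by
          have hmem : b ∈ G.neighborSet u := hadj
          rw [hNu, Set.mem_singleton_iff] at hmem
          exact hmem
        subst hb
        have h2 := SimpleGraph.dist_le q
        rw [SimpleGraph.Walk.length_cons] at hp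
        omega
    omega
  have hdv : ∀ y : V, y ≠ v → G.dist v y = 1 + G.dist w y := by
    intro y hy
    have hle : G.dist v y ≤ 1 + G.dist w y := by
      calc G.dist v y ≤ G.dist v w + G.dist w y := hG.dist_triangle
        _ = 1 + G.dist w y := by rw [hdvw]
    have hge : 1 + G.dist w y ≤ G.dist v y := by
      obtain ⟨p, hp⟩ := hG.exists_walk_length_eq_dist v y
      cases p with
      | nil => exact absurd rfl hy
      | cons hadj q =>
        rename_i b
        have hb : b = w := by
          have hmem : b ∈ G.neighborSet v := hadj
          rw [hNv, Set.mem_singleton_iff] at hmem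
          exact hmem
        subst hb
        have h2 := SimpleGraph.dist_le q
        rw [SimpleGraph.Walk.length_cons] at hp
        omega
    omega
  have hut' : u ≠ t := by
    intro h; rw [h, SimpleGraph.dist_self] at hut; omega
  have hvt' : v ≠ t := by
    intro h; rw [h, SimpleGraph.dist_self] at hvt; omega
  have hdwt : G.dist w t = 1 := by
    have := hdu t (Ne.symm hut')
    omega
  have hwt' : w ≠ t := by
    intro h; rw [h, SimpleGraph.dist_self] at hdwt; omega
  have huw' : u ≠ w := huw.ne
  have hvw' : v ≠ w := hvw.ne
  have hdty : ∀ z : V, G.dist z t ≤ 1 + G.dist w z := by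
    intro z
    have h1 : G.dist z t ≤ G.dist z w + G.dist w t := hG.dist_triangle
    have h2 : G.dist z w = G.dist w z := SimpleGraph.dist_comm
    omega
  rintro ⟨c, hchain, hfin⟩
  have main : ∀ c0 : V → ℕ, Relation.ReflTransGen (CupStep G) (fun _ => 1) c0 →
      InvAux G.dist u v w t c0 := by
    intro c0 h0
    induction h0 with
    | refl =>
      refine Or.inr ?_
      show GoodAux 1 1 1
      exact Or.inl ⟨rfl, rfl, rfl⟩
    | tail _ hstep ih =>
      obtain ⟨x, y, hxy, hx, hy, hkk, hc'⟩ := hstep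
      exact step_preserve G.dist u v w t huv huw' hvw' hut' hvt' hwt' hd0
        (fun x y => SimpleGraph.dist_comm) hdiam hut hvt hdwt hdu hdv hdty
        _ _ x y hxy hx hy hkk hc' ih
  rcases main c hchain with ⟨z, hzt, hz⟩ | hg
  · have := hfin z hzt
    omega
  · rw [hfin u hut', hfin v hvt', hfin w hwt'] at hg
    unfold GoodAux at hg
    omega
end

section
/- Let T be a finite tree with at least 2 vertices in which any two distinct leaves are at distance at least k (spread at least k). Then the vertex set of T can be partitioned into vertex-disjoint paths, each containing at least k/2 vertices. -/
/-!
Induct on the subtrees of `T`, encoded as vertex sets `S` containing every path between two of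
their vertices, with degrees and leaves taken inside `S`. If no vertex has degree at least three
in `S`, then `S` is a single path between two leaves, so it has more than `k` vertices. Otherwise
let `w` be a branch vertex farthest from a fixed branch vertex `z`. At least two neighbours of `w`
lie farther from `z`, and from each of them a bare path (inner vertices of degree two) runs out
to a leaf. These two leaves are at distance at least `k` and at most the sum of the two lengths,
so the longer bare path `q` has length at least `k / 2`. Cutting off `q` minus `w` leaves a
subtree in which `w` still has degree at least two and whose leaves are leaves of `S`, so
induction applies.
-/

/-- A leaf of a graph is a vertex of degree 1. -/
def IsLeaf {V : Type*} (G : SimpleGraph V) (v : V) : Prop :=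
  (G.neighborSet v).ncard = 1

open Finset

namespace SimpleGraph

variable {V : Type*} {G : SimpleGraph V}

def degreeIn (G : SimpleGraph V) [DecidableRel G.Adj] (S : Finset V) (x : V) : ℕ :=
  #{y ∈ S | G.Adj x y}

def IsPathConvex (G : SimpleGraph V) (S : Finset V) : Prop :=
  ∀ ⦃x y : V⦄ (p : G.Walk x y), p.IsPath → x ∈ S → y ∈ S → ∀ z ∈ p.support, z ∈ S

def SpreadAtLeast (G : SimpleGraph V) [DecidableRel G.Adj] (S : Finset V) (k : ℕ) : Prop :=
  ∀ x ∈ S, ∀ y ∈ S, G.degreeIn S x = 1 → G.degreeIn S y = 1 → x ≠ y → k ≤ G.dist x y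

section Tree

variable {T : SimpleGraph V}

lemma IsAcyclic.eq_of_isPath (hT : T.IsAcyclic) {x y : V} {p q : T.Walk x y} (hp : p.IsPath)
    (hq : q.IsPath) : p = q :=
  congrArg Subtype.val ((hT.subsingleton_path x y).elim ⟨p, hp⟩ ⟨q, hq⟩)

lemma IsTree.length_eq_dist (hT : T.IsTree) {x y : V} {p : T.Walk x y} (hp : p.IsPath) :
    p.length = T.dist x y := by
  obtain ⟨q, hq, hql⟩ := hT.connected.exists_path_of_dist x y
  rw [hT.isAcyclic.eq_of_isPath hp hq, hql]

lemma IsTree.eq_of_dist_add_one_eq (hT : T.IsTree) {z x y y' : V} (hy : T.Adj y x)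
    (hy' : T.Adj y' x) (hd : T.dist z y + 1 = T.dist z x) (hd' : T.dist z y' + 1 = T.dist z x) :
    y = y' := by
  obtain ⟨p, -, hp⟩ := hT.connected.exists_path_of_dist z y
  obtain ⟨p', -, hp'⟩ := hT.connected.exists_path_of_dist z y'
  have hpath : (p.concat hy).IsPath :=
    (p.concat hy).isPath_of_length_eq_dist (by rw [Walk.length_concat, hp, hd])
  have hpath' : (p'.concat hy').IsPath :=
    (p'.concat hy').isPath_of_length_eq_dist (by rw [Walk.length_concat, hp', hd'])
  exact (Walk.concat_inj (hT.isAcyclic.eq_of_isPath hpath hpath')).1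

lemma IsTree.dist_eq_add_length (hT : T.IsTree) {z x y : V} {p : T.Walk x y} (hp : p.IsPath)
    (hsnd : T.dist z x < T.dist z p.snd) : T.dist z y = T.dist z x + p.length := by
  induction p with
  | nil => simp
  | @cons x x₁ y h q ih =>
    rw [Walk.snd_cons] at hsnd
    have hx₁ : T.dist z x₁ = T.dist z x + 1 := by
      have := hT.dist_eq_dist_add_one_of_adj z h; omega
    cases q with
    | nil => simp [hx₁]
    | @cons _ x₂ _ h' q' =>
      have hx₂ : T.dist z x₁ < T.dist z x₂ := by
        rcases hT.dist_eq_dist_add_one_of_adj z h' with h2 | h2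
        · have := hT.eq_of_dist_add_one_eq h h'.symm hx₁.symm h2.symm
          subst this
          simp at hp
        · omega
      rw [ih hp.of_cons (by simpa using hx₂), hx₁]
      simp only [Walk.length_cons]
      omega

end Tree

section DegreeIn

variable [DecidableRel G.Adj] {S : Finset V}

lemma degreeIn_pos {x a : V} (ha : a ∈ S) (h : G.Adj x a) : 0 < G.degreeIn S x :=
  card_pos.mpr ⟨a, mem_filter.mpr ⟨ha, h⟩⟩

lemma eq_of_degreeIn_eq_one {x a b : V} (hx : G.degreeIn S x = 1) (ha : a ∈ S) (hxa : G.Adj x a)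
    (hb : b ∈ S) (hxb : G.Adj x b) : a = b :=
  card_le_one.mp hx.le _ (mem_filter.mpr ⟨ha, hxa⟩) _ (mem_filter.mpr ⟨hb, hxb⟩)

lemma eq_or_eq_of_degreeIn_eq_two [DecidableEq V] {x a b y : V} (hx : G.degreeIn S x = 2)
    (ha : a ∈ S) (hxa : G.Adj x a) (hb : b ∈ S) (hxb : G.Adj x b) (hab : a ≠ b) (hy : y ∈ S)
    (hxy : G.Adj x y) : y = a ∨ y = b := by
  have hsub : {a, b} ⊆ ({y ∈ S | G.Adj x y} : Finset V) := by
    simp [insert_subset_iff, ha, hxa, hb, hxb]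
  have heq := eq_of_subset_of_card_le hsub (by rw [card_pair hab]; exact hx.le)
  have hy' : y ∈ ({a, b} : Finset V) := heq ▸ mem_filter.mpr ⟨hy, hxy⟩
  simpa using hy'

lemma degreeIn_sdiff [DecidableEq V] {B : Finset V} {w x : V}
    (hB : ∀ b ∈ B, ∀ y ∈ S, G.Adj b y → y ∈ B ∨ y = w) (hxS : x ∈ S) (hxB : x ∉ B)
    (hxw : x ≠ w) : G.degreeIn (S \ B) x = G.degreeIn S x := by
  unfold degreeIn
  congr 1
  ext y
  simp only [mem_filter, mem_sdiff]
  refine ⟨fun h => ⟨h.1.1, h.2⟩, fun h => ⟨⟨h.1, fun hyB => ?_⟩, h.2⟩⟩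
  rcases hB y hyB x hxS h.2.symm with h' | h'
  exacts [hxB h', hxw h']

lemma SpreadAtLeast.sdiff [DecidableEq V] {B : Finset V} {w : V} {k : ℕ}
    (hk : G.SpreadAtLeast S k) (hB : ∀ b ∈ B, ∀ y ∈ S, G.Adj b y → y ∈ B ∨ y = w)
    (hw : 2 ≤ G.degreeIn (S \ B) w) : G.SpreadAtLeast (S \ B) k := by
  have hleaf (x : V) (hx : x ∈ S \ B) (hx1 : G.degreeIn (S \ B) x = 1) : G.degreeIn S x = 1 := by
    rcases eq_or_ne x w with rfl | hxw
    · omega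
    · rwa [← degreeIn_sdiff hB (mem_sdiff.mp hx).1 (mem_sdiff.mp hx).2 hxw]
  exact fun x hx y hy hx1 hy1 => hk x (mem_sdiff.mp hx).1 y (mem_sdiff.mp hy).1
    (hleaf x hx hx1) (hleaf y hy hy1)

lemma degreeIn_univ [Fintype V] (x : V) : G.degreeIn univ x = (G.neighborSet x).ncard := by
  rw [degreeIn, Set.ncard_eq_toFinset_card']
  congr 1
  ext y
  simp

end DegreeIn

namespace Walk

variable {S C : Finset V}

lemma end_mem_of_forall_adj_mem (hC : ∀ a ∈ C, ∀ b ∈ S, G.Adj a b → b ∈ C) {x y : V}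
    (p : G.Walk x y) (hx : x ∈ C) (hp : ∀ z ∈ p.support, z ∈ S) : y ∈ C := by
  induction p with
  | nil => exact hx
  | cons h q ih => exact ih (hC _ hx _ (hp _ (by simp)) h) fun z hz => hp z (by simp [hz])

lemma mem_support_of_forall_adj_mem_or_eq {w : V}
    (hC : ∀ a ∈ C, ∀ b ∈ S, G.Adj a b → b ∈ C ∨ b = w) {x y : V} (p : G.Walk x y) (hx : x ∈ C)
    (hy : y ∉ C) (hp : ∀ z ∈ p.support, z ∈ S) : w ∈ p.support := by
  induction p with
  | nil => exact absurd hx hy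
  | @cons x x₁ y h q ih =>
    rcases hC _ hx _ (hp _ (by simp)) h with hx₁ | rfl
    · simpa using Or.inr (ih hx₁ hy fun z hz => hp z (by simp [hz]))
    · simp

lemma snd_concat {x y z : V} {p : G.Walk x y} (hp : ¬p.Nil) (h : G.Adj y z) :
    (p.concat h).snd = p.snd := by
  rw [concat_eq_append, snd, getVert_append']
  exact if_pos (not_nil_iff_lt_length.mp hp)

lemma IsPath.start_notMem_support_tail {x y : V} {p : G.Walk x y} (hp : p.IsPath) :
    x ∉ p.support.tail :=
  (List.nodup_cons.mp (p.cons_tail_support ▸ hp.support_nodup)).1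

variable [DecidableRel G.Adj]

structure IsBarePath (S : Finset V) {x y : V} (p : G.Walk x y) : Prop where
  isPath : p.IsPath
  support_subset : ∀ z ∈ p.support, z ∈ S
  ne : x ≠ y
  degreeIn_eq_two : ∀ z ∈ p.support, z ≠ x → z ≠ y → G.degreeIn S z = 2

namespace IsBarePath

variable {S : Finset V} {x y : V} {p : G.Walk x y}

lemma not_nil (hp : p.IsBarePath S) : ¬p.Nil := not_nil_of_ne hp.ne

lemma singleton (hx : x ∈ S) (hy : y ∈ S) (h : G.Adj x y) : (cons h nil).IsBarePath S where
  isPath := (Path.singleton h).property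
  support_subset := by simp [hx, hy]
  ne := h.ne
  degreeIn_eq_two := by simp +contextual

lemma mem_support_of_adj [DecidableEq V] (hp : p.IsBarePath S) {z b : V} (hz : z ∈ p.support)
    (hzx : z ≠ x) (hzy : z ≠ y) (hb : b ∈ S) (hzb : G.Adj z b) : b ∈ p.support := by
  obtain ⟨i, rfl, hi⟩ := mem_support_iff_exists_getVert.mp hz
  have hi₀ : i ≠ 0 := by rintro rfl; exact hzx p.getVert_zero
  have hil : i ≠ p.length := by rintro rfl; exact hzy p.getVert_length
  have hprev : G.Adj (p.getVert i) (p.getVert (i - 1)) := by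
    simpa [Nat.sub_add_cancel (Nat.pos_of_ne_zero hi₀)] using
      (p.adj_getVert_succ (i := i - 1) (by omega)).symm
  have hne : p.getVert (i - 1) ≠ p.getVert (i + 1) := fun h => by
    have := hp.isPath.getVert_injOn (by simp; omega) (by simp; omega) h
    omega
  rcases eq_or_eq_of_degreeIn_eq_two (hp.degreeIn_eq_two _ hz hzx hzy)
    (hp.support_subset _ (p.getVert_mem_support _)) hprev
    (hp.support_subset _ (p.getVert_mem_support _)) (p.adj_getVert_succ (by omega)) hne hb hzb
    with rfl | rfl <;> exact p.getVert_mem_support _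

lemma mem_support_of_adj_of_ne_end [DecidableEq V] (hp : p.IsBarePath S)
    (hx : G.degreeIn S x = 1) {z b : V} (hz : z ∈ p.support) (hzy : z ≠ y) (hb : b ∈ S)
    (hzb : G.Adj z b) : b ∈ p.support := by
  rcases eq_or_ne z x with rfl | hzx
  · rw [eq_of_degreeIn_eq_one hx hb hzb (hp.support_subset _ (p.getVert_mem_support 1))
      (p.adj_snd hp.not_nil)]
    exact p.getVert_mem_support 1
  · exact hp.mem_support_of_adj hz hzx hzy hb hzb

lemma reverse (hp : p.IsBarePath S) : p.reverse.IsBarePath S where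
  isPath := hp.isPath.reverse
  support_subset z hz := hp.support_subset z (by simpa using hz)
  ne := hp.ne.symm
  degreeIn_eq_two z hz hzy hzx := hp.degreeIn_eq_two z (by simpa using hz) hzx hzy

lemma mem_support_of_degreeIn_eq_one [DecidableEq V] (hp : p.IsBarePath S) (hG : G.Connected)
    (hS : G.IsPathConvex S) (hx : G.degreeIn S x = 1) (hy : G.degreeIn S y = 1) {z : V}
    (hz : z ∈ S) : z ∈ p.support := by
  have hclosed : ∀ a ∈ p.support.toFinset, ∀ b ∈ S, G.Adj a b → b ∈ p.support.toFinset := by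
    simp only [List.mem_toFinset]
    intro a ha b hb hab
    rcases eq_or_ne a y with rfl | hay
    · simpa using hp.reverse.mem_support_of_adj_of_ne_end hy (by simp) hp.ne.symm hb hab
    · exact hp.mem_support_of_adj_of_ne_end hx ha hay hb hab
  obtain ⟨q, hq, -⟩ := hG.exists_path_of_dist x z
  simpa using q.end_mem_of_forall_adj_mem hclosed (by simp)
    (hS q hq (hp.support_subset x (by simp)) hz)

lemma length_lt_card (hp : p.IsBarePath S) : p.length < #S := by
  classical
  have := card_le_card (s := p.support.toFinset) fun z hz => hp.support_subset z (by simpa using hz)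
  rw [List.toFinset_card_of_nodup hp.isPath.support_nodup, length_support] at this
  omega

lemma exists_concat [DecidableEq V] (hG : G.IsAcyclic) (hp : p.IsBarePath S)
    (hy : G.degreeIn S y = 2) : ∃ (y' : V) (h : G.Adj y y'), (p.concat h).IsBarePath S := by
  have hprev : p.penultimate ∈ ({y' ∈ S | G.Adj y y'} : Finset V) :=
    mem_filter.mpr
      ⟨hp.support_subset _ (p.getVert_mem_support _), (p.adj_penultimate hp.not_nil).symm⟩
  obtain ⟨y', hy'⟩ : (({y' ∈ S | G.Adj y y'} : Finset V).erase p.penultimate).Nonempty := by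
    rw [← card_pos, card_erase_of_mem hprev]
    have : #({y' ∈ S | G.Adj y y'} : Finset V) = 2 := hy
    omega
  obtain ⟨hne, hy'S, hyy'⟩ : y' ≠ p.penultimate ∧ y' ∈ S ∧ G.Adj y y' := by simpa using hy'
  have hnotin : y' ∉ p.support := fun h => hne (hG.eq_penultimate_of_adj_end hp.isPath hyy' h)
  refine ⟨y', hyy', hp.isPath.concat hnotin hyy', ?_, ?_, ?_⟩
  · simpa [or_imp, forall_and, hy'S] using hp.support_subset
  · rintro rfl
    exact hnotin p.start_mem_support
  · simp only [support_concat, List.mem_append, List.mem_singleton]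
    rintro z (hz | rfl) hzx hzy'
    · rcases eq_or_ne z y with rfl | hzy
      · exact hy
      · exact hp.degreeIn_eq_two z hz hzx hzy
    · exact absurd rfl hzy'

lemma exists_extend [DecidableEq V] (hG : G.IsAcyclic) (hp : p.IsBarePath S) :
    ∃ (y' : V) (q : G.Walk x y'), q.IsBarePath S ∧ q.snd = p.snd ∧ G.degreeIn S y' ≠ 2 := by
  suffices ∀ n, ∀ y (p : G.Walk x y), p.IsBarePath S → #S ≤ n + p.length →
      ∃ (y' : V) (q : G.Walk x y'), q.IsBarePath S ∧ q.snd = p.snd ∧ G.degreeIn S y' ≠ 2 from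
    this _ y p hp (Nat.le_add_right _ _)
  intro n
  induction n with
  | zero => intro y p hp hn; exact absurd hp.length_lt_card (by omega)
  | succ n ih =>
    intro y p hp hn
    by_cases hy : G.degreeIn S y = 2
    · obtain ⟨y', h, hp'⟩ := hp.exists_concat hG hy
      obtain ⟨y'', q, hq, hsnd, hdeg⟩ := ih y' _ hp' (by rw [length_concat]; omega)
      exact ⟨y'', q, hq, hsnd.trans (snd_concat hp.not_nil h), hdeg⟩
    · exact ⟨y, p, hp, rfl, hy⟩

lemma adj_mem_tail_or_eq [DecidableEq V] (hp : p.IsBarePath S) (hy : G.degreeIn S y = 1) :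
    ∀ a ∈ p.support.tail.toFinset, ∀ b ∈ S, G.Adj a b → b ∈ p.support.tail.toFinset ∨ b = x := by
  simp only [List.mem_toFinset]
  intro a ha b hb hab
  have hax : a ≠ x := by
    rintro rfl
    exact hp.isPath.start_notMem_support_tail ha
  have hb' : b ∈ p.reverse.support := hp.reverse.mem_support_of_adj_of_ne_end
    (by simpa using hy) (by simpa using List.mem_of_mem_tail ha) hax hb hab
  rw [support_reverse, List.mem_reverse, ← p.cons_tail_support, List.mem_cons] at hb'
  exact hb'.symm

lemma sdiff_ssubset [DecidableEq V] (hp : p.IsBarePath S) : S \ p.support.tail.toFinset ⊂ S :=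
  Finset.sdiff_ssubset
    (fun z hz => hp.support_subset z (List.mem_of_mem_tail (List.mem_toFinset.mp hz)))
    ⟨y, List.mem_toFinset.mpr (p.end_mem_tail_support hp.not_nil)⟩

lemma degreeIn_le_degreeIn_sdiff_add_one [DecidableEq V] (hG : G.IsAcyclic)
    (hp : p.IsBarePath S) : G.degreeIn S x ≤ G.degreeIn (S \ p.support.tail.toFinset) x + 1 := by
  have hsub : ({z ∈ S | G.Adj x z} : Finset V) ⊆
      insert p.snd {z ∈ S \ p.support.tail.toFinset | G.Adj x z} := by
    intro z hz
    obtain ⟨hzS, hxz⟩ := mem_filter.mp hz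
    by_cases hzp : z ∈ p.support.tail
    · exact mem_insert.mpr
        (Or.inl (hG.eq_snd_of_adj_start hp.isPath hxz (List.mem_of_mem_tail hzp)))
    · exact mem_insert_of_mem (mem_filter.mpr ⟨mem_sdiff.mpr ⟨hzS, by simpa using hzp⟩, hxz⟩)
  exact (card_le_card hsub).trans (card_insert_le _ _)

end IsBarePath

end Walk

lemma IsPathConvex.sdiff [DecidableEq V] {S B : Finset V} (hS : G.IsPathConvex S) {w : V}
    (hw : w ∉ B) (hB : ∀ b ∈ B, ∀ y ∈ S, G.Adj b y → y ∈ B ∨ y = w) : G.IsPathConvex (S \ B) := by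
  intro x y p hp hx hy z hz
  rw [mem_sdiff] at hx hy
  have hpS := hS p hp hx.1 hy.1
  refine mem_sdiff.mpr ⟨hpS z hz, fun hzB => ?_⟩
  have hsplit := p.take_spec hz
  have hw₁ : w ∈ (p.takeUntil z hz).support := by
    simpa using (p.takeUntil z hz).reverse.mem_support_of_forall_adj_mem_or_eq hB hzB hx.2
      fun v hv => hpS v (p.support_takeUntil_subset_support hz (by simpa using hv))
  have hw₂ : w ∈ (p.dropUntil z hz).support :=
    (p.dropUntil z hz).mem_support_of_forall_adj_mem_or_eq hB hzB hy.2
      fun v hv => hpS v (p.support_dropUntil_subset_support hz hv)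
  exact (hsplit ▸ hp).ne_of_mem_support_of_append (by rintro rfl; exact hw hzB) hw₁ hw₂ rfl

section Legs

variable {T : SimpleGraph V} [DecidableRel T.Adj] {S : Finset V}

lemma IsTree.one_lt_card_children (hT : T.IsTree) (z : V) {x : V} (hx : 3 ≤ T.degreeIn S x) :
    1 < #{c ∈ S | T.Adj x c ∧ T.dist z x < T.dist z c} := by
  have hparent : #{c ∈ {c ∈ S | T.Adj x c} | ¬T.dist z x < T.dist z c} ≤ 1 := by
    refine card_le_one.mpr fun a ha b hb => ?_
    simp only [mem_filter, not_lt] at ha hb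
    have hda := hT.dist_eq_dist_add_one_of_adj z ha.1.2
    have hdb := hT.dist_eq_dist_add_one_of_adj z hb.1.2
    exact hT.eq_of_dist_add_one_eq (z := z) ha.1.2.symm hb.1.2.symm (by omega) (by omega)
  have hsplit := card_filter_add_card_filter_not
    (s := {c ∈ S | T.Adj x c}) (fun c => T.dist z x < T.dist z c)
  rw [filter_filter] at hsplit
  have : #{c ∈ S | T.Adj x c} = T.degreeIn S x := rfl
  omega

variable [DecidableEq V]

/-- The bare path moves away from `z` (`IsTree.dist_eq_add_length`), so it ends beyond every
branch vertex, at a leaf. -/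
lemma IsTree.exists_isBarePath_to_leaf (hT : T.IsTree) {z w c : V} (hw : w ∈ S) (hc : c ∈ S)
    (hwc : T.Adj w c) (hzc : T.dist z w < T.dist z c)
    (hbranch : ∀ b ∈ S, 3 ≤ T.degreeIn S b → T.dist z b ≤ T.dist z w) :
    ∃ (v : V) (q : T.Walk w v), q.IsBarePath S ∧ q.snd = c ∧ T.degreeIn S v = 1 := by
  obtain ⟨v, q, hq, hsnd, hv⟩ := (Walk.IsBarePath.singleton hw hc hwc).exists_extend hT.isAcyclic
  rw [Walk.snd_cons] at hsnd
  refine ⟨v, q, hq, hsnd, ?_⟩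
  have hfar : T.dist z w < T.dist z v := by
    rw [hT.dist_eq_add_length hq.isPath (hsnd ▸ hzc)]
    exact Nat.lt_add_of_pos_right (Walk.not_nil_iff_lt_length.mp hq.not_nil)
  have hvS := hq.support_subset _ q.end_mem_support
  have hpos := degreeIn_pos (hq.support_subset _ (q.getVert_mem_support _))
    (q.adj_penultimate hq.not_nil).symm
  have := mt (hbranch v hvS) (not_le.mpr hfar)
  omega

lemma IsTree.exists_long_isBarePath_to_leaf (hT : T.IsTree) {k : ℕ} (hk : T.SpreadAtLeast S k)
    (hbranch : ∃ b ∈ S, 3 ≤ T.degreeIn S b) :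
    ∃ (w v : V) (q : T.Walk w v), q.IsBarePath S ∧ 3 ≤ T.degreeIn S w ∧ T.degreeIn S v = 1 ∧
      k ≤ 2 * q.length := by
  obtain ⟨z, hzS, hz⟩ := hbranch
  obtain ⟨w, hw, hwmax⟩ :=
    exists_max_image {b ∈ S | 3 ≤ T.degreeIn S b} (T.dist z) ⟨z, mem_filter.mpr ⟨hzS, hz⟩⟩
  obtain ⟨hwS, hw3⟩ := mem_filter.mp hw
  have leg : ∀ c ∈ ({c ∈ S | T.Adj w c ∧ T.dist z w < T.dist z c} : Finset V),
      ∃ (v : V) (q : T.Walk w v), q.IsBarePath S ∧ q.snd = c ∧ T.degreeIn S v = 1 := by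
    intro c hc
    obtain ⟨hcS, hwc, hzc⟩ := by simpa only [mem_filter] using hc
    exact hT.exists_isBarePath_to_leaf hwS hcS hwc hzc
      fun b hb h3 => hwmax b (mem_filter.mpr ⟨hb, h3⟩)
  obtain ⟨c₁, hc₁, c₂, hc₂, hc₁₂⟩ := one_lt_card.mp (hT.one_lt_card_children z hw3)
  obtain ⟨v₁, q₁, hq₁, hsnd₁, hv₁⟩ := leg c₁ hc₁
  obtain ⟨v₂, q₂, hq₂, hsnd₂, hv₂⟩ := leg c₂ hc₂
  have hv₁₂ : v₁ ≠ v₂ := by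
    rintro rfl
    obtain rfl := hT.isAcyclic.eq_of_isPath hq₁.isPath hq₂.isPath
    exact hc₁₂ (hsnd₁.symm.trans hsnd₂)
  have hk₁₂ : k ≤ q₁.length + q₂.length := calc
    k ≤ T.dist v₁ v₂ := hk v₁ (hq₁.support_subset _ q₁.end_mem_support) v₂
      (hq₂.support_subset _ q₂.end_mem_support) hv₁ hv₂ hv₁₂
    _ ≤ T.dist v₁ w + T.dist w v₂ := hT.connected.dist_triangle
    _ ≤ q₁.length + q₂.length := by
      rw [dist_comm]
      exact add_le_add (dist_le q₁) (dist_le q₂)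
  rcases le_total q₁.length q₂.length with h | h
  · exact ⟨w, v₂, q₂, hq₂, hw3, hv₂, by omega⟩
  · exact ⟨w, v₁, q₁, hq₁, hw3, hv₁, by omega⟩

lemma IsTree.exists_isBarePath_of_degreeIn_le_two (hT : T.IsTree) (hS : T.IsPathConvex S)
    (hcard : 2 ≤ #S) (hdeg : ∀ b ∈ S, T.degreeIn S b ≤ 2) :
    ∃ (u v : V) (p : T.Walk u v), p.IsBarePath S ∧ T.degreeIn S u = 1 ∧ T.degreeIn S v = 1 := by
  have hbranch {z w : V} : ∀ b ∈ S, 3 ≤ T.degreeIn S b → T.dist z b ≤ T.dist z w :=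
    fun b hb h3 => absurd (hdeg b hb) (by omega)
  obtain ⟨s, hs, t, ht, hst⟩ := one_lt_card.mp hcard
  obtain ⟨r, hr, -⟩ := hT.connected.exists_path_of_dist s t
  have hsc := r.adj_snd (Walk.not_nil_of_ne hst)
  obtain ⟨u, q, hq, -, hu⟩ :=
    hT.exists_isBarePath_to_leaf hs (hS r hr hs ht _ (r.getVert_mem_support 1)) hsc
      (by rw [dist_self, dist_eq_one_iff_adj.mpr hsc]; exact one_pos) hbranch
  have hpu := (q.adj_penultimate hq.not_nil).symm
  obtain ⟨v, p, hp, -, hv⟩ := hT.exists_isBarePath_to_leaf (hq.support_subset _ q.end_mem_support)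
    (hq.support_subset _ (q.getVert_mem_support _)) hpu
    (by rw [dist_self, dist_eq_one_iff_adj.mpr hpu]; exact one_pos) hbranch
  exact ⟨u, v, p, hp, hu, hv⟩

end Legs

structure IsPathPartition (G : SimpleGraph V) (S : Finset V) (L : List (Σ x y, G.Walk x y)) :
    Prop where
  isPath : ∀ p ∈ L, p.2.2.IsPath
  support_subset : ∀ p ∈ L, ∀ z ∈ p.2.2.support, z ∈ S
  exists_mem_support : ∀ z ∈ S, ∃ p ∈ L, z ∈ p.2.2.support
  pairwise_disjoint : L.Pairwise fun p q => p.2.2.support.Disjoint q.2.2.support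

namespace IsPathPartition

variable {S : Finset V} {L : List (Σ x y, G.Walk x y)} {x y : V} {p : G.Walk x y}

lemma singleton (hp : p.IsPath) (hpS : ∀ z ∈ p.support, z ∈ S) (hSp : ∀ z ∈ S, z ∈ p.support) :
    G.IsPathPartition S [⟨x, y, p⟩] where
  isPath := by simpa using hp
  support_subset := by simpa using hpS
  exists_mem_support := by simpa using hSp
  pairwise_disjoint := List.pairwise_singleton _ _

lemma cons [DecidableEq V] (hL : G.IsPathPartition (S \ p.support.toFinset) L) (hp : p.IsPath)
    (hpS : ∀ z ∈ p.support, z ∈ S) : G.IsPathPartition S (⟨x, y, p⟩ :: L) where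
  isPath := List.forall_mem_cons.mpr ⟨hp, hL.isPath⟩
  support_subset := List.forall_mem_cons.mpr
    ⟨hpS, fun q hq z hz => (mem_sdiff.mp (hL.support_subset q hq z hz)).1⟩
  exists_mem_support z hz := by
    by_cases hzp : z ∈ p.support
    · exact ⟨_, List.mem_cons_self, hzp⟩
    · obtain ⟨q, hq, hzq⟩ := hL.exists_mem_support z (mem_sdiff.mpr ⟨hz, by simpa using hzp⟩)
      exact ⟨q, List.mem_cons_of_mem _ hq, hzq⟩
  pairwise_disjoint := List.pairwise_cons.mpr ⟨fun q hq z hzp hzq =>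
    (mem_sdiff.mp (hL.support_subset q hq z hzq)).2 (by simpa using hzp), hL.pairwise_disjoint⟩

lemma existsUnique_mem_support (hL : G.IsPathPartition S L) {z : V} (hz : z ∈ S) :
    ∃! i : Fin L.length, z ∈ (L.get i).2.2.support := by
  obtain ⟨q, hq, hzq⟩ := hL.exists_mem_support z hz
  obtain ⟨i, rfl⟩ := List.mem_iff_get.mp hq
  refine ⟨i, hzq, fun j hzj => ?_⟩
  have hdisj := List.pairwise_iff_get.mp hL.pairwise_disjoint
  rcases lt_trichotomy j i with h | h | h
  exacts [(hdisj j i h hzj hzq).elim, h, (hdisj i j h hzq hzj).elim]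

end IsPathPartition

theorem IsTree.exists_isPathPartition [DecidableEq V] {T : SimpleGraph V} [DecidableRel T.Adj]
    (hT : T.IsTree) {k : ℕ} {S : Finset V} (hS : T.IsPathConvex S) (hcard : 2 ≤ #S)
    (hk : T.SpreadAtLeast S k) :
    ∃ L, T.IsPathPartition S L ∧ ∀ p ∈ L, k ≤ 2 * p.2.2.support.length := by
  induction S using Finset.strongInduction with
  | H S ih =>
  by_cases hbranch : ∃ b ∈ S, 3 ≤ T.degreeIn S b
  · obtain ⟨w, v, q, hq, hw, hv, hqk⟩ := hT.exists_long_isBarePath_to_leaf hk hbranch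
    have hB := hq.adj_mem_tail_or_eq hv
    have hwB : w ∉ q.support.tail.toFinset := by simpa using hq.isPath.start_notMem_support_tail
    have hw' : 2 ≤ T.degreeIn (S \ q.support.tail.toFinset) w := by
      have := hq.degreeIn_le_degreeIn_sdiff_add_one hT.isAcyclic
      omega
    obtain ⟨L, hL, hLk⟩ := ih _ hq.sdiff_ssubset (hS.sdiff hwB hB) (hw'.trans (card_filter_le _ _))
      (hk.sdiff hB hw')
    have htail : q.tail.support = q.support.tail := q.support_tail_of_not_nil hq.not_nil
    refine ⟨⟨_, _, q.tail⟩ :: L, .cons (htail ▸ hL) hq.isPath.tail fun z hz =>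
      hq.support_subset z (List.mem_of_mem_tail (htail ▸ hz)), ?_⟩
    refine List.forall_mem_cons.mpr ⟨?_, hLk⟩
    simp only [htail, List.length_tail, Walk.length_support]
    omega
  · push Not at hbranch
    obtain ⟨u, v, p, hp, hu, hv⟩ :=
      hT.exists_isBarePath_of_degreeIn_le_two hS hcard fun b hb => Nat.le_of_lt_succ (hbranch b hb)
    refine ⟨[⟨u, v, p⟩], .singleton hp.isPath hp.support_subset
      fun z hz => hp.mem_support_of_degreeIn_eq_one hT.connected hS hu hv hz, ?_⟩
    have := hk u (hp.support_subset _ p.start_mem_support) v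
      (hp.support_subset _ p.end_mem_support) hu hv hp.ne
    rw [← hT.length_eq_dist hp.isPath] at this
    simp only [List.mem_singleton, forall_eq, Walk.length_support]
    omega

end SimpleGraph

open SimpleGraph in
theorem tree_spread_path_partition {V : Type*} [Fintype V] (T : SimpleGraph V)
    (hT : T.IsTree) (hcard : 2 ≤ Fintype.card V) (k : ℕ)
    (hspread : ∀ x y : V, IsLeaf T x → IsLeaf T y → x ≠ y → k ≤ T.dist x y) :
    ∃ (m : ℕ) (a b : Fin m → V) (P : ∀ i, T.Walk (a i) (b i)),
      (∀ i, (P i).IsPath) ∧ (∀ v : V, ∃! i, v ∈ (P i).support) ∧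
      ∀ i, k ≤ 2 * (P i).support.length := by
  classical
  have hspread' : T.SpreadAtLeast univ k := fun x _ y _ hx hy hxy =>
    hspread x y (by rwa [degreeIn_univ] at hx) (by rwa [degreeIn_univ] at hy) hxy
  obtain ⟨L, hL, hLk⟩ := hT.exists_isPathPartition (fun _ _ _ _ _ _ z _ => mem_univ z)
    (by rwa [card_univ]) hspread'
  exact ⟨L.length, fun i => (L.get i).1, fun i => (L.get i).2.1, fun i => (L.get i).2.2,
    fun i => hL.isPath _ (L.get_mem i), fun v => hL.existsUnique_mem_support (mem_univ v),
    fun i => hLk _ (L.get_mem i)⟩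
end

section
/- Let G be a finite connected bipartite graph whose two partition classes differ in size by Δ(G) ≥ 2. Then for every r ≥ 1, the r-th Cartesian power G^r is connected and bipartite, its partition classes differ in size by Δ(G)^r, and any path in G^r omits at least Δ(G)^r - 1 ≥ 2^r - 1 vertices; in particular G^r has no Hamilton path. -/
/-!
Give each vertex the sign `+1` or `-1` according to its class, so that the imbalance of a
bipartition is the absolute value of the total sign. On `G^r` the product of the coordinate
signs flips along every edge, hence defines a bipartition, and its total is the `r`-th power
of the total sign of `G`, of absolute value `Δ^r`. Signs alternate along a path, so the
vertices of a path contribute `-1`, `0` or `1` to the total, while each omitted vertex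
contributes at most one in absolute value; hence at least `Δ^r - 1` vertices are omitted.
-/

/-- The `r`-th Cartesian (box) power of `G`, on vertex set `Fin r → V`:
two vertices are adjacent iff they differ in exactly one coordinate,
and are adjacent in `G` there. -/
def boxPower {V : Type*} (G : SimpleGraph V) (r : ℕ) : SimpleGraph (Fin r → V) where
  Adj f g := ∃ i, G.Adj (f i) (g i) ∧ ∀ j, j ≠ i → f j = g j
  symm := by
    constructor
    rintro f g ⟨i, hadj, heq⟩
    exact ⟨i, hadj.symm, fun j hj => (heq j hj).symm⟩
  loopless := by
    constructor
    rintro f ⟨i, hadj, -⟩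
    exact hadj.ne rfl

/-- `A` is a bipartition class of `G`: every edge goes between `A` and its complement. -/
def IsBipartitionClass {V : Type*} (G : SimpleGraph V) (A : Set V) : Prop :=
  ∀ ⦃u v : V⦄, G.Adj u v → (u ∈ A ↔ v ∉ A)

open Finset SimpleGraph

section ClassSign

variable {V : Type*}

open Classical in
noncomputable def classSign (A : Set V) (v : V) : ℤ := if v ∈ A then 1 else -1

lemma classSign_eq_one_or_neg_one (A : Set V) (v : V) :
    classSign A v = 1 ∨ classSign A v = -1 := by
  unfold classSign
  split_ifs <;> simp

lemma abs_classSign (A : Set V) (v : V) : |classSign A v| = 1 := by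
  rcases classSign_eq_one_or_neg_one A v with h | h <;> simp [h]

lemma classSign_setOf_eq_one {s : V → ℤ} (hs : ∀ v, s v = 1 ∨ s v = -1) :
    classSign {v | s v = 1} = s := by
  funext v
  unfold classSign
  rcases hs v with h | h <;> simp [h]

lemma sum_classSign [Fintype V] (A : Set V) :
    ∑ v, classSign A v = (A.ncard : ℤ) - (Aᶜ.ncard : ℤ) := by
  classical
  simp only [classSign, sum_ite, sum_const, ← Set.ncard_coe_finset, coe_filter, mem_univ, true_and,
    nsmul_eq_mul, mul_one, mul_neg, ← sub_eq_add_neg]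
  rfl

lemma isBipartitionClass_iff_classSign {G : SimpleGraph V} {A : Set V} :
    IsBipartitionClass G A ↔ ∀ ⦃u v⦄, G.Adj u v → classSign A v = -classSign A u := by
  refine forall₂_congr fun u v => imp_congr_right fun _ => ?_
  unfold classSign
  by_cases hu : u ∈ A <;> by_cases hv : v ∈ A <;> simp [hu, hv]

variable {G : SimpleGraph V} {A : Set V}

lemma IsBipartitionClass.two_mul_sum_classSign_support (hA : IsBipartitionClass G A)
    {u v : V} (P : G.Walk u v) :
    2 * (P.support.map (classSign A)).sum = classSign A u + classSign A v := by
  induction P with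
  | nil => simp only [Walk.support_nil, List.map_cons, List.map_nil, List.sum_singleton]; ring
  | cons h p ih =>
    rw [Walk.support_cons, List.map_cons, List.sum_cons, mul_add, ih,
      isBipartitionClass_iff_classSign.mp hA h]
    ring

lemma IsBipartitionClass.abs_sum_classSign_support_le_one (hA : IsBipartitionClass G A)
    {u v : V} (P : G.Walk u v) : |(P.support.map (classSign A)).sum| ≤ 1 := by
  have hends : |classSign A u + classSign A v| ≤ 2 :=
    (abs_add_le _ _).trans (by rw [abs_classSign, abs_classSign]; norm_num)
  rw [← hA.two_mul_sum_classSign_support P, abs_mul] at hends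
  norm_num at hends
  linarith

theorem IsBipartitionClass.abs_sub_ncard_le_ncard_compl_support_add_one [Fintype V]
    (hA : IsBipartitionClass G A) {u v : V} (P : G.Walk u v) (hP : P.IsPath) :
    |(A.ncard : ℤ) - (Aᶜ.ncard : ℤ)| ≤ {w | w ∉ P.support}.ncard + 1 := by
  classical
  set S := P.support.toFinset
  have hmissed : {w | w ∉ P.support}.ncard = #Sᶜ := by
    rw [← Set.ncard_coe_finset]
    congr
    ext
    simp [S]
  have hpath : |∑ w ∈ S, classSign A w| ≤ 1 := by
    rw [List.sum_toFinset _ hP.support_nodup]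
    exact hA.abs_sum_classSign_support_le_one P
  have hrest : |∑ w ∈ Sᶜ, classSign A w| ≤ #Sᶜ :=
    (abs_sum_le_sum_abs _ _).trans (by simp [abs_classSign])
  calc |(A.ncard : ℤ) - (Aᶜ.ncard : ℤ)|
      = |∑ w ∈ S, classSign A w + ∑ w ∈ Sᶜ, classSign A w| := by
        rw [sum_add_sum_compl, sum_classSign]
    _ ≤ 1 + #Sᶜ := (abs_add_le _ _).trans (add_le_add hpath hrest)
    _ = {w | w ∉ P.support}.ncard + 1 := by rw [hmissed]; ring

end ClassSign

section BoxPower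

variable {V : Type*} {G : SimpleGraph V}

def boxPowerUpdateHom {r : ℕ} (f : Fin r → V) (i : Fin r) : G →g boxPower G r where
  toFun x := Function.update f i x
  map_rel' h := ⟨i, by simpa using h, fun j hj => by simp [Function.update_of_ne hj]⟩

lemma SimpleGraph.Reachable.boxPower_update {a b : V} (h : G.Reachable a b) {r : ℕ}
    (f : Fin r → V) (i : Fin r) :
    (boxPower G r).Reachable (Function.update f i a) (Function.update f i b) :=
  h.map (boxPowerUpdateHom f i)

theorem boxPower_connected (hG : G.Connected) (r : ℕ) : (boxPower G r).Connected := by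
  have := hG.nonempty
  refine Connected.mk fun f g => ?_
  classical
  suffices ∀ s : Finset (Fin r), (boxPower G r).Reachable f (s.piecewise g f) by
    simpa using this univ
  intro s
  induction s using Finset.induction_on with
  | empty => simp
  | insert i s _ ih =>
    rw [piecewise_insert]
    refine ih.trans ?_
    simpa using (hG.preconnected (s.piecewise g f i) (g i) :).boxPower_update (s.piecewise g f) i

def boxPowerClass (A : Set V) (r : ℕ) : Set (Fin r → V) := {f | ∏ i, classSign A (f i) = 1}

lemma classSign_boxPowerClass (A : Set V) (r : ℕ) :
    classSign (boxPowerClass A r) = fun f => ∏ i, classSign A (f i) :=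
  classSign_setOf_eq_one fun f =>
    prod_induction _ (fun x => x = 1 ∨ x = -1)
      (by rintro _ _ (rfl | rfl) (rfl | rfl) <;> norm_num) (by simp)
      fun i _ => classSign_eq_one_or_neg_one A (f i)

theorem IsBipartitionClass.boxPower {A : Set V} (hA : IsBipartitionClass G A) (r : ℕ) :
    IsBipartitionClass (boxPower G r) (boxPowerClass A r) := by
  rw [isBipartitionClass_iff_classSign, classSign_boxPowerClass]
  rintro f g ⟨i, hadj, hrest⟩
  dsimp only
  have hcompl : ∏ j ∈ {i}ᶜ, classSign A (g j) = ∏ j ∈ {i}ᶜ, classSign A (f j) :=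
    prod_congr rfl fun j hj => by rw [hrest j (by simpa using hj)]
  rw [Fintype.prod_eq_mul_prod_compl i, Fintype.prod_eq_mul_prod_compl i (classSign A <| f ·),
    isBipartitionClass_iff_classSign.mp hA hadj, hcompl, neg_mul]

theorem abs_sub_ncard_boxPowerClass [Fintype V] (A : Set V) (r : ℕ) :
    |((boxPowerClass A r).ncard : ℤ) - ((boxPowerClass A r)ᶜ.ncard : ℤ)| =
      |(A.ncard : ℤ) - (Aᶜ.ncard : ℤ)| ^ r := by
  rw [← sum_classSign, ← sum_classSign, classSign_boxPowerClass, ← Fintype.sum_pow, abs_pow]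

end BoxPower

theorem boxPower_bipartite_no_hamilton_path {V : Type*} [Fintype V]
    (G : SimpleGraph V) (hG : G.Connected) (A : Set V) (hA : IsBipartitionClass G A)
    (Δ : ℕ) (hΔ : (Δ : ℤ) = |(A.ncard : ℤ) - ((Aᶜ : Set V).ncard : ℤ)|) (hΔ2 : 2 ≤ Δ)
    (r : ℕ) (hr : 1 ≤ r) :
    (boxPower G r).Connected ∧
    (∃ B : Set (Fin r → V), IsBipartitionClass (boxPower G r) B ∧
      |(B.ncard : ℤ) - ((Bᶜ : Set (Fin r → V)).ncard : ℤ)| = (Δ : ℤ) ^ r) ∧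
    (∀ (a b : Fin r → V) (P : (boxPower G r).Walk a b), P.IsPath →
      Δ ^ r - 1 ≤ {v | v ∉ P.support}.ncard) ∧
    2 ^ r - 1 ≤ Δ ^ r - 1 ∧
    ¬ ∃ (a b : Fin r → V) (P : (boxPower G r).Walk a b),
        P.IsPath ∧ ∀ v, v ∈ P.support := by
  have hpow : 2 ^ r ≤ Δ ^ r := Nat.pow_le_pow_left hΔ2 r
  have htwo : 2 ≤ 2 ^ r := by simpa using Nat.pow_le_pow_right two_pos hr
  have hmissed (a b : Fin r → V) (P : (boxPower G r).Walk a b) (hP : P.IsPath) :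
      Δ ^ r - 1 ≤ {v | v ∉ P.support}.ncard := by
    have h := (hA.boxPower r).abs_sub_ncard_le_ncard_compl_support_add_one P hP
    rw [abs_sub_ncard_boxPowerClass, ← hΔ] at h
    zify [hpow.trans' (by omega : 1 ≤ 2 ^ r)]
    linarith
  refine ⟨boxPower_connected hG r, ⟨_, hA.boxPower r, by rw [abs_sub_ncard_boxPowerClass, hΔ]⟩,
    hmissed, Nat.sub_le_sub_right hpow 1, ?_⟩
  rintro ⟨a, b, P, hP, hall⟩
  have h := hmissed a b P hP
  simp only [hall, not_true_eq_false, Set.ofPred_false, Set.ncard_empty] at h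
  omega
end

section
/- The complete bipartite graph K_{a,b} with a + 2 ≤ b is not t-stackable for any vertex t in the partition class of size b. -/
open Finset SimpleGraph

private lemma sum_update2 {V : Type*} [Fintype V] [DecidableEq V] (f : V → ℕ) (x y : V)
    (hxy : x ≠ y) (A B : ℕ) :
    (∑ v, Function.update (Function.update f x A) y B v) + (f x + f y)
      = (∑ v, f v) + (A + B) := by
  rw [Finset.sum_update_of_mem (Finset.mem_univ y),
      Finset.sum_update_of_mem (by simp [hxy] : x ∈ Finset.univ \ {y})]
  have h1 : ∑ v, f v = f y + ∑ v ∈ Finset.univ \ {y}, f v := by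
    rw [Finset.sdiff_singleton_eq_erase, Finset.add_sum_erase _ f (Finset.mem_univ y)]
  have h2 : ∑ v ∈ Finset.univ \ {y}, f v
      = f x + ∑ v ∈ (Finset.univ \ {y}) \ {x}, f v := by
    rw [Finset.sdiff_singleton_eq_erase x ((Finset.univ : Finset V) \ {y}),
        Finset.add_sum_erase _ f (by simp [hxy])]
  omega

/-- vertex weights: a left vertex with `n` cups weighs `n - 1`, a right one `(n+1)/2`. -/
private def cbW {a b : ℕ} : (Fin a ⊕ Fin b) → ℕ → ℕ
  | Sum.inl _, n => n - 1
  | Sum.inr _, n => (n + 1) / 2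

private lemma dist_two {a b : ℕ} {x y : Fin a ⊕ Fin b} (hxy : x ≠ y) (z : Fin a ⊕ Fin b)
    (h1 : (completeBipartiteGraph (Fin a) (Fin b)).Adj x z)
    (h2 : (completeBipartiteGraph (Fin a) (Fin b)).Adj z y)
    (hnadj : ¬ (completeBipartiteGraph (Fin a) (Fin b)).Adj x y) :
    (completeBipartiteGraph (Fin a) (Fin b)).dist x y = 2 := by
  set G := completeBipartiteGraph (Fin a) (Fin b)
  have hle : G.dist x y ≤ 2 := by
    have := SimpleGraph.dist_le (SimpleGraph.Walk.cons h1 (SimpleGraph.Walk.cons h2 SimpleGraph.Walk.nil))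
    simpa using this
  have hne0 : G.dist x y ≠ 0 :=
    SimpleGraph.dist_ne_zero_iff_ne_and_reachable.mpr
      ⟨hxy, ⟨SimpleGraph.Walk.cons h1 (SimpleGraph.Walk.cons h2 SimpleGraph.Walk.nil)⟩⟩
  have hne1 : G.dist x y ≠ 1 := by
    rw [ne_eq, SimpleGraph.dist_eq_one_iff_adj]
    exact hnadj
  omega

private lemma cupstep_key {a b : ℕ} (hb : 0 < b) {c c' : Fin a ⊕ Fin b → ℕ}
    (h : CupStep (completeBipartiteGraph (Fin a) (Fin b)) c c') :
    (∑ v, c' v = ∑ v, c v) ∧ (∑ v, cbW v (c v)) ≤ (∑ v, cbW v (c' v)) := by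
  obtain ⟨x, y, hxy, hx, hy, hd, hc'⟩ := h
  set G := completeBipartiteGraph (Fin a) (Fin b)
  -- compute distance = stack size per case, then the pointwise weight inequality
  have key : cbW x (c x) + cbW y (c y) ≤ cbW x 0 + cbW y (c y + c x) := by
    match x, y with
    | Sum.inl i, Sum.inl i' =>
      have hd2 : G.dist (Sum.inl i) (Sum.inl i') = 2 := by
        refine dist_two hxy (Sum.inr ⟨0, hb⟩) ?_ ?_ ?_ <;> simp
      rw [hd2] at hd
      simp only [cbW]
      omega
    | Sum.inl i, Sum.inr k =>
      have hd1 : G.dist (Sum.inl i) (Sum.inr k) = 1 := by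
        rw [SimpleGraph.dist_eq_one_iff_adj]; simp [G]
      rw [hd1] at hd
      simp only [cbW]
      omega
    | Sum.inr k, Sum.inl i =>
      have hd1 : G.dist (Sum.inr k) (Sum.inl i) = 1 := by
        rw [SimpleGraph.dist_eq_one_iff_adj]; simp [G]
      rw [hd1] at hd
      simp only [cbW]
      omega
    | Sum.inr k, Sum.inr k' =>
      rcases Nat.eq_zero_or_pos a with ha | ha
      · subst ha
        have hbot : G = ⊥ := by
          ext u v
          cases u with
          | inl i => exact Fin.elim0 i
          | inr j => cases v with
            | inl i => exact Fin.elim0 i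
            | inr j' => simp [G, completeBipartiteGraph]
        rw [hbot, SimpleGraph.dist_bot] at hd
        omega
      · have hd2 : G.dist (Sum.inr k) (Sum.inr k') = 2 := by
          refine dist_two hxy (Sum.inl ⟨0, ha⟩) ?_ ?_ ?_ <;> simp
        rw [hd2] at hd
        simp only [cbW]
        omega
  -- rewrite c' as a double update of the weighted function
  have e : (fun v => cbW v (c' v))
      = Function.update (Function.update (fun v => cbW v (c v)) x (cbW x 0)) y
          (cbW y (c y + c x)) := by
    funext v
    rcases eq_or_ne v y with rfl | hvy
    · simp [hc']
    · rcases eq_or_ne v x with rfl | hvx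
      · simp [hc', hvy]
      · simp [hc', hvy, hvx]
  have hs1 := sum_update2 c x y hxy 0 (c y + c x)
  have hs2 := sum_update2 (fun v => cbW v (c v)) x y hxy (cbW x 0) (cbW y (c y + c x))
  constructor
  · rw [hc']
    omega
  · have : (∑ v, cbW v (c' v))
        = ∑ v, Function.update (Function.update (fun v => cbW v (c v)) x (cbW x 0)) y
            (cbW y (c y + c x)) v := by
      rw [e]
    rw [this]
    omega

theorem completeBipartite_not_stackable_large_side (a b : ℕ) (hab : a + 2 ≤ b) :
    ∀ j : Fin b, ¬ TStackable (completeBipartiteGraph (Fin a) (Fin b)) (Sum.inr j) := by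
  intro j ⟨c, hsteps, hzero⟩
  have hb : 0 < b := by omega
  -- invariant along the move sequence
  have inv : ∀ d : Fin a ⊕ Fin b → ℕ,
      Relation.ReflTransGen (CupStep (completeBipartiteGraph (Fin a) (Fin b))) (fun _ => 1) d →
      (∑ v, d v = a + b) ∧ (b ≤ ∑ v, cbW v (d v)) := by
    intro d hd
    induction hd with
    | refl =>
      constructor
      · simp [Fintype.card_sum]
      · rw [Fintype.sum_sum_type]
        simp [cbW]
    | tail _ hstep ih =>
      obtain ⟨ih1, ih2⟩ := ih
      obtain ⟨h1, h2⟩ := cupstep_key hb hstep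
      omega
  obtain ⟨hsum, hW⟩ := inv c hsteps
  -- the final configuration is concentrated at `Sum.inr j`
  have hct : c (Sum.inr j) = a + b := by
    rw [← hsum, Fintype.sum_eq_single (Sum.inr j) (fun v hv => hzero v hv)]
  have hWfin : (∑ v, cbW v (c v)) = (a + b + 1) / 2 := by
    rw [Fintype.sum_eq_single (Sum.inr j) (fun v hv => by
      rw [hzero v hv]; cases v <;> simp [cbW])]
    rw [hct]; simp [cbW]
  rw [hWfin] at hW
  omega
end

section
/- Let x_1, ..., x_N be a sequence of positive integers with |x_{i+1} - x_i| = 1 for all i, (x_1, x_2) ≠ (2, 1), and set C := max_i x_i. If for some i and some s ≥ 2 the indices i-s, i-s+1, ..., i-1 are all cuts (prefixes partitionable into proper chunks) with i - 1 < N, then there exists a cut in the interval [i, i + C]. Consequently, every index j ≥ x_1 (when x_2 = x_1 + 1) that is large enough is eventually a cut once C consecutive cuts exist. -/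
/-- `i` is a cut: the prefix of length `i` can be partitioned into proper chunks. -/
def IsCut (x : ℕ → ℕ) (i : ℕ) : Prop := ProperChunkPartition x i

lemma isCut_zero (x : ℕ → ℕ) : IsCut x 0 :=
  ⟨0, fun _ => 0, rfl, rfl, by omega, by omega⟩

lemma isCut_extend (x : ℕ → ℕ) {t k j : ℕ} (h : IsCut x t)
    (htk : t ≤ k) (hkj : k < j) (hx : x k = j - t) : IsCut x j := by
  obtain ⟨m, c, h0, hm, hmono, hprop⟩ := h
  refine ⟨m + 1, fun n => if n = m + 1 then j else c n, ?_, ?_, ?_, ?_⟩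
  · simpa using h0
  · simp
  · intro n hn
    by_cases hnm : n = m
    · rw [hnm]; simp only []; rw [if_neg (by omega : m ≠ m + 1), if_pos trivial, hm]
      omega
    · have hlt : n < m := by omega
      simp only [if_neg (by omega : n ≠ m + 1), if_neg (by omega : n + 1 ≠ m + 1)]
      exact hmono n hlt
  · intro n hn
    by_cases hnm : n = m
    · rw [hnm]; simp only []; rw [if_neg (by omega : m ≠ m + 1), if_pos trivial, hm]
      exact ⟨k, htk, hkj, hx⟩
    · have hlt : n < m := by omega
      obtain ⟨jj, h1, h2, h3⟩ := hprop n hlt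
      refine ⟨jj, ?_, ?_, ?_⟩ <;>
        simp only [if_neg (by omega : n ≠ m + 1), if_neg (by omega : n + 1 ≠ m + 1)] <;>
        [exact h1; exact h2; exact h3]

theorem cut_propagation (x : ℕ → ℕ) (N : ℕ)
    (hpos : ∀ i < N, 0 < x i)
    (h21 : 2 ≤ N → ¬(x 0 = 2 ∧ x 1 = 1))
    (hstep : ∀ i, i + 1 < N → x (i + 1) = x i + 1 ∨ x i = x (i + 1) + 1)
    (C : ℕ) (hC : C = (Finset.range N).sup x) :
    (∀ i s : ℕ, 2 ≤ s → s ≤ i →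
      (∀ j, i - s ≤ j → j ≤ i - 1 → IsCut x j) → i - 1 < N →
      ∃ j, i ≤ j ∧ j ≤ i + C ∧ IsCut x j) ∧
    (∀ i' : ℕ, (∀ j, i' ≤ j → j < i' + C → IsCut x j) →
      ∀ j, i' ≤ j → j ≤ N → IsCut x j) := by
  constructor
  · intro i s hs hsi hcuts hiN
    have hcut : IsCut x (i - 1) := hcuts (i - 1) (by omega) le_rfl
    have hx1 : 0 < x (i - 1) := hpos _ hiN
    have hxC : x (i - 1) ≤ C := hC ▸ Finset.le_sup (Finset.mem_range.mpr hiN)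
    refine ⟨i - 1 + x (i - 1), by omega, by omega, ?_⟩
    exact isCut_extend x (k := i - 1) hcut le_rfl (by omega) (by omega)
  · intro i' hbase j
    induction j using Nat.strong_induction_on with
    | _ j IH =>
      intro hij hjN
      by_cases hsmall : j < i' + C
      · exact hbase j hij hsmall
      · rcases Nat.eq_zero_or_pos j with hj0 | hj1
        · subst hj0; exact isCut_zero x
        · have hjm : j - 1 < N := by omega
          have hx1 : 0 < x (j - 1) := hpos _ hjm
          have hxC : x (j - 1) ≤ C := hC ▸ Finset.le_sup (Finset.mem_range.mpr hjm)
          have ht : IsCut x (j - x (j - 1)) := IH _ (by omega) (by omega) (by omega)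
          exact isCut_extend x (k := j - 1) ht (by omega) (by omega) (by omega)
end
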